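/- arXiv:2307.14297 — 12 statements merged into one kernel-verified Lean document; each statement's English description precedes it below -/
import Mathlib

section
/- Let A ∈ ℝ^{n×n}, B_u ∈ ℝ^{n×m}, S ∈ ℝ^{n×m}, let R ∈ ℝ^{m×m} be symmetric positive definite, and let X ∈ ℝ^{n×n} be symmetric positive semidefinite with H := R + B_uᵀXB_u invertible. Define K_x := H⁻¹(AᵀXB_u + S)ᵀ. Then I + B_uR⁻¹B_uᵀX is invertible and A − B_uK_x = (I + B_uR⁻¹B_uᵀX)⁻¹(A − B_uR⁻¹Sᵀ). Consequently, if A − B_uR⁻¹Sᵀ is nonsingular then A − B_uK_x is nonsingular. -/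
open Matrix

/-
Write `C := Buᵀ X`, so that `H = R + C Bu` and, by symmetry of `X`, `H Kx = C A + Sᵀ`.
Substituting `C Bu Kx = H Kx - R Kx` gives `(I + Bu R⁻¹ C)(A - Bu Kx) = A - Bu R⁻¹ Sᵀ`,
and the matrix determinant lemma `det (R + C Bu) = det R · det (I + Bu R⁻¹ C)` shows that
`I + Bu R⁻¹ C` is invertible as soon as `H` is.
-/

namespace Matrix

variable {n m K : Type*} [Fintype n] [DecidableEq n] [Fintype m] [DecidableEq m] [CommRing K]

theorem isUnit_one_add_mul_inv_mul {R : Matrix m m K} (hR : IsUnit R.det)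
    {B : Matrix n m K} {C : Matrix m n K} (hRCB : IsUnit (R + C * B)) :
    IsUnit (1 + B * R⁻¹ * C) := by
  rw [isUnit_iff_isUnit_det] at hRCB ⊢
  rw [det_add_mul C B hR] at hRCB
  exact isUnit_of_mul_isUnit_right hRCB

theorem one_add_mul_inv_mul_mul_sub_mul {R : Matrix m m K} (hR : IsUnit R.det)
    {A : Matrix n n K} {B : Matrix n m K} {C : Matrix m n K} {T Kx : Matrix m n K}
    (hKx : (R + C * B) * Kx = C * A + T) :
    (1 + B * R⁻¹ * C) * (A - B * Kx) = A - B * R⁻¹ * T := by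
  have hCBK : C * B * Kx = C * A + T - R * Kx := by
    rw [← hKx, Matrix.add_mul, add_sub_cancel_left]
  calc (1 + B * R⁻¹ * C) * (A - B * Kx)
      = A - B * Kx + B * R⁻¹ * (C * A) - B * R⁻¹ * (C * B * Kx) := by
        simp only [Matrix.add_mul, Matrix.mul_sub, Matrix.one_mul, Matrix.mul_assoc]; abel
    _ = A - B * R⁻¹ * T := by
        rw [hCBK, Matrix.mul_sub, Matrix.mul_add, Matrix.mul_assoc B R⁻¹ (R * Kx),
          nonsing_inv_mul_cancel_left R Kx hR]
        abel

end Matrix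

/-- The closed-loop matrix `A − Bu Kx` factors as
`(I + Bu R⁻¹ Buᵀ X)⁻¹ (A − Bu R⁻¹ Sᵀ)`, hence is nonsingular whenever
`A − Bu R⁻¹ Sᵀ` is. -/
theorem closed_loop_factorization
    (n m : ℕ)
    (A : Matrix (Fin n) (Fin n) ℝ) (Bu : Matrix (Fin n) (Fin m) ℝ)
    (S : Matrix (Fin n) (Fin m) ℝ) (R : Matrix (Fin m) (Fin m) ℝ)
    (hR : R.PosDef)
    (X : Matrix (Fin n) (Fin n) ℝ) (hX : X.PosSemidef)
    (H : Matrix (Fin m) (Fin m) ℝ) (hH : H = R + Buᵀ * X * Bu) (hHinv : IsUnit H)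
    (Kx : Matrix (Fin m) (Fin n) ℝ) (hKx : Kx = H⁻¹ * (Aᵀ * X * Bu + S)ᵀ) :
    IsUnit ((1 : Matrix (Fin n) (Fin n) ℝ) + Bu * R⁻¹ * Buᵀ * X) ∧
    A - Bu * Kx =
      ((1 : Matrix (Fin n) (Fin n) ℝ) + Bu * R⁻¹ * Buᵀ * X)⁻¹ * (A - Bu * R⁻¹ * Sᵀ) ∧
    (IsUnit (A - Bu * R⁻¹ * Sᵀ) → IsUnit (A - Bu * Kx)) := by
  have hXsymm : Xᵀ = X := hX.isHermitian
  have hRdet : IsUnit R.det := (isUnit_iff_isUnit_det R).mp hR.isUnit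
  have hHKx : H * Kx = Buᵀ * X * A + Sᵀ := by
    rw [hKx, mul_nonsing_inv_cancel_left H _ ((isUnit_iff_isUnit_det H).mp hHinv),
      transpose_add, transpose_mul, transpose_mul, transpose_transpose, hXsymm,
      Matrix.mul_assoc]
  rw [hH] at hHinv hHKx
  have hMeq : (1 : Matrix (Fin n) (Fin n) ℝ) + Bu * R⁻¹ * Buᵀ * X
      = 1 + Bu * R⁻¹ * (Buᵀ * X) := by rw [Matrix.mul_assoc (Bu * R⁻¹)]
  rw [hMeq]
  have hM := isUnit_one_add_mul_inv_mul hRdet hHinv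
  have hfactor : A - Bu * Kx = (1 + Bu * R⁻¹ * (Buᵀ * X))⁻¹ * (A - Bu * R⁻¹ * Sᵀ) := by
    rw [← one_add_mul_inv_mul_mul_sub_mul hRdet hHKx,
      nonsing_inv_mul_cancel_left _ _ ((isUnit_iff_isUnit_det _).mp hM)]
  refine ⟨hM, hfactor, fun hAS => ?_⟩
  rw [hfactor]
  exact (isUnit_nonsing_inv_iff.mpr hM).mul hAS
end

section
/- Let A ∈ ℝ^{n×n}, B_u ∈ ℝ^{n×m}, and symmetric Q ∈ ℝ^{n×n}, S ∈ ℝ^{n×m}, R ∈ ℝ^{m×m} be given, and let X be a symmetric matrix with H := R + B_uᵀXB_u invertible that satisfies the DARE 0 = X − AᵀXA − Q + (AᵀXB_u + S)H⁻¹(AᵀXB_u + S)ᵀ. Define K_x := H⁻¹(AᵀXB_u + S)ᵀ. Then the following block-matrix identity holds in ℝ^{(n+m)×(n+m)}: [[Q, S],[Sᵀ, R]] = [K_xᵀ; I_m] H [K_x, I_m] + [[X, 0],[0, 0]] − [Aᵀ; B_uᵀ] X [A, B_u]. -/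
open Matrix

/-! With `M := AᵀXB_u + S` and `K_x = H⁻¹Mᵀ`, both block products expand blockwise:
the first gives `[[K_xᵀHK_x, M], [Mᵀ, H]]` (using `Hᵀ = H`), the second
`[[AᵀXA, AᵀXB_u], [B_uᵀXA, B_uᵀXB_u]]`. Comparing blocks, the off-diagonal ones give `S` and
`Sᵀ`, the lower diagonal one is `H - B_uᵀXB_u = R`, and the upper one is `Q` exactly by the DARE,
since `K_xᵀHK_x = MH⁻¹Mᵀ`. -/

namespace Matrix

variable {ι κ α : Type*} [Fintype κ] [DecidableEq κ]

theorem fromRows_transpose_one_mul_mul_fromCols_one [CommSemiring α]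
    (K : Matrix κ ι α) (H : Matrix κ κ α) :
    fromRows Kᵀ (1 : Matrix κ κ α) * H * fromCols K 1 =
      fromBlocks (Kᵀ * H * K) (Kᵀ * H) (H * K) H := by
  rw [fromRows_mul, fromRows_mul_fromCols, Matrix.one_mul]
  simp only [Matrix.mul_one]

theorem fromRows_transpose_mul_mul_fromCols [CommSemiring α] [Fintype ι] {μ : Type*} [Fintype μ]
    (A : Matrix ι ι α) (B : Matrix ι μ α) (X : Matrix ι ι α) :
    fromRows Aᵀ Bᵀ * X * fromCols A B =
      fromBlocks (Aᵀ * X * A) (Aᵀ * X * B) (Bᵀ * X * A) (Bᵀ * X * B) := by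
  rw [fromRows_mul, fromRows_mul_fromCols]

theorem IsSymm.transpose_mul_mul_transpose [CommSemiring α] {μ ν : Type*} [Fintype μ]
    {X : Matrix μ μ α} (hX : X.IsSymm) (A : Matrix μ ι α) (B : Matrix μ ν α) :
    (Aᵀ * X * B)ᵀ = Bᵀ * X * A := by
  rw [transpose_mul, transpose_mul, transpose_transpose, hX.eq, Matrix.mul_assoc]

theorem transpose_nonsing_inv_mul_transpose_mul [CommRing α] {H : Matrix κ κ α} (hH : H.IsSymm)
    (hH' : IsUnit H) (M : Matrix ι κ α) :
    (H⁻¹ * Mᵀ)ᵀ * H = M := by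
  rw [transpose_mul, transpose_transpose, transpose_nonsing_inv, hH.eq,
    Matrix.mul_assoc, nonsing_inv_mul _ ((isUnit_iff_isUnit_det H).mp hH'), Matrix.mul_one]

theorem transpose_nonsing_inv_mul_transpose_mul_mul [CommRing α] {H : Matrix κ κ α}
    (hH : H.IsSymm) (hH' : IsUnit H) (M : Matrix ι κ α) :
    (H⁻¹ * Mᵀ)ᵀ * H * (H⁻¹ * Mᵀ) = M * H⁻¹ * Mᵀ := by
  rw [transpose_nonsing_inv_mul_transpose_mul hH hH', Matrix.mul_assoc]

end Matrix

theorem dare_block_identity_general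
    (n m : ℕ)
    (A : Matrix (Fin n) (Fin n) ℝ) (Bu : Matrix (Fin n) (Fin m) ℝ)
    (Q : Matrix (Fin n) (Fin n) ℝ) (S : Matrix (Fin n) (Fin m) ℝ)
    (R : Matrix (Fin m) (Fin m) ℝ)
    (hR : R.IsSymm)
    (X : Matrix (Fin n) (Fin n) ℝ) (hX : X.IsSymm)
    (H : Matrix (Fin m) (Fin m) ℝ) (hH : H = R + Buᵀ * X * Bu) (hHinv : IsUnit H)
    (hDARE : 0 = X - Aᵀ * X * A - Q +
      (Aᵀ * X * Bu + S) * H⁻¹ * (Aᵀ * X * Bu + S)ᵀ)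
    (Kx : Matrix (Fin m) (Fin n) ℝ) (hKx : Kx = H⁻¹ * (Aᵀ * X * Bu + S)ᵀ) :
    Matrix.fromBlocks Q S Sᵀ R =
      Matrix.fromRows Kxᵀ (1 : Matrix (Fin m) (Fin m) ℝ) * H *
        Matrix.fromCols Kx (1 : Matrix (Fin m) (Fin m) ℝ) +
      Matrix.fromBlocks X 0 0 0 -
      Matrix.fromRows Aᵀ Buᵀ * X * Matrix.fromCols A Bu := by
  have hHsymm : H.IsSymm := by
    rw [hH]
    exact hR.add (hX.transpose_mul_mul_transpose Bu Bu)
  subst hKx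
  rw [fromRows_transpose_one_mul_mul_fromCols_one, fromRows_transpose_mul_mul_fromCols,
    transpose_nonsing_inv_mul_transpose_mul_mul hHsymm hHinv,
    transpose_nonsing_inv_mul_transpose_mul hHsymm hHinv,
    mul_nonsing_inv_cancel_left _ _ ((isUnit_iff_isUnit_det H).mp hHinv),
    ← hX.transpose_mul_mul_transpose A Bu, fromBlocks_add, sub_eq_add_neg,
    fromBlocks_neg, fromBlocks_add, fromBlocks_inj]
  refine ⟨?_, ?_, ?_, ?_⟩
  · linear_combination (norm := abel) hDARE
  · abel
  · rw [transpose_add]; abel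
  · rw [hH]; abel

/-- Completion-of-squares block identity implied by the DARE. -/
theorem dare_block_identity
    (n m : ℕ)
    (A : Matrix (Fin n) (Fin n) ℝ) (Bu : Matrix (Fin n) (Fin m) ℝ)
    (Q : Matrix (Fin n) (Fin n) ℝ) (S : Matrix (Fin n) (Fin m) ℝ)
    (R : Matrix (Fin m) (Fin m) ℝ)
    (hQ : Q.IsSymm) (hR : R.IsSymm)
    (X : Matrix (Fin n) (Fin n) ℝ) (hX : X.IsSymm)
    (H : Matrix (Fin m) (Fin m) ℝ) (hH : H = R + Buᵀ * X * Bu) (hHinv : IsUnit H)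
    (hDARE : 0 = X - Aᵀ * X * A - Q +
      (Aᵀ * X * Bu + S) * H⁻¹ * (Aᵀ * X * Bu + S)ᵀ)
    (Kx : Matrix (Fin m) (Fin n) ℝ) (hKx : Kx = H⁻¹ * (Aᵀ * X * Bu + S)ᵀ) :
    Matrix.fromBlocks Q S Sᵀ R =
      Matrix.fromRows Kxᵀ (1 : Matrix (Fin m) (Fin m) ℝ) * H *
        Matrix.fromCols Kx (1 : Matrix (Fin m) (Fin m) ℝ) +
      Matrix.fromBlocks X 0 0 0 -
      Matrix.fromRows Aᵀ Buᵀ * X * Matrix.fromCols A Bu :=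
  dare_block_identity_general n m A Bu Q S R hR X hX H hH hHinv hDARE Kx hKx
end

section
/- Let A ∈ ℝ^{n×n}, B_u ∈ ℝ^{n×m}, B_d ∈ ℝ^{n×q}, symmetric Q ∈ ℝ^{n×n}, S ∈ ℝ^{n×m}, symmetric R ∈ ℝ^{m×m}, and let X be a symmetric matrix with H := R + B_uᵀXB_u invertible satisfying the DARE 0 = X − AᵀXA − Q + (AᵀXB_u + S)H⁻¹(AᵀXB_u + S)ᵀ. Define K_x := H⁻¹(AᵀXB_u + S)ᵀ, K_v := H⁻¹B_uᵀ, K_d := H⁻¹B_uᵀXB_d. Let x, x₊, v, v₊ ∈ ℝⁿ, u ∈ ℝᵐ, d ∈ ℝ^q satisfy x₊ = Ax + B_uu + B_dd and v = (A − B_uK_x)ᵀ(v₊ + XB_dd), and set u° := −K_xx − K_vv₊ − K_dd. Then xᵀQx + 2xᵀSu + uᵀRu = (u − u°)ᵀH(u − u°) − (K_dd + K_vv₊)ᵀH(K_dd + K_vv₊) + dᵀB_dᵀXB_dd + 2v₊ᵀB_dd + (xᵀXx − x₊ᵀXx₊) + 2(vᵀx − v₊ᵀx₊). -/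
/-!
Put `a := u + Kₓ x`, `w := K_d d + K_v v₊` and `z := v₊ + X B_d d`, so that `u - u° = a + w` and
`H w = B_uᵀ z`. Expanding `(a + w)ᵀ H (a + w) - wᵀ H w = aᵀ H a + 2 (B_u a)ᵀ z`, the term `aᵀ H a`
is the classical LQR completion of squares: by the Riccati equation it equals
`xᵀQx + 2xᵀSu + uᵀRu - xᵀXx + yᵀXy` with `y := A x + B_u u` the undisturbed successor state.
The cross term `2 (B_u a)ᵀ z` is what makes the costate terms telescope: since
`v = (A - B_u Kₓ)ᵀ z`, all contributions of `v`, `v₊` and `d` cancel against `xᵀXx - x₊ᵀXx₊`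
up to `xᵀXx - yᵀXy`.
-/

open Matrix

namespace Matrix

variable {ι κ α : Type*} [Fintype ι] [CommRing α]

theorem IsSymm.dotProduct_mulVec_comm {H : Matrix ι ι α} (hH : H.IsSymm) (a b : ι → α) :
    a ⬝ᵥ H *ᵥ b = b ⬝ᵥ H *ᵥ a := by
  simpa only [hH.eq] using (dotProduct_transpose_mulVec H b a).symm

theorem IsSymm.add_dotProduct_mulVec_add {H : Matrix ι ι α} (hH : H.IsSymm) (a b : ι → α) :
    (a + b) ⬝ᵥ H *ᵥ (a + b) = a ⬝ᵥ H *ᵥ a + 2 * (a ⬝ᵥ H *ᵥ b) + b ⬝ᵥ H *ᵥ b := by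
  rw [mulVec_add, dotProduct_add, add_dotProduct, add_dotProduct, hH.dotProduct_mulVec_comm b a]
  ring

theorem IsSymm.add_transpose_mul_mul {R : Matrix κ κ α} {X : Matrix ι ι α} (hR : R.IsSymm)
    (hX : X.IsSymm) (B : Matrix ι κ α) : (R + Bᵀ * X * B).IsSymm := by
  refine hR.add ?_
  rw [IsSymm, transpose_mul, transpose_mul, hX.eq, transpose_transpose, Matrix.mul_assoc]

theorem dotProduct_transpose_mul_mul_mulVec {γ ε : Type*} [Fintype κ] [Fintype γ] [Fintype ε]
    (A : Matrix ι κ α) (N : Matrix ι γ α) (B : Matrix γ ε α) (x : κ → α) (w : ε → α) :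
    x ⬝ᵥ (Aᵀ * N * B) *ᵥ w = (A *ᵥ x) ⬝ᵥ N *ᵥ (B *ᵥ w) := by
  rw [← mulVec_mulVec, ← mulVec_mulVec, dotProduct_transpose_mulVec, dotProduct_comm]

end Matrix

section Control

variable {ι κ δ α : Type*} [Fintype ι] [Fintype κ] [Fintype δ] [CommRing α]

theorem lqr_completion_of_squares {A X Q : Matrix ι ι α} {Bu S : Matrix ι κ α}
    {R H : Matrix κ κ α} {Kx : Matrix κ ι α} (hR : R.IsSymm) (hX : X.IsSymm)
    (hH : H = R + Buᵀ * X * Bu) (hHKx : H * Kx = (Aᵀ * X * Bu + S)ᵀ)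
    (hRiccati : Q = X - Aᵀ * X * A + (Aᵀ * X * Bu + S) * Kx) (x : ι → α) (u : κ → α) :
    x ⬝ᵥ Q *ᵥ x + 2 * (x ⬝ᵥ S *ᵥ u) + u ⬝ᵥ R *ᵥ u =
      (u + Kx *ᵥ x) ⬝ᵥ H *ᵥ (u + Kx *ᵥ x) + x ⬝ᵥ X *ᵥ x
        - (A *ᵥ x + Bu *ᵥ u) ⬝ᵥ X *ᵥ (A *ᵥ x + Bu *ᵥ u) := by
  have hHsymm : H.IsSymm := hH ▸ hR.add_transpose_mul_mul hX Bu
  have hcross : u ⬝ᵥ H *ᵥ (Kx *ᵥ x) = (A *ᵥ x) ⬝ᵥ X *ᵥ (Bu *ᵥ u) + x ⬝ᵥ S *ᵥ u := by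
    rw [mulVec_mulVec, hHKx, dotProduct_transpose_mulVec, add_mulVec, dotProduct_add,
      dotProduct_transpose_mul_mul_mulVec]
  have hgain : (Kx *ᵥ x) ⬝ᵥ H *ᵥ (Kx *ᵥ x) = x ⬝ᵥ ((Aᵀ * X * Bu + S) * Kx) *ᵥ x := by
    rw [mulVec_mulVec, hHKx, dotProduct_transpose_mulVec, mulVec_mulVec]
  have hHu : u ⬝ᵥ H *ᵥ u = u ⬝ᵥ R *ᵥ u + (Bu *ᵥ u) ⬝ᵥ X *ᵥ (Bu *ᵥ u) := by
    rw [hH, add_mulVec, dotProduct_add, dotProduct_transpose_mul_mul_mulVec]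
  have hQx : x ⬝ᵥ Q *ᵥ x = x ⬝ᵥ X *ᵥ x - (A *ᵥ x) ⬝ᵥ X *ᵥ (A *ᵥ x)
      + x ⬝ᵥ ((Aᵀ * X * Bu + S) * Kx) *ᵥ x := by
    rw [hRiccati, add_mulVec, sub_mulVec, dotProduct_add, dotProduct_sub,
      dotProduct_transpose_mul_mul_mulVec]
  rw [hHsymm.add_dotProduct_mulVec_add, hX.add_dotProduct_mulVec_add, hcross, hgain, hHu, hQx]
  ring

theorem costate_terms_telescope {A X : Matrix ι ι α} {Bu : Matrix ι κ α} {Bd : Matrix ι δ α}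
    {Kx : Matrix κ ι α} (hX : X.IsSymm) {x xp v vp : ι → α} (u : κ → α) {d : δ → α}
    (hx : xp = A *ᵥ x + Bu *ᵥ u + Bd *ᵥ d)
    (hv : v = (A - Bu * Kx)ᵀ *ᵥ (vp + X *ᵥ (Bd *ᵥ d))) :
    2 * ((Bu *ᵥ (u + Kx *ᵥ x)) ⬝ᵥ (vp + X *ᵥ (Bd *ᵥ d))) + d ⬝ᵥ (Bdᵀ * X * Bd) *ᵥ d
      + 2 * (vp ⬝ᵥ Bd *ᵥ d) + (x ⬝ᵥ X *ᵥ x - xp ⬝ᵥ X *ᵥ xp) + 2 * (v ⬝ᵥ x - vp ⬝ᵥ xp) =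
      x ⬝ᵥ X *ᵥ x - (A *ᵥ x + Bu *ᵥ u) ⬝ᵥ X *ᵥ (A *ᵥ x + Bu *ᵥ u) := by
  subst hx hv
  rw [dotProduct_comm _ x, dotProduct_transpose_mulVec, dotProduct_transpose_mul_mul_mulVec,
    hX.add_dotProduct_mulVec_add]
  set y := A *ᵥ x + Bu *ᵥ u
  set e := Bd *ᵥ d
  simp only [sub_mulVec, mulVec_add, ← mulVec_mulVec, dotProduct_add, add_dotProduct,
    dotProduct_sub]
  have hye : y ⬝ᵥ X *ᵥ e = (A *ᵥ x) ⬝ᵥ X *ᵥ e + (Bu *ᵥ u) ⬝ᵥ X *ᵥ e := add_dotProduct _ _ _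
  have hvpy : vp ⬝ᵥ y = vp ⬝ᵥ A *ᵥ x + vp ⬝ᵥ Bu *ᵥ u := dotProduct_add _ _ _
  rw [hye, hvpy, dotProduct_comm (X *ᵥ e), dotProduct_comm (X *ᵥ e), dotProduct_comm (Bu *ᵥ u) vp,
    dotProduct_comm (Bu *ᵥ Kx *ᵥ x) vp]
  ring

end Control

theorem per_step_cost_identity_general
    (n m q : ℕ)
    (A : Matrix (Fin n) (Fin n) ℝ) (Bu : Matrix (Fin n) (Fin m) ℝ)
    (Bd : Matrix (Fin n) (Fin q) ℝ)
    (Q : Matrix (Fin n) (Fin n) ℝ)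
    (S : Matrix (Fin n) (Fin m) ℝ)
    (R : Matrix (Fin m) (Fin m) ℝ) (hR : R.IsSymm)
    (X : Matrix (Fin n) (Fin n) ℝ) (hX : X.IsSymm)
    (H : Matrix (Fin m) (Fin m) ℝ) (hH : H = R + Buᵀ * X * Bu) (hHinv : IsUnit H)
    (hDARE : 0 = X - Aᵀ * X * A - Q +
      (Aᵀ * X * Bu + S) * H⁻¹ * (Aᵀ * X * Bu + S)ᵀ)
    (Kx : Matrix (Fin m) (Fin n) ℝ) (hKx : Kx = H⁻¹ * (Aᵀ * X * Bu + S)ᵀ)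
    (Kv : Matrix (Fin m) (Fin n) ℝ) (hKv : Kv = H⁻¹ * Buᵀ)
    (Kd : Matrix (Fin m) (Fin q) ℝ) (hKd : Kd = H⁻¹ * Buᵀ * X * Bd)
    (x xp v vp : Fin n → ℝ) (u : Fin m → ℝ) (d : Fin q → ℝ)
    (hx : xp = A.mulVec x + Bu.mulVec u + Bd.mulVec d)
    (hv : v = ((A - Bu * Kx)ᵀ).mulVec (vp + X.mulVec (Bd.mulVec d)))
    (uo : Fin m → ℝ)
    (huo : uo = -(Kx.mulVec x) - Kv.mulVec vp - Kd.mulVec d) :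
    x ⬝ᵥ Q.mulVec x + 2 * (x ⬝ᵥ S.mulVec u) + u ⬝ᵥ R.mulVec u =
      (u - uo) ⬝ᵥ H.mulVec (u - uo)
      - (Kd.mulVec d + Kv.mulVec vp) ⬝ᵥ H.mulVec (Kd.mulVec d + Kv.mulVec vp)
      + d ⬝ᵥ (Bdᵀ * X * Bd).mulVec d
      + 2 * (vp ⬝ᵥ Bd.mulVec d)
      + (x ⬝ᵥ X.mulVec x - xp ⬝ᵥ X.mulVec xp)
      + 2 * (v ⬝ᵥ x - vp ⬝ᵥ xp) := by
  have hdet : IsUnit H.det := (isUnit_iff_isUnit_det H).mp hHinv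
  have hHsymm : H.IsSymm := hH ▸ hR.add_transpose_mul_mul hX Bu
  have hHKx : H * Kx = (Aᵀ * X * Bu + S)ᵀ := by rw [hKx, mul_nonsing_inv_cancel_left _ _ hdet]
  have hRiccati : Q = X - Aᵀ * X * A + (Aᵀ * X * Bu + S) * Kx := by
    rw [hKx, ← Matrix.mul_assoc]
    linear_combination (norm := abel) hDARE
  have hfeedforward : H *ᵥ (Kd *ᵥ d + Kv *ᵥ vp) = Buᵀ *ᵥ (vp + X *ᵥ (Bd *ᵥ d)) := by
    rw [hKd, hKv, mulVec_add, mulVec_mulVec, mulVec_mulVec, Matrix.mul_assoc, Matrix.mul_assoc,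
      mul_nonsing_inv_cancel_left _ _ hdet, mul_nonsing_inv_cancel_left _ _ hdet, mulVec_add,
      ← mulVec_mulVec, ← mulVec_mulVec, add_comm]
  have hshift : u - uo = (u + Kx *ᵥ x) + (Kd *ᵥ d + Kv *ᵥ vp) := by rw [huo]; abel
  have hcross : (u + Kx *ᵥ x) ⬝ᵥ H *ᵥ (Kd *ᵥ d + Kv *ᵥ vp) =
      (Bu *ᵥ (u + Kx *ᵥ x)) ⬝ᵥ (vp + X *ᵥ (Bd *ᵥ d)) := by
    rw [hfeedforward, dotProduct_transpose_mulVec, dotProduct_comm]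
  rw [hshift, hHsymm.add_dotProduct_mulVec_add, hcross]
  linear_combination lqr_completion_of_squares hR hX hH hHKx hRiccati x u
    - costate_terms_telescope hX u hx hv

/-- Per-step completion-of-squares identity for the optimal non-causal
controller (Equation (13) of the paper). -/
theorem per_step_cost_identity
    (n m q : ℕ)
    (A : Matrix (Fin n) (Fin n) ℝ) (Bu : Matrix (Fin n) (Fin m) ℝ)
    (Bd : Matrix (Fin n) (Fin q) ℝ)
    (Q : Matrix (Fin n) (Fin n) ℝ) (hQ : Q.IsSymm)
    (S : Matrix (Fin n) (Fin m) ℝ)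
    (R : Matrix (Fin m) (Fin m) ℝ) (hR : R.IsSymm)
    (X : Matrix (Fin n) (Fin n) ℝ) (hX : X.IsSymm)
    (H : Matrix (Fin m) (Fin m) ℝ) (hH : H = R + Buᵀ * X * Bu) (hHinv : IsUnit H)
    (hDARE : 0 = X - Aᵀ * X * A - Q +
      (Aᵀ * X * Bu + S) * H⁻¹ * (Aᵀ * X * Bu + S)ᵀ)
    (Kx : Matrix (Fin m) (Fin n) ℝ) (hKx : Kx = H⁻¹ * (Aᵀ * X * Bu + S)ᵀ)
    (Kv : Matrix (Fin m) (Fin n) ℝ) (hKv : Kv = H⁻¹ * Buᵀ)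
    (Kd : Matrix (Fin m) (Fin q) ℝ) (hKd : Kd = H⁻¹ * Buᵀ * X * Bd)
    (x xp v vp : Fin n → ℝ) (u : Fin m → ℝ) (d : Fin q → ℝ)
    (hx : xp = A.mulVec x + Bu.mulVec u + Bd.mulVec d)
    (hv : v = ((A - Bu * Kx)ᵀ).mulVec (vp + X.mulVec (Bd.mulVec d)))
    (uo : Fin m → ℝ)
    (huo : uo = -(Kx.mulVec x) - Kv.mulVec vp - Kd.mulVec d) :
    x ⬝ᵥ Q.mulVec x + 2 * (x ⬝ᵥ S.mulVec u) + u ⬝ᵥ R.mulVec u =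
      (u - uo) ⬝ᵥ H.mulVec (u - uo)
      - (Kd.mulVec d + Kv.mulVec vp) ⬝ᵥ H.mulVec (Kd.mulVec d + Kv.mulVec vp)
      + d ⬝ᵥ (Bdᵀ * X * Bd).mulVec d
      + 2 * (vp ⬝ᵥ Bd.mulVec d)
      + (x ⬝ᵥ X.mulVec x - xp ⬝ᵥ X.mulVec xp)
      + 2 * (v ⬝ᵥ x - vp ⬝ᵥ xp) :=
  per_step_cost_identity_general n m q A Bu Bd Q S R hR X hX H hH hHinv hDARE Kx hKx Kv hKv Kd hKd x
    xp v vp u d hx hv uo huo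
end

section
/- (Optimality of the non-causal controller.) Let A ∈ ℝ^{n×n}, B_u ∈ ℝ^{n×m}, B_d ∈ ℝ^{n×q}, C_e ∈ ℝ^{p×n}, D_eu ∈ ℝ^{p×m}, Q := C_eᵀC_e, S := C_eᵀD_eu, R := D_euᵀD_eu, and let X be a symmetric positive semidefinite matrix with H := R + B_uᵀXB_u positive definite satisfying the DARE 0 = X − AᵀXA − Q + (AᵀXB_u + S)H⁻¹(AᵀXB_u + S)ᵀ, with gain K_x := H⁻¹(AᵀXB_u + S)ᵀ, and set K_v := H⁻¹B_uᵀ, K_d := H⁻¹B_uᵀXB_d. Let d : ℤ → ℝ^q and v : ℤ → ℝⁿ be square-summable with v_t = (A − B_uK_x)ᵀ(v_{t+1} + XB_dd_t) for all t. Suppose x, x° : ℤ → ℝⁿ and u, u° : ℤ → ℝᵐ are square-summable sequences with x_{t+1} = Ax_t + B_uu_t + B_dd_t, x°_{t+1} = Ax°_t + B_uu°_t + B_dd_t, and u°_t = −K_xx°_t − K_vv_{t+1} − K_dd_t for all t ∈ ℤ. Then Σ_{t∈ℤ} ‖C_ex_t + D_euu_t‖² ≥ Σ_{t∈ℤ}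 ‖C_ex°_t + D_euu°_t‖². -/
/-!
With `δx = x - x°` and `δu = u - u°`, which obey `δx_{t+1} = A δx_t + B_u δu_t`, completing the
square with the Riccati equation gives at each time `t`
`‖C_e x_t + D_eu u_t‖² = ‖C_e x°_t + D_eu u°_t‖² + ⟨δu_t + K_x δx_t, H (δu_t + K_x δx_t)⟩
  + V_t - V_{t+1}` with `V_t = ⟨δx_t, X δx_t⟩ + 2 ⟨X x°_t + v_t, δx_t⟩`.
The cross term telescopes because `X x°_t + v_t` is the costate of the non-causal optimum: the law
for `u°` is stationarity of the Hamiltonian in `u`, and the recursion for `v` is the adjoint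
equation. The middle term is nonnegative since `H` is positive definite, and `V` is summable since
all sequences are square-summable, so its telescoping sum over `ℤ` vanishes.
-/

open Matrix

section Bilinear

variable {R : Type*} [CommRing R] {k l o : Type*} [Fintype k] [Fintype l] [Fintype o]

theorem transpose_mulVec_dotProduct (M : Matrix k l R) (a : k → R) (b : l → R) :
    (Mᵀ *ᵥ a) ⬝ᵥ b = a ⬝ᵥ M *ᵥ b := by
  rw [dotProduct_comm, dotProduct_transpose_mulVec]

theorem Matrix.IsSymm.mulVec_dotProduct {M : Matrix k k R} (hM : M.IsSymm) (a b : k → R) :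
    (M *ᵥ a) ⬝ᵥ b = a ⬝ᵥ M *ᵥ b := by
  conv_lhs => rw [← hM.eq]
  exact transpose_mulVec_dotProduct M a b

theorem mulVec_add_mulVec_dotProduct_mulVec (P : Matrix k l R) (Q : Matrix k o R)
    (W : Matrix k k R) (a c : l → R) (b e : o → R) :
    (P *ᵥ a + Q *ᵥ b) ⬝ᵥ W *ᵥ (P *ᵥ c + Q *ᵥ e) =
      a ⬝ᵥ (Pᵀ * W * P) *ᵥ c + a ⬝ᵥ (Pᵀ * W * Q) *ᵥ e +
        b ⬝ᵥ (Qᵀ * W * P) *ᵥ c + b ⬝ᵥ (Qᵀ * W * Q) *ᵥ e := by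
  simp only [← mulVec_mulVec, dotProduct_mulVec _ Pᵀ, dotProduct_mulVec _ Qᵀ, vecMul_transpose,
    mulVec_add, add_dotProduct, dotProduct_add]
  ring

end Bilinear

/-- The DARE for `Q = Ceᵀ Ce`, `S = Ceᵀ Deu`, `R = Deuᵀ Deu` with gain `Kx = H⁻¹ (Aᵀ X Bu + S)ᵀ`,
stated without `H⁻¹`: `mul_gain` determines the gain when `H` is invertible, and the term
`(Aᵀ X Bu + S) H⁻¹ (Aᵀ X Bu + S)ᵀ` of the DARE becomes `(Aᵀ X Bu + S) Kx`. -/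
structure IsDARESolution {R : Type*} [CommRing R] {n m p : Type*} [Fintype n] [Fintype m]
    [Fintype p] (A : Matrix n n R) (Bu : Matrix n m R) (Ce : Matrix p n R)
    (Deu : Matrix p m R) (X : Matrix n n R) (H : Matrix m m R) (Kx : Matrix m n R) : Prop where
  isSymm : X.IsSymm
  gram_eq : H = Deuᵀ * Deu + Buᵀ * X * Bu
  mul_gain : H * Kx = (Aᵀ * X * Bu + Ceᵀ * Deu)ᵀ
  riccati : Ceᵀ * Ce + Aᵀ * X * A - X = (Aᵀ * X * Bu + Ceᵀ * Deu) * Kx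

namespace IsDARESolution

variable {R : Type*} [CommRing R] {n m p q : Type*} [Fintype n] [Fintype m] [Fintype p]
  [Fintype q] {A : Matrix n n R} {Bu : Matrix n m R} {Ce : Matrix p n R} {Deu : Matrix p m R}
  {X : Matrix n n R} {H : Matrix m m R} {Kx : Matrix m n R}

theorem of_inv [DecidableEq m] (hX : X.IsSymm) (hH : H = Deuᵀ * Deu + Buᵀ * X * Bu)
    (hHdet : IsUnit H.det) (hKx : Kx = H⁻¹ * (Aᵀ * X * Bu + Ceᵀ * Deu)ᵀ)
    (hDARE : 0 = X - Aᵀ * X * A - Ceᵀ * Ce +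
      (Aᵀ * X * Bu + Ceᵀ * Deu) * H⁻¹ * (Aᵀ * X * Bu + Ceᵀ * Deu)ᵀ) :
    IsDARESolution A Bu Ce Deu X H Kx where
  isSymm := hX
  gram_eq := hH
  mul_gain := hKx ▸ mul_nonsing_inv_cancel_left H _ hHdet
  riccati := by
    rw [hKx, ← Matrix.mul_assoc, ← sub_eq_zero, ← neg_eq_zero, hDARE]
    abel

theorem isSymm_gram (hs : IsDARESolution A Bu Ce Deu X H Kx) : H.IsSymm := by
  simp [IsSymm, hs.gram_eq, transpose_mul, hs.isSymm.eq, Matrix.mul_assoc]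

theorem polarized_completion_of_squares (hs : IsDARESolution A Bu Ce Deu X H Kx)
    (a c : n → R) (b e : m → R) :
    (Ce *ᵥ a + Deu *ᵥ b) ⬝ᵥ (Ce *ᵥ c + Deu *ᵥ e) +
        (A *ᵥ a + Bu *ᵥ b) ⬝ᵥ X *ᵥ (A *ᵥ c + Bu *ᵥ e) - a ⬝ᵥ X *ᵥ c =
      (Kx *ᵥ a + b) ⬝ᵥ H *ᵥ (Kx *ᵥ c + e) := by
  classical
  have hKxH : Kxᵀ * H = Aᵀ * X * Bu + Ceᵀ * Deu := by
    rw [← hs.isSymm_gram.eq, ← transpose_mul, hs.mul_gain, transpose_transpose]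
  have hKxHKx : Kxᵀ * H * Kx = Ceᵀ * Ce + Aᵀ * X * A - X := by rw [hKxH, hs.riccati]
  have hHKx : H * Kx = Buᵀ * X * A + Deuᵀ * Ce := by
    simp [hs.mul_gain, transpose_mul, hs.isSymm.eq, Matrix.mul_assoc]
  have hcost := mulVec_add_mulVec_dotProduct_mulVec Ce Deu 1 a c b e
  have hgain := mulVec_add_mulVec_dotProduct_mulVec Kx 1 H a c b e
  simp only [one_mulVec, Matrix.mul_one, transpose_one, Matrix.one_mul] at hcost hgain
  rw [hgain, hcost, mulVec_add_mulVec_dotProduct_mulVec, hKxHKx, hKxH, hHKx, hs.gram_eq]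
  simp only [add_mulVec, sub_mulVec, dotProduct_add, dotProduct_sub, Matrix.mul_assoc]
  ring

/-- `X xo + v` and `X xo' + v'` are the costates at consecutive times; `huo` is stationarity of
the Hamiltonian in `u`. -/
theorem costate_identity (hs : IsDARESolution A Bu Ce Deu X H Kx) (Bd : Matrix n q R)
    {xo xo' v v' : n → R} {uo : m → R} {dd : q → R}
    (hxo' : xo' = A *ᵥ xo + Bu *ᵥ uo + Bd *ᵥ dd)
    (hv : v = (A - Bu * Kx)ᵀ *ᵥ (v' + X *ᵥ Bd *ᵥ dd))
    (huo : H *ᵥ (Kx *ᵥ xo + uo) = -(Buᵀ *ᵥ (v' + X *ᵥ Bd *ᵥ dd)))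
    (c : n → R) (e : m → R) :
    (Ce *ᵥ xo + Deu *ᵥ uo) ⬝ᵥ (Ce *ᵥ c + Deu *ᵥ e) =
      (X *ᵥ xo + v) ⬝ᵥ c - (X *ᵥ xo' + v') ⬝ᵥ (A *ᵥ c + Bu *ᵥ e) := by
  have h := hs.polarized_completion_of_squares xo c uo e
  rw [← hs.isSymm_gram.mulVec_dotProduct, huo, neg_dotProduct,
    transpose_mulVec_dotProduct] at h
  subst hxo' hv
  simp only [hs.isSymm.mulVec_dotProduct, transpose_mulVec_dotProduct, mulVec_add, mulVec_sub,
    sub_mulVec, ← mulVec_mulVec, dotProduct_add, add_dotProduct, dotProduct_sub] at h ⊢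
  linear_combination h

theorem cost_add_eq (hs : IsDARESolution A Bu Ce Deu X H Kx) (Bd : Matrix n q R)
    {xo xo' v v' : n → R} {uo : m → R} {dd : q → R}
    (hxo' : xo' = A *ᵥ xo + Bu *ᵥ uo + Bd *ᵥ dd)
    (hv : v = (A - Bu * Kx)ᵀ *ᵥ (v' + X *ᵥ Bd *ᵥ dd))
    (huo : H *ᵥ (Kx *ᵥ xo + uo) = -(Buᵀ *ᵥ (v' + X *ᵥ Bd *ᵥ dd)))
    (D : n → R) (du : m → R) :
    (Ce *ᵥ (xo + D) + Deu *ᵥ (uo + du)) ⬝ᵥ (Ce *ᵥ (xo + D) + Deu *ᵥ (uo + du)) =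
      (Ce *ᵥ xo + Deu *ᵥ uo) ⬝ᵥ (Ce *ᵥ xo + Deu *ᵥ uo) +
        (Kx *ᵥ D + du) ⬝ᵥ H *ᵥ (Kx *ᵥ D + du) +
        (D ⬝ᵥ X *ᵥ D + 2 * ((X *ᵥ xo + v) ⬝ᵥ D)) -
        ((A *ᵥ D + Bu *ᵥ du) ⬝ᵥ X *ᵥ (A *ᵥ D + Bu *ᵥ du) +
          2 * ((X *ᵥ xo' + v') ⬝ᵥ (A *ᵥ D + Bu *ᵥ du))) := by
  have hcross := hs.costate_identity Bd hxo' hv huo D du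
  have hsquare := hs.polarized_completion_of_squares D D du du
  have hsplit : Ce *ᵥ (xo + D) + Deu *ᵥ (uo + du) =
      (Ce *ᵥ xo + Deu *ᵥ uo) + (Ce *ᵥ D + Deu *ᵥ du) := by
    simp only [mulVec_add]; abel
  rw [hsplit]
  generalize Ce *ᵥ xo + Deu *ᵥ uo = z at hcross ⊢
  generalize Ce *ᵥ D + Deu *ᵥ du = w at hcross hsquare ⊢
  rw [add_dotProduct, dotProduct_add, dotProduct_add, dotProduct_comm w z]
  linear_combination 2 * hcross + hsquare

end IsDARESolution

theorem tsum_le_tsum_of_le_add_sub_shift {G : Type*} [AddGroup G] {a b f : G → ℝ} (g : G)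
    (ha : Summable a) (hb : Summable b) (hf : Summable f)
    (h : ∀ t, b t + (f t - f (t + g)) ≤ a t) : ∑' t, b t ≤ ∑' t, a t := by
  have hf' : Summable fun t => f (t + g) := (Equiv.addRight g).summable_iff.mpr hf
  have hshift : ∑' t, f (t + g) = ∑' t, f t := (Equiv.addRight g).tsum_eq f
  calc ∑' t, b t = ∑' t, (b t + (f t - f (t + g))) := by
        rw [hb.tsum_add (hf.sub hf'), hf.tsum_sub hf', hshift, sub_self, add_zero]
    _ ≤ ∑' t, a t := (hb.add (hf.sub hf')).tsum_le_tsum h ha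

section SqSummable

variable {ι k l : Type*} [Fintype k] [Fintype l]

def SqSummable (y : ι → k → ℝ) : Prop :=
  Summable fun t => y t ⬝ᵥ y t

theorem dotProduct_self_nonneg (a : k → ℝ) : 0 ≤ a ⬝ᵥ a :=
  Finset.sum_nonneg fun _ _ => mul_self_nonneg _

theorem abs_dotProduct_le (a b : k → ℝ) : |a ⬝ᵥ b| ≤ (a ⬝ᵥ a + b ⬝ᵥ b) / 2 := by
  have hsub := dotProduct_self_nonneg (a - b)
  have hadd := dotProduct_self_nonneg (a + b)
  simp only [dotProduct_sub, dotProduct_add, sub_dotProduct, add_dotProduct,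
    dotProduct_comm b a] at hsub hadd
  rw [abs_le]
  constructor <;> linarith

theorem dotProduct_mulVec_self_le (M : Matrix k l ℝ) (z : l → ℝ) :
    (M *ᵥ z) ⬝ᵥ (M *ᵥ z) ≤ (∑ i, ∑ j, M i j ^ 2) * (z ⬝ᵥ z) := by
  simp only [dotProduct, mulVec, ← sq]
  rw [Finset.sum_mul]
  exact Finset.sum_le_sum fun i _ => Finset.sum_mul_sq_le_sq_mul_sq _ _ _

namespace SqSummable

variable {y z : ι → k → ℝ}

theorem summable_dotProduct (hy : SqSummable y) (hz : SqSummable z) :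
    Summable fun t => y t ⬝ᵥ z t :=
  .of_abs <| .of_nonneg_of_le (fun _ => abs_nonneg _) (fun t => abs_dotProduct_le (y t) (z t))
    ((Summable.add hy hz).div_const 2)

theorem add (hy : SqSummable y) (hz : SqSummable z) : SqSummable (y + z) := by
  have hyz := hy.summable_dotProduct hz
  have hzy := hz.summable_dotProduct hy
  simp only [SqSummable, Pi.add_apply, add_dotProduct, dotProduct_add]
  exact (Summable.add hy hzy).add (hyz.add hz)

theorem neg (hy : SqSummable y) : SqSummable (-y) := by
  simpa only [SqSummable, Pi.neg_apply, neg_dotProduct, dotProduct_neg, neg_neg] using hy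

theorem sub (hy : SqSummable y) (hz : SqSummable z) : SqSummable (y - z) := by
  simpa only [sub_eq_add_neg] using hy.add hz.neg

theorem mulVec (M : Matrix l k ℝ) (hz : SqSummable z) : SqSummable fun t => M *ᵥ z t :=
  .of_nonneg_of_le (fun _ => dotProduct_self_nonneg _)
    (fun t => dotProduct_mulVec_self_le M (z t)) (hz.mul_left _)

end SqSummable

end SqSummable

namespace IsDARESolution

variable {n m p q : Type*} [Fintype n] [Fintype m] [Fintype p] [Fintype q]
  {A : Matrix n n ℝ} {Bu : Matrix n m ℝ} {Ce : Matrix p n ℝ} {Deu : Matrix p m ℝ}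
  {X : Matrix n n ℝ} {H : Matrix m m ℝ} {Kx : Matrix m n ℝ}

theorem tsum_cost_le (hs : IsDARESolution A Bu Ce Deu X H Kx) (hH : H.PosSemidef)
    (Bd : Matrix n q ℝ) {d : ℤ → q → ℝ} {v x xo : ℤ → n → ℝ} {u uo : ℤ → m → ℝ}
    (hv : SqSummable v) (hx : SqSummable x) (hxo : SqSummable xo) (hu : SqSummable u)
    (huo : SqSummable uo)
    (hvdyn : ∀ t, v t = (A - Bu * Kx)ᵀ *ᵥ (v (t + 1) + X *ᵥ Bd *ᵥ d t))
    (hxdyn : ∀ t, x (t + 1) = A *ᵥ x t + Bu *ᵥ u t + Bd *ᵥ d t)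
    (hxodyn : ∀ t, xo (t + 1) = A *ᵥ xo t + Bu *ᵥ uo t + Bd *ᵥ d t)
    (hstat : ∀ t, H *ᵥ (Kx *ᵥ xo t + uo t) = -(Buᵀ *ᵥ (v (t + 1) + X *ᵥ Bd *ᵥ d t))) :
    ∑' t, (Ce *ᵥ xo t + Deu *ᵥ uo t) ⬝ᵥ (Ce *ᵥ xo t + Deu *ᵥ uo t) ≤
      ∑' t, (Ce *ᵥ x t + Deu *ᵥ u t) ⬝ᵥ (Ce *ᵥ x t + Deu *ᵥ u t) := by
  have hδ : SqSummable (x - xo) := hx.sub hxo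
  refine tsum_le_tsum_of_le_add_sub_shift 1 ((hx.mulVec Ce).add (hu.mulVec Deu))
    ((hxo.mulVec Ce).add (huo.mulVec Deu))
    (f := fun t => (x - xo) t ⬝ᵥ X *ᵥ (x - xo) t + 2 * ((X *ᵥ xo t + v t) ⬝ᵥ (x - xo) t))
    ((hδ.summable_dotProduct (hδ.mulVec X)).add
      ((((hxo.mulVec X).add hv).summable_dotProduct hδ).mul_left 2)) fun t => ?_
  have hδ' : A *ᵥ (x - xo) t + Bu *ᵥ (u - uo) t = (x - xo) (t + 1) := by
    simp only [Pi.sub_apply, hxdyn, hxodyn, mulVec_sub]; abel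
  have h := hs.cost_add_eq Bd (hxodyn t) (hvdyn t) (hstat t) ((x - xo) t) ((u - uo) t)
  rw [hδ'] at h
  have hpos : 0 ≤ (Kx *ᵥ (x - xo) t + (u - uo) t) ⬝ᵥ H *ᵥ (Kx *ᵥ (x - xo) t + (u - uo) t) := by
    simpa using hH.dotProduct_mulVec_nonneg (Kx *ᵥ (x - xo) t + (u - uo) t)
  simp only [Pi.sub_apply, add_sub_cancel] at h hpos ⊢
  linarith

end IsDARESolution

theorem noncausal_controller_optimal_general
    (n m q p : ℕ)
    (A : Matrix (Fin n) (Fin n) ℝ) (Bu : Matrix (Fin n) (Fin m) ℝ)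
    (Bd : Matrix (Fin n) (Fin q) ℝ)
    (Ce : Matrix (Fin p) (Fin n) ℝ) (Deu : Matrix (Fin p) (Fin m) ℝ)
    (Q : Matrix (Fin n) (Fin n) ℝ) (S : Matrix (Fin n) (Fin m) ℝ)
    (R : Matrix (Fin m) (Fin m) ℝ)
    (hQ : Q = Ceᵀ * Ce) (hS : S = Ceᵀ * Deu) (hR : R = Deuᵀ * Deu)
    (X : Matrix (Fin n) (Fin n) ℝ) (hX : X.PosSemidef)
    (H : Matrix (Fin m) (Fin m) ℝ) (hH : H = R + Buᵀ * X * Bu) (hHpd : H.PosDef)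
    (hDARE : 0 = X - Aᵀ * X * A - Q +
      (Aᵀ * X * Bu + S) * H⁻¹ * (Aᵀ * X * Bu + S)ᵀ)
    (Kx : Matrix (Fin m) (Fin n) ℝ) (hKx : Kx = H⁻¹ * (Aᵀ * X * Bu + S)ᵀ)
    (Kv : Matrix (Fin m) (Fin n) ℝ) (hKv : Kv = H⁻¹ * Buᵀ)
    (Kd : Matrix (Fin m) (Fin q) ℝ) (hKd : Kd = H⁻¹ * Buᵀ * X * Bd)
    (d : ℤ → Fin q → ℝ) (v : ℤ → Fin n → ℝ)
    (hvsq : Summable fun t : ℤ => v t ⬝ᵥ v t)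
    (hvdyn : ∀ t : ℤ, v t = ((A - Bu * Kx)ᵀ).mulVec (v (t + 1) + X.mulVec (Bd.mulVec (d t))))
    (x xo : ℤ → Fin n → ℝ) (u uo : ℤ → Fin m → ℝ)
    (hxsq : Summable fun t : ℤ => x t ⬝ᵥ x t)
    (hxosq : Summable fun t : ℤ => xo t ⬝ᵥ xo t)
    (husq : Summable fun t : ℤ => u t ⬝ᵥ u t)
    (huosq : Summable fun t : ℤ => uo t ⬝ᵥ uo t)
    (hxdyn : ∀ t : ℤ, x (t + 1) = A.mulVec (x t) + Bu.mulVec (u t) + Bd.mulVec (d t))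
    (hxodyn : ∀ t : ℤ, xo (t + 1) = A.mulVec (xo t) + Bu.mulVec (uo t) + Bd.mulVec (d t))
    (huo : ∀ t : ℤ, uo t = -(Kx.mulVec (xo t)) - Kv.mulVec (v (t + 1)) - Kd.mulVec (d t)) :
    (∑' t : ℤ, (Ce.mulVec (xo t) + Deu.mulVec (uo t)) ⬝ᵥ
        (Ce.mulVec (xo t) + Deu.mulVec (uo t))) ≤
    (∑' t : ℤ, (Ce.mulVec (x t) + Deu.mulVec (u t)) ⬝ᵥ
        (Ce.mulVec (x t) + Deu.mulVec (u t))) := by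
  subst hQ hS hR
  have hdet : IsUnit H.det := (isUnit_iff_isUnit_det H).mp hHpd.isUnit
  have hs : IsDARESolution A Bu Ce Deu X H Kx :=
    .of_inv (isHermitian_iff_isSymm.mp hX.isHermitian) hH hdet hKx hDARE
  refine hs.tsum_cost_le hHpd.posSemidef Bd hvsq hxsq hxosq husq huosq hvdyn hxdyn hxodyn
    fun t => ?_
  have hHKv : H * Kv = Buᵀ := hKv ▸ mul_nonsing_inv_cancel_left H _ hdet
  have hHKd : H * Kd = Buᵀ * X * Bd := by
    rw [hKd, Matrix.mul_assoc, Matrix.mul_assoc, mul_nonsing_inv_cancel_left H _ hdet,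
      Matrix.mul_assoc]
  have hsum : Kx *ᵥ xo t + uo t = -(Kv *ᵥ v (t + 1) + Kd *ᵥ d t) := by rw [huo t]; abel
  simp only [hsum, mulVec_neg, mulVec_add, mulVec_mulVec, hHKv, hHKd, Matrix.mul_assoc]

/-- Optimality of the non-causal controller (Theorem 1 of the paper):
the cost of any stabilizing trajectory is at least that of the trajectory
produced by the optimal non-causal controller. -/
theorem noncausal_controller_optimal
    (n m q p : ℕ)
    (A : Matrix (Fin n) (Fin n) ℝ) (Bu : Matrix (Fin n) (Fin m) ℝ)
    (Bd : Matrix (Fin n) (Fin q) ℝ)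
    (Ce : Matrix (Fin p) (Fin n) ℝ) (Deu : Matrix (Fin p) (Fin m) ℝ)
    (Q : Matrix (Fin n) (Fin n) ℝ) (S : Matrix (Fin n) (Fin m) ℝ)
    (R : Matrix (Fin m) (Fin m) ℝ)
    (hQ : Q = Ceᵀ * Ce) (hS : S = Ceᵀ * Deu) (hR : R = Deuᵀ * Deu)
    (X : Matrix (Fin n) (Fin n) ℝ) (hX : X.PosSemidef)
    (H : Matrix (Fin m) (Fin m) ℝ) (hH : H = R + Buᵀ * X * Bu) (hHpd : H.PosDef)
    (hDARE : 0 = X - Aᵀ * X * A - Q +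
      (Aᵀ * X * Bu + S) * H⁻¹ * (Aᵀ * X * Bu + S)ᵀ)
    (Kx : Matrix (Fin m) (Fin n) ℝ) (hKx : Kx = H⁻¹ * (Aᵀ * X * Bu + S)ᵀ)
    (Kv : Matrix (Fin m) (Fin n) ℝ) (hKv : Kv = H⁻¹ * Buᵀ)
    (Kd : Matrix (Fin m) (Fin q) ℝ) (hKd : Kd = H⁻¹ * Buᵀ * X * Bd)
    (d : ℤ → Fin q → ℝ) (v : ℤ → Fin n → ℝ)
    (hdsq : Summable fun t : ℤ => d t ⬝ᵥ d t)
    (hvsq : Summable fun t : ℤ => v t ⬝ᵥ v t)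
    (hvdyn : ∀ t : ℤ, v t = ((A - Bu * Kx)ᵀ).mulVec (v (t + 1) + X.mulVec (Bd.mulVec (d t))))
    (x xo : ℤ → Fin n → ℝ) (u uo : ℤ → Fin m → ℝ)
    (hxsq : Summable fun t : ℤ => x t ⬝ᵥ x t)
    (hxosq : Summable fun t : ℤ => xo t ⬝ᵥ xo t)
    (husq : Summable fun t : ℤ => u t ⬝ᵥ u t)
    (huosq : Summable fun t : ℤ => uo t ⬝ᵥ uo t)
    (hxdyn : ∀ t : ℤ, x (t + 1) = A.mulVec (x t) + Bu.mulVec (u t) + Bd.mulVec (d t))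
    (hxodyn : ∀ t : ℤ, xo (t + 1) = A.mulVec (xo t) + Bu.mulVec (uo t) + Bd.mulVec (d t))
    (huo : ∀ t : ℤ, uo t = -(Kx.mulVec (xo t)) - Kv.mulVec (v (t + 1)) - Kd.mulVec (d t)) :
    (∑' t : ℤ, (Ce.mulVec (xo t) + Deu.mulVec (uo t)) ⬝ᵥ
        (Ce.mulVec (xo t) + Deu.mulVec (uo t))) ≤
    (∑' t : ℤ, (Ce.mulVec (x t) + Deu.mulVec (u t)) ⬝ᵥ
        (Ce.mulVec (x t) + Deu.mulVec (u t))) :=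
  noncausal_controller_optimal_general n m q p A Bu Bd Ce Deu Q S R hQ hS hR X hX H hH hHpd hDARE Kx
    hKx Kv hKv Kd hKd d v hvsq hvdyn x xo u uo hxsq hxosq husq huosq hxdyn hxodyn huo
end

section
/- (Adjoint property of the para-Hermitian conjugate.) Let Â ∈ ℝ^{n×n}, B̂ ∈ ℝ^{n×q}, Ĉ ∈ ℝ^{p×n}, D̂ ∈ ℝ^{p×q}. Let x̂, x̄ : ℤ → ℝⁿ, d : ℤ → ℝ^q, ē : ℤ → ℝ^p be square-summable sequences satisfying, for all t ∈ ℤ: x̂_{t+1} = Âx̂_t + B̂d_t (dynamics of P̂) and Âᵀx̄_{t+1} = x̄_t − Ĉᵀē_t (dynamics of the para-Hermitian conjugate P̂∼). Define ê_t := Ĉx̂_t + D̂d_t and d̄_t := B̂ᵀx̄_{t+1} + D̂ᵀē_t. Then the families t ↦ ê_tᵀē_t and t ↦ d_tᵀd̄_t are summable over ℤ with equal sums: Σ_{t∈ℤ} ê_tᵀē_t = Σ_{t∈ℤ} d_tᵀd̄_t. -/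
/-!
Multiplying the state equation of `P̂` by `x̄_{t+1}` and the co-state equation of `P̂∼` by `x̂_t`
gives the pointwise balance `ê_t ⬝ ē_t - d_t ⬝ d̄_t = x̂_t ⬝ x̄_t - x̂_{t+1} ⬝ x̄_{t+1}`. Square
summability makes every term summable, and the right-hand side telescopes to `0` over `ℤ`.
-/

open Matrix

section DotProduct

variable {ι κ : Type*} [Fintype ι] [Fintype κ]

lemma dotProduct_self_nonneg_s7 (v : ι → ℝ) : 0 ≤ v ⬝ᵥ v :=
  Fintype.sum_nonneg fun i => mul_self_nonneg (v i)

lemma two_mul_abs_dotProduct_le (v w : ι → ℝ) : 2 * |v ⬝ᵥ w| ≤ v ⬝ᵥ v + w ⬝ᵥ w := by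
  have hsub := dotProduct_self_nonneg_s7 (v - w)
  have hadd := dotProduct_self_nonneg_s7 (v + w)
  simp only [sub_dotProduct, dotProduct_sub, add_dotProduct, dotProduct_add,
    dotProduct_comm w v] at hsub hadd
  rw [mul_comm, ← le_div_iff₀ two_pos, abs_le]
  constructor <;> linarith

lemma dotProduct_sq_le (v w : ι → ℝ) : (v ⬝ᵥ w) ^ 2 ≤ (v ⬝ᵥ v) * (w ⬝ᵥ w) := by
  simpa only [dotProduct, sq] using Finset.sum_mul_sq_le_sq_mul_sq Finset.univ v w

lemma mulVec_dotProduct_self_le (M : Matrix κ ι ℝ) (v : ι → ℝ) :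
    M *ᵥ v ⬝ᵥ M *ᵥ v ≤ (∑ i, M i ⬝ᵥ M i) * (v ⬝ᵥ v) := by
  rw [Finset.sum_mul]
  exact Finset.sum_le_sum fun i _ => by simpa only [mulVec, sq] using dotProduct_sq_le (M i) v

lemma dotProduct_sub_dotProduct_eq_of_state_costate {n p q : Type*} [Fintype n] [Fintype p]
    [Fintype q] (A : Matrix n n ℝ) (B : Matrix n q ℝ) (C : Matrix p n ℝ) (D : Matrix p q ℝ)
    {x x' y y' : n → ℝ} {d : q → ℝ} {e : p → ℝ}
    (hx : x' = A *ᵥ x + B *ᵥ d) (hy : Aᵀ *ᵥ y' = y - Cᵀ *ᵥ e) :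
    (C *ᵥ x + D *ᵥ d) ⬝ᵥ e - d ⬝ᵥ (Bᵀ *ᵥ y' + Dᵀ *ᵥ e) = x ⬝ᵥ y - x' ⬝ᵥ y' := by
  obtain rfl : y = Aᵀ *ᵥ y' + Cᵀ *ᵥ e := sub_eq_iff_eq_add.mp hy.symm
  subst hx
  simp only [add_dotProduct, dotProduct_add, dotProduct_transpose_mulVec,
    dotProduct_comm (_ *ᵥ _)]
  ring

end DotProduct

section SquareSummable

variable {α ι κ : Type*} [Fintype ι] [Fintype κ]

def SquareSummable (f : α → ι → ℝ) : Prop :=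
  Summable fun t => f t ⬝ᵥ f t

namespace SquareSummable

variable {f g : α → ι → ℝ}

lemma summable_dotProduct (hf : SquareSummable f) (hg : SquareSummable g) :
    Summable fun t => f t ⬝ᵥ g t :=
  .of_norm_bounded ((Summable.add hf hg).div_const 2) fun t => by
    rw [Real.norm_eq_abs, le_div_iff₀ two_pos, mul_comm]
    exact two_mul_abs_dotProduct_le (f t) (g t)

lemma add (hf : SquareSummable f) (hg : SquareSummable g) :
    SquareSummable fun t => f t + g t := by
  refine (((Summable.add hf ((hf.summable_dotProduct hg).mul_left 2))).add hg).congr fun t => ?_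
  simp only [add_dotProduct, dotProduct_add, dotProduct_comm (g t) (f t)]
  ring

lemma mulVec (hf : SquareSummable f) (M : Matrix κ ι ℝ) :
    SquareSummable fun t => M *ᵥ f t :=
  Summable.of_nonneg_of_le (fun t => dotProduct_self_nonneg_s7 (M *ᵥ f t))
    (fun t => mulVec_dotProduct_self_le M (f t)) (Summable.mul_left _ hf)

lemma comp_add_right {f : ℤ → ι → ℝ} (hf : SquareSummable f) (k : ℤ) :
    SquareSummable fun t => f (t + k) :=
  (Equiv.addRight k).summable_iff (f := fun t => f t ⬝ᵥ f t) |>.2 hf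

end SquareSummable

end SquareSummable

lemma tsum_sub_comp_add_one_eq_zero {G : Type*} [AddCommGroup G] [TopologicalSpace G]
    [IsTopologicalAddGroup G] [T2Space G] {s : ℤ → G} (hs : Summable s) :
    ∑' t, (s t - s (t + 1)) = 0 := by
  have hshift : ∑' t, s (t + 1) = ∑' t, s t := (Equiv.addRight 1).tsum_eq s
  have hs' : Summable fun t => s (t + 1) := (Equiv.addRight 1).summable_iff.2 hs
  rw [hs.tsum_sub hs', hshift, sub_self]

/-- Adjoint property of the para-Hermitian conjugate (Lemma A.1 of the paper):
`⟨P̂ d, ē⟩ = ⟨d, P̂∼ ē⟩` for square-summable two-sided signals. -/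
theorem para_hermitian_adjoint
    (n p q : ℕ)
    (Ah : Matrix (Fin n) (Fin n) ℝ) (Bh : Matrix (Fin n) (Fin q) ℝ)
    (Ch : Matrix (Fin p) (Fin n) ℝ) (Dh : Matrix (Fin p) (Fin q) ℝ)
    (xh xb : ℤ → Fin n → ℝ) (d : ℤ → Fin q → ℝ) (eb : ℤ → Fin p → ℝ)
    (hxh : Summable fun t : ℤ => xh t ⬝ᵥ xh t)
    (hxb : Summable fun t : ℤ => xb t ⬝ᵥ xb t)
    (hd : Summable fun t : ℤ => d t ⬝ᵥ d t)
    (heb : Summable fun t : ℤ => eb t ⬝ᵥ eb t)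
    (hP : ∀ t : ℤ, xh (t + 1) = Ah.mulVec (xh t) + Bh.mulVec (d t))
    (hPtil : ∀ t : ℤ, (Ahᵀ).mulVec (xb (t + 1)) = xb t - (Chᵀ).mulVec (eb t))
    (eh : ℤ → Fin p → ℝ)
    (heh : ∀ t : ℤ, eh t = Ch.mulVec (xh t) + Dh.mulVec (d t))
    (db : ℤ → Fin q → ℝ)
    (hdb : ∀ t : ℤ, db t = (Bhᵀ).mulVec (xb (t + 1)) + (Dhᵀ).mulVec (eb t)) :
    Summable (fun t : ℤ => eh t ⬝ᵥ eb t) ∧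
    Summable (fun t : ℤ => d t ⬝ᵥ db t) ∧
    (∑' t : ℤ, eh t ⬝ᵥ eb t) = (∑' t : ℤ, d t ⬝ᵥ db t) := by
  obtain rfl : eh = _ := funext heh
  obtain rfl : db = _ := funext hdb
  have hxh : SquareSummable xh := hxh
  have hxb : SquareSummable xb := hxb
  have hd : SquareSummable d := hd
  have heb : SquareSummable eb := heb
  have hEh := (hxh.mulVec Ch).add (hd.mulVec Dh)
  have hDb := ((hxb.comp_add_right 1).mulVec Bhᵀ).add (heb.mulVec Dhᵀ)
  refine ⟨hEh.summable_dotProduct heb, hd.summable_dotProduct hDb, ?_⟩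
  rw [← sub_eq_zero, ← (hEh.summable_dotProduct heb).tsum_sub (hd.summable_dotProduct hDb)]
  calc ∑' t, ((Ch *ᵥ xh t + Dh *ᵥ d t) ⬝ᵥ eb t - d t ⬝ᵥ (Bhᵀ *ᵥ xb (t + 1) + Dhᵀ *ᵥ eb t))
      = ∑' t, (xh t ⬝ᵥ xb t - xh (t + 1) ⬝ᵥ xb (t + 1)) := tsum_congr fun t =>
        dotProduct_sub_dotProduct_eq_of_state_costate Ah Bh Ch Dh (hP t) (hPtil t)
    _ = 0 := tsum_sub_comp_add_one_eq_zero (hxh.summable_dotProduct hxb)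
end

section
/- Let Â ∈ ℝ^{n×n}, B̂ ∈ ℝ^{n×q}, and symmetric Q̂ ∈ ℝ^{n×n}, Ŝ ∈ ℝ^{n×q}, R̂ ∈ ℝ^{q×q} be given, and let X̂ be a symmetric matrix with Ĥ := R̂ + B̂ᵀX̂B̂ invertible satisfying the DARE 0 = X̂ − ÂᵀX̂Â − Q̂ + (ÂᵀX̂B̂ + Ŝ)Ĥ⁻¹(ÂᵀX̂B̂ + Ŝ)ᵀ, with gain K̂_x := Ĥ⁻¹(ÂᵀX̂B̂ + Ŝ)ᵀ. Let x̂ : ℤ → ℝⁿ and d : ℤ → ℝ^q be square-summable sequences satisfying x̂_{t+1} = Âx̂_t + B̂d_t for all t ∈ ℤ. Then the families t ↦ x̂_tᵀQ̂x̂_t + 2x̂_tᵀŜd_t + d_tᵀR̂d_t and t ↦ (K̂_xx̂_t + d_t)ᵀĤ(K̂_xx̂_t + d_t) are summable over ℤ with equal sums. -/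
/-!
Write `M = ÂᵀX̂B̂ + Ŝ` and `V(u) = uᵀX̂u`. Since `ĤK̂ₓ = Mᵀ` and `K̂ₓᵀĤK̂ₓ = MĤ⁻¹Mᵀ`, the DARE reads
`Q̂ = X̂ - ÂᵀX̂Â + K̂ₓᵀĤK̂ₓ`, and completing the square turns the stage cost at `(u, e)` into
`(K̂ₓu + e)ᵀĤ(K̂ₓu + e) + V(u) - V(Âu + B̂e)`. Along the trajectory the correction is
`V(x̂_t) - V(x̂_{t+1})`; quadratic forms in square-summable sequences are summable, and a sum over
`ℤ` is invariant under `t ↦ t + 1`, so the correction sums to zero.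
-/

open Matrix

section SquareSummable

variable {ι m p : Type*} [Fintype m] [Fintype p]

theorem summable_mul_of_summable_sq {f g : ι → ℝ} (hf : Summable fun i => f i ^ 2)
    (hg : Summable fun i => g i ^ 2) : Summable fun i => f i * g i :=
  Summable.of_norm_bounded ((hf.add hg).div_const 2) fun i => by
    rw [Real.norm_eq_abs, abs_mul, le_div_iff₀ two_pos]
    nlinarith [two_mul_le_add_sq |f i| |g i|, sq_abs (f i), sq_abs (g i)]

theorem summable_sq_apply_of_summable_dotProduct_self {v : ι → m → ℝ}
    (hv : Summable fun t => v t ⬝ᵥ v t) (i : m) : Summable fun t => v t i ^ 2 :=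
  hv.of_nonneg_of_le (fun _ => sq_nonneg _) fun t =>
    (sq (v t i)).trans_le <|
      Finset.single_le_sum (f := fun k => v t k * v t k) (fun _ _ => mul_self_nonneg _)
        (Finset.mem_univ i)

theorem summable_dotProduct_mulVec (M : Matrix m p ℝ) {v : ι → m → ℝ} {w : ι → p → ℝ}
    (hv : Summable fun t => v t ⬝ᵥ v t) (hw : Summable fun t => w t ⬝ᵥ w t) :
    Summable fun t => v t ⬝ᵥ M *ᵥ w t := by
  have hexpand : ∀ t, v t ⬝ᵥ M *ᵥ w t = ∑ i, ∑ j, M i j * (v t i * w t j) := fun t => by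
    simp only [dotProduct, mulVec, Finset.mul_sum]
    exact Finset.sum_congr rfl fun i _ => Finset.sum_congr rfl fun j _ => by ring
  simp only [hexpand]
  exact summable_sum fun i _ => summable_sum fun j _ =>
    (summable_mul_of_summable_sq (summable_sq_apply_of_summable_dotProduct_self hv i)
      (summable_sq_apply_of_summable_dotProduct_self hw j)).mul_left _

end SquareSummable

theorem hasSum_sub_int_add_one {G : Type*} [AddCommGroup G] [TopologicalSpace G]
    [IsTopologicalAddGroup G] {g : ℤ → G} {a : G} (hg : HasSum g a) :
    HasSum (fun t => g t - g (t + 1)) 0 := by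
  have hshift : HasSum (fun t => g (t + 1)) a := (Equiv.addRight 1).hasSum_iff.mpr hg
  simpa only [sub_self] using hg.sub hshift

section Riccati

variable {α n q : Type*} [CommRing α]

theorem Matrix.mulVec_dotProduct [Fintype n] [Fintype q] (A : Matrix q n α) (u : n → α)
    (v : q → α) : A *ᵥ u ⬝ᵥ v = u ⬝ᵥ Aᵀ *ᵥ v := by
  rw [dotProduct_transpose_mulVec, dotProduct_comm]

theorem Matrix.IsSymm.dotProduct_mulVec_comm_s8 [Fintype n] {M : Matrix n n α} (hM : M.IsSymm)
    (u v : n → α) : u ⬝ᵥ M *ᵥ v = v ⬝ᵥ M *ᵥ u := by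
  simpa only [hM.eq] using dotProduct_transpose_mulVec M u v

theorem transpose_mul_mul_eq_of_isSymm [Fintype q] [DecidableEq q] {H : Matrix q q α}
    (hH : H.IsSymm) (hdet : IsUnit H.det) (M : Matrix n q α) :
    (H⁻¹ * Mᵀ)ᵀ * H * (H⁻¹ * Mᵀ) = M * H⁻¹ * Mᵀ := by
  rw [transpose_mul, transpose_transpose, transpose_nonsing_inv, hH.eq,
    nonsing_inv_mul_cancel_right _ _ hdet, Matrix.mul_assoc]

theorem isSymm_add_transpose_mul_mul [Fintype n] {R : Matrix q q α} {X : Matrix n n α}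
    (hR : R.IsSymm) (hX : X.IsSymm) (B : Matrix n q α) : (R + Bᵀ * X * B).IsSymm :=
  hR.add (by simp only [IsSymm, transpose_mul, transpose_transpose, hX.eq, Matrix.mul_assoc])

theorem stage_cost_eq_add_sub [Fintype n] [Fintype q] {A X Q : Matrix n n α}
    {B S : Matrix n q α} {R H : Matrix q q α} {K : Matrix q n α}
    (hX : X.IsSymm) (hHs : H.IsSymm) (hH : H = R + Bᵀ * X * B)
    (hHK : H * K = (Aᵀ * X * B + S)ᵀ) (hQ : Q = X - Aᵀ * X * A + Kᵀ * H * K)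
    (u : n → α) (e : q → α) :
    u ⬝ᵥ Q *ᵥ u + 2 * (u ⬝ᵥ S *ᵥ e) + e ⬝ᵥ R *ᵥ e =
      (K *ᵥ u + e) ⬝ᵥ H *ᵥ (K *ᵥ u + e) +
        (u ⬝ᵥ X *ᵥ u - (A *ᵥ u + B *ᵥ e) ⬝ᵥ X *ᵥ (A *ᵥ u + B *ᵥ e)) := by
  have hQu : u ⬝ᵥ Q *ᵥ u =
      u ⬝ᵥ X *ᵥ u - A *ᵥ u ⬝ᵥ X *ᵥ (A *ᵥ u) + K *ᵥ u ⬝ᵥ H *ᵥ (K *ᵥ u) := by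
    simp only [hQ, add_mulVec, sub_mulVec, dotProduct_add, dotProduct_sub, ← mulVec_mulVec,
      ← mulVec_dotProduct]
  have hSe : u ⬝ᵥ S *ᵥ e = e ⬝ᵥ H *ᵥ (K *ᵥ u) - A *ᵥ u ⬝ᵥ X *ᵥ (B *ᵥ e) := by
    have h := congrArg (fun N => u ⬝ᵥ Nᵀ *ᵥ e) hHK
    simp only [transpose_transpose, add_mulVec, dotProduct_add, transpose_mul, ← mulVec_mulVec,
      hHs.eq, ← mulVec_dotProduct] at h
    rw [hHs.dotProduct_mulVec_comm_s8, h]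
    ring
  have hRe : e ⬝ᵥ R *ᵥ e = e ⬝ᵥ H *ᵥ e - B *ᵥ e ⬝ᵥ X *ᵥ (B *ᵥ e) := by
    simp only [hH, add_mulVec, dotProduct_add, ← mulVec_mulVec, ← mulVec_dotProduct]
    ring
  rw [hQu, hSe, hRe]
  simp only [mulVec_add, dotProduct_add, add_dotProduct]
  rw [hHs.dotProduct_mulVec_comm_s8 (K *ᵥ u) e, hX.dotProduct_mulVec_comm_s8 (B *ᵥ e) (A *ᵥ u)]
  ring

end Riccati

theorem intermediate_spectral_factor_cost_general
    (n q : ℕ)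
    (Ah : Matrix (Fin n) (Fin n) ℝ) (Bh : Matrix (Fin n) (Fin q) ℝ)
    (Qh : Matrix (Fin n) (Fin n) ℝ)
    (Sh : Matrix (Fin n) (Fin q) ℝ)
    (Rh : Matrix (Fin q) (Fin q) ℝ) (hR : Rh.IsSymm)
    (Xh : Matrix (Fin n) (Fin n) ℝ) (hX : Xh.IsSymm)
    (Hh : Matrix (Fin q) (Fin q) ℝ) (hH : Hh = Rh + Bhᵀ * Xh * Bh) (hHinv : IsUnit Hh)
    (hDARE : 0 = Xh - Ahᵀ * Xh * Ah - Qh +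
      (Ahᵀ * Xh * Bh + Sh) * Hh⁻¹ * (Ahᵀ * Xh * Bh + Sh)ᵀ)
    (Kx : Matrix (Fin q) (Fin n) ℝ) (hKx : Kx = Hh⁻¹ * (Ahᵀ * Xh * Bh + Sh)ᵀ)
    (xh : ℤ → Fin n → ℝ) (d : ℤ → Fin q → ℝ)
    (hxsq : Summable fun t : ℤ => xh t ⬝ᵥ xh t)
    (hdsq : Summable fun t : ℤ => d t ⬝ᵥ d t)
    (hdyn : ∀ t : ℤ, xh (t + 1) = Ah.mulVec (xh t) + Bh.mulVec (d t)) :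
    Summable (fun t : ℤ =>
      xh t ⬝ᵥ Qh.mulVec (xh t) + 2 * (xh t ⬝ᵥ Sh.mulVec (d t)) + d t ⬝ᵥ Rh.mulVec (d t)) ∧
    Summable (fun t : ℤ =>
      (Kx.mulVec (xh t) + d t) ⬝ᵥ Hh.mulVec (Kx.mulVec (xh t) + d t)) ∧
    (∑' t : ℤ,
      (xh t ⬝ᵥ Qh.mulVec (xh t) + 2 * (xh t ⬝ᵥ Sh.mulVec (d t)) + d t ⬝ᵥ Rh.mulVec (d t))) =
    (∑' t : ℤ,
      ((Kx.mulVec (xh t) + d t) ⬝ᵥ Hh.mulVec (Kx.mulVec (xh t) + d t))) := by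
  have hdet : IsUnit Hh.det := (isUnit_iff_isUnit_det Hh).mp hHinv
  have hHs : Hh.IsSymm := hH ▸ isSymm_add_transpose_mul_mul hR hX Bh
  have hHK : Hh * Kx = (Ahᵀ * Xh * Bh + Sh)ᵀ := hKx ▸ mul_nonsing_inv_cancel_left _ _ hdet
  have hQ : Qh = Xh - Ahᵀ * Xh * Ah + Kxᵀ * Hh * Kx := by
    rw [hKx, transpose_mul_mul_eq_of_isSymm hHs hdet]
    refine (sub_eq_zero.mp ?_).symm
    rw [hDARE]
    abel
  have hsplit : ∀ t, xh t ⬝ᵥ Qh *ᵥ xh t + 2 * (xh t ⬝ᵥ Sh *ᵥ d t) + d t ⬝ᵥ Rh *ᵥ d t =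
      (Kx *ᵥ xh t + d t) ⬝ᵥ Hh *ᵥ (Kx *ᵥ xh t + d t) +
        (xh t ⬝ᵥ Xh *ᵥ xh t - xh (t + 1) ⬝ᵥ Xh *ᵥ xh (t + 1)) := fun t => by
    rw [hdyn t]
    exact stage_cost_eq_add_sub hX hHs hH hHK hQ (xh t) (d t)
  have hcost := ((summable_dotProduct_mulVec Qh hxsq hxsq).add
    ((summable_dotProduct_mulVec Sh hxsq hdsq).mul_left 2)).add
    (summable_dotProduct_mulVec Rh hdsq hdsq)
  simp only [hsplit] at hcost ⊢
  have hfactor := hcost.hasSum.sub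
    (hasSum_sub_int_add_one (summable_dotProduct_mulVec Xh hxsq hxsq).hasSum)
  simp only [add_sub_cancel_right, sub_zero] at hfactor
  exact ⟨hcost, hfactor.summable, hfactor.tsum_eq.symm⟩

/-- The quadratic cost along the system `x̂_{t+1} = Âx̂_t + B̂d_t` equals the
cost of the intermediate spectral factor output `Ĥ^{1/2}(K̂ₓx̂_t + d_t)`. -/
theorem intermediate_spectral_factor_cost
    (n q : ℕ)
    (Ah : Matrix (Fin n) (Fin n) ℝ) (Bh : Matrix (Fin n) (Fin q) ℝ)
    (Qh : Matrix (Fin n) (Fin n) ℝ) (hQ : Qh.IsSymm)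
    (Sh : Matrix (Fin n) (Fin q) ℝ)
    (Rh : Matrix (Fin q) (Fin q) ℝ) (hR : Rh.IsSymm)
    (Xh : Matrix (Fin n) (Fin n) ℝ) (hX : Xh.IsSymm)
    (Hh : Matrix (Fin q) (Fin q) ℝ) (hH : Hh = Rh + Bhᵀ * Xh * Bh) (hHinv : IsUnit Hh)
    (hDARE : 0 = Xh - Ahᵀ * Xh * Ah - Qh +
      (Ahᵀ * Xh * Bh + Sh) * Hh⁻¹ * (Ahᵀ * Xh * Bh + Sh)ᵀ)
    (Kx : Matrix (Fin q) (Fin n) ℝ) (hKx : Kx = Hh⁻¹ * (Ahᵀ * Xh * Bh + Sh)ᵀ)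
    (xh : ℤ → Fin n → ℝ) (d : ℤ → Fin q → ℝ)
    (hxsq : Summable fun t : ℤ => xh t ⬝ᵥ xh t)
    (hdsq : Summable fun t : ℤ => d t ⬝ᵥ d t)
    (hdyn : ∀ t : ℤ, xh (t + 1) = Ah.mulVec (xh t) + Bh.mulVec (d t)) :
    Summable (fun t : ℤ =>
      xh t ⬝ᵥ Qh.mulVec (xh t) + 2 * (xh t ⬝ᵥ Sh.mulVec (d t)) + d t ⬝ᵥ Rh.mulVec (d t)) ∧
    Summable (fun t : ℤ =>
      (Kx.mulVec (xh t) + d t) ⬝ᵥ Hh.mulVec (Kx.mulVec (xh t) + d t)) ∧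
    (∑' t : ℤ,
      (xh t ⬝ᵥ Qh.mulVec (xh t) + 2 * (xh t ⬝ᵥ Sh.mulVec (d t)) + d t ⬝ᵥ Rh.mulVec (d t))) =
    (∑' t : ℤ,
      ((Kx.mulVec (xh t) + d t) ⬝ᵥ Hh.mulVec (Kx.mulVec (xh t) + d t))) :=
  intermediate_spectral_factor_cost_general n q Ah Bh Qh Sh Rh hR Xh hX Hh hH hHinv hDARE Kx hKx xh
    d hxsq hdsq hdyn
end

section
/- (Discrete-time spectral factorization, transfer-function form.) Let Â ∈ ℝ^{n×n} be invertible, B̂ ∈ ℝ^{n×q}, Ĉ ∈ ℝ^{p×n}, D̂ ∈ ℝ^{p×q}, and set Q̂ := ĈᵀĈ, Ŝ := ĈᵀD̂, R̂ := D̂ᵀD̂. Suppose X̂ is a symmetric matrix with Ĥ := R̂ + B̂ᵀX̂B̂ positive definite satisfying the DARE 0 = X̂ − ÂᵀX̂Â − Q̂ + (ÂᵀX̂B̂ + Ŝ)Ĥ⁻¹(ÂᵀX̂B̂ + Ŝ)ᵀ, with gain K̂_x := Ĥ⁻¹(ÂᵀX̂B̂ + Ŝ)ᵀ. Suppose Ŷ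 is a symmetric matrix with Ŵ := Ĥ⁻¹ + K̂_xŶK̂_xᵀ positive definite satisfying the DARE Ŷ = ÂŶÂᵀ − (ÂŶK̂_xᵀ)Ŵ⁻¹(ÂŶK̂_xᵀ)ᵀ, with gain K̂_y := Ŵ⁻¹K̂_xŶÂᵀ. Define A_F := Â − K̂_yᵀK̂_x, B_F := B̂ − K̂_yᵀ, C_F := Ŵ^{−1/2}K̂_x, D_F := Ŵ^{−1/2}, where Ŵ^{−1/2} is the inverse of the symmetric positive definite square root of Ŵ. Then: (1) A_F − B_FD_F⁻¹C_F = Â − B̂K̂_x; and (2) for every nonzero z ∈ ℂ such that neither z nor z⁻¹ is an eigenvalue of Â or of A_F, the transfer functions P̂(z) := Ĉ(zI − Â)⁻¹B̂ + D̂ and F(z) := C_F(zI − A_F)⁻¹B_F + D_F (viewed as complex matrices) satisfy P̂(z⁻¹)ᵀP̂(z) = F(z⁻¹)ᵀF(z). -/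
/-!
The control DARE gives the return-difference identity `P̂∼P̂ = M∼ Ĥ M` with
`M(z) = I + K̂ₓ(zI - Â)⁻¹B̂`, and the filter DARE gives `U Ŵ U∼ = Ĥ⁻¹` with
`U(z) = I + K̂ₓ(zI - Â)⁻¹K̂_yᵀ`. Output injection through `K̂_yᵀ` turns `Â` into `A_F`, and the
resolvent identity shows that `V(z) = I - K̂ₓ(zI - A_F)⁻¹K̂_yᵀ` inverts `U` and that `V M = N` with
`N(z) = I + K̂ₓ(zI - A_F)⁻¹B_F`. Hence `P̂∼P̂ = M∼V∼Ŵ⁻¹VM = N∼Ŵ⁻¹N = F∼F`, as `F = Ŵ^{-1/2} N`.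
-/

open Matrix

noncomputable section

namespace Matrix

section Transfer

variable {𝕜 : Type*} [Field 𝕜] {n m p : Type*} [Fintype n]

/-- The return-difference identity of the control DARE; `hΦ` and `hΨ` say that
`Φ = (z - A)⁻¹ B` and `Ψ = (w - A)⁻¹ B`. -/
theorem transpose_mul_eq_of_dare [Fintype m] [DecidableEq m] [Fintype p] {A X : Matrix n n 𝕜}
    {B : Matrix n m 𝕜} {C : Matrix p n 𝕜} {D : Matrix p m 𝕜} {H : Matrix m m 𝕜} {K : Matrix m n 𝕜}
    {Φ Ψ : Matrix n m 𝕜} {z w : 𝕜}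
    (hX : Xᵀ = X) (hH : H = Dᵀ * D + Bᵀ * X * B) (hK : H * K = (Aᵀ * X * B + Cᵀ * D)ᵀ)
    (hdare : Cᵀ * C = X - Aᵀ * X * A + (Aᵀ * X * B + Cᵀ * D) * K)
    (hzw : z * w = 1) (hΦ : A * Φ = z • Φ - B) (hΨ : A * Ψ = w • Ψ - B) :
    (C * Ψ + D)ᵀ * (C * Φ + D) = (K * Ψ + 1)ᵀ * H * (K * Φ + 1) := by
  set L := Aᵀ * X * B + Cᵀ * D
  have hHt : Hᵀ = H := by
    simp only [hH, transpose_add, transpose_mul, transpose_transpose, hX, Matrix.mul_assoc]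
  have hKH : Kᵀ * H = L := by rw [← hHt, ← transpose_mul, hK, transpose_transpose]
  have hLt : Lᵀ = Bᵀ * X * A + Dᵀ * C := by
    simp only [L, transpose_add, transpose_mul, transpose_transpose, hX, Matrix.mul_assoc]
  have lyapunov : Ψᵀ * (X - Aᵀ * X * A) * Φ =
      Bᵀ * X * B + Bᵀ * X * (A * Φ) + (A * Ψ)ᵀ * X * B := by
    have h : Ψᵀ * (Aᵀ * X * A) * Φ = (A * Ψ)ᵀ * X * (A * Φ) := by
      simp only [transpose_mul, Matrix.mul_assoc]
    rw [Matrix.mul_sub, Matrix.sub_mul, h, hΦ, hΨ]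
    simp only [transpose_sub, transpose_smul, Matrix.mul_sub, Matrix.sub_mul, Matrix.smul_mul,
      Matrix.mul_smul, smul_smul, hzw, one_smul, smul_sub]
    abel
  have lhs : (C * Ψ + D)ᵀ * (C * Φ + D) = H + Lᵀ * Φ + Ψᵀ * L + Ψᵀ * L * K * Φ := by
    calc (C * Ψ + D)ᵀ * (C * Φ + D)
        = Ψᵀ * (Cᵀ * C) * Φ + Ψᵀ * (Cᵀ * D) + Dᵀ * C * Φ + Dᵀ * D := by
          simp only [transpose_add, transpose_mul, Matrix.add_mul, Matrix.mul_add,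
            Matrix.mul_assoc]
          abel
      _ = H + Lᵀ * Φ + Ψᵀ * L + Ψᵀ * L * K * Φ := by
          rw [hdare, Matrix.mul_add, Matrix.add_mul, lyapunov, hH, hLt]
          simp only [L, transpose_mul, Matrix.add_mul, Matrix.mul_add, Matrix.mul_assoc]
          abel
  have rhs : (K * Ψ + 1)ᵀ * H * (K * Φ + 1) = H + Lᵀ * Φ + Ψᵀ * L + Ψᵀ * L * K * Φ := by
    calc (K * Ψ + 1)ᵀ * H * (K * Φ + 1)
        = H + (H * K) * Φ + Ψᵀ * (Kᵀ * H) + Ψᵀ * (Kᵀ * H) * K * Φ := by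
          simp only [transpose_add, transpose_mul, transpose_one, Matrix.add_mul,
            Matrix.mul_add, Matrix.one_mul, Matrix.mul_one, Matrix.mul_assoc]
          abel
      _ = _ := by rw [hK, hKH]
  rw [lhs, rhs]

variable [DecidableEq n]

def transferMatrix (A : Matrix n n 𝕜) (B : Matrix n m 𝕜) (C : Matrix p n 𝕜) (D : Matrix p m 𝕜)
    (z : 𝕜) : Matrix p m 𝕜 :=
  C * (z • 1 - A)⁻¹ * B + D

theorem isUnit_det_smul_one_sub_of_notMem_spectrum {A : Matrix n n 𝕜} {z : 𝕜}
    (h : z ∉ spectrum 𝕜 A) : IsUnit (z • 1 - A).det := by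
  rw [← isUnit_iff_isUnit_det, ← Algebra.algebraMap_eq_smul_one]
  exact spectrum.notMem_iff.mp h

theorem mul_inv_smul_one_sub {A : Matrix n n 𝕜} {z : 𝕜} (h : z ∉ spectrum 𝕜 A) :
    A * (z • 1 - A)⁻¹ = z • (z • 1 - A)⁻¹ - 1 := by
  have h₁ := mul_nonsing_inv _ (isUnit_det_smul_one_sub_of_notMem_spectrum h)
  rw [Matrix.sub_mul, Matrix.smul_mul, Matrix.one_mul] at h₁
  exact eq_sub_of_add_eq (sub_eq_iff_eq_add'.mp h₁).symm

theorem inv_smul_one_sub_mul {A : Matrix n n 𝕜} {z : 𝕜} (h : z ∉ spectrum 𝕜 A) :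
    (z • 1 - A)⁻¹ * A = z • (z • 1 - A)⁻¹ - 1 := by
  have h₁ := nonsing_inv_mul _ (isUnit_det_smul_one_sub_of_notMem_spectrum h)
  rw [Matrix.mul_sub, Matrix.mul_smul, Matrix.mul_one] at h₁
  exact eq_sub_of_add_eq (sub_eq_iff_eq_add'.mp h₁).symm

theorem mul_transferMatrix {r : Type*} [Fintype p] (S : Matrix r p 𝕜) (A : Matrix n n 𝕜)
    (B : Matrix n m 𝕜) (C : Matrix p n 𝕜) (D : Matrix p m 𝕜) (z : 𝕜) :
    S * transferMatrix A B C D z = transferMatrix A B (S * C) (S * D) z := by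
  simp only [transferMatrix, Matrix.mul_add, Matrix.mul_assoc]

variable [Fintype m] [DecidableEq m]

/-- `hR` and `hS` say that `R = (z - A)⁻¹` and `S = ((w - A)⁻¹)ᵀ`. -/
theorem mul_mul_transpose_eq_of_filter_dare {A Y R S : Matrix n n 𝕜} {K Ky : Matrix m n 𝕜}
    {W : Matrix m m 𝕜} {z w : 𝕜} (hWKy : W * Ky = K * Y * Aᵀ) (hKyW : Kyᵀ * W = A * Y * Kᵀ)
    (hdare : Y = A * Y * Aᵀ - A * Y * Kᵀ * Ky)
    (hzw : z * w = 1) (hR : R * A = z • R - 1) (hS : Aᵀ * S = w • S - 1) :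
    (K * R * Kyᵀ + 1) * W * (Ky * S * Kᵀ + 1) = W - K * Y * Kᵀ := by
  have hKyWKy : Kyᵀ * W * Ky = A * Y * Aᵀ - Y := by
    rw [hKyW]
    nth_rewrite 3 [hdare]
    abel
  have bracket : R * A * Y + Y * (Aᵀ * S) + R * A * Y * (Aᵀ * S) - R * Y * S = -Y := by
    rw [hR, hS]
    simp only [Matrix.sub_mul, Matrix.mul_sub, Matrix.smul_mul, Matrix.mul_smul, Matrix.one_mul,
      Matrix.mul_one, smul_sub, smul_smul, mul_comm w z, hzw, one_smul]
    abel
  calc (K * R * Kyᵀ + 1) * W * (Ky * S * Kᵀ + 1)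
      = W + K * R * (Kyᵀ * W) + W * Ky * S * Kᵀ + K * R * (Kyᵀ * W * Ky) * S * Kᵀ := by
        simp only [Matrix.add_mul, Matrix.mul_add, Matrix.one_mul, Matrix.mul_one,
          Matrix.mul_assoc]
        abel
    _ = W + K * (R * A * Y + Y * (Aᵀ * S) + R * A * Y * (Aᵀ * S) - R * Y * S) * Kᵀ := by
        rw [hKyWKy, hKyW, hWKy]
        simp only [Matrix.add_mul, Matrix.mul_add, Matrix.sub_mul, Matrix.mul_sub,
          Matrix.mul_assoc]
        abel
    _ = W - K * Y * Kᵀ := by rw [bracket, Matrix.mul_neg, Matrix.neg_mul, sub_eq_add_neg]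

theorem transferMatrix_feedback_mul {A : Matrix n n 𝕜} {B L : Matrix n m 𝕜} {K : Matrix m n 𝕜}
    {z : 𝕜} (hA : z ∉ spectrum 𝕜 A) (hAL : z ∉ spectrum 𝕜 (A - L * K)) :
    transferMatrix (A - L * K) (-L) K 1 z * transferMatrix A B K 1 z =
      transferMatrix (A - L * K) (B - L) K 1 z := by
  simp only [transferMatrix]
  set R := (z • 1 - A)⁻¹
  set S := (z • 1 - (A - L * K))⁻¹
  have resolvent : S * (L * K) * R = R - S := by
    have h := inv_sub_inv (A := z • 1 - (A - L * K)) (B := z • 1 - A)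
      (iff_of_true
        ((isUnit_iff_isUnit_det _).mpr (isUnit_det_smul_one_sub_of_notMem_spectrum hAL))
        ((isUnit_iff_isUnit_det _).mpr (isUnit_det_smul_one_sub_of_notMem_spectrum hA)))
    rw [show z • 1 - A - (z • 1 - (A - L * K)) = -(L * K) by abel] at h
    rw [← neg_sub, h, Matrix.mul_neg, Matrix.neg_mul, neg_neg]
  have key : K * S * L * (K * R * B) = K * R * B - K * S * B := by
    calc K * S * L * (K * R * B) = K * (S * (L * K) * R) * B := by
          simp only [Matrix.mul_assoc]
      _ = _ := by rw [resolvent, Matrix.mul_sub, Matrix.sub_mul]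
  simp only [Matrix.add_mul, Matrix.mul_add, Matrix.mul_one, Matrix.one_mul,
    Matrix.mul_neg, Matrix.neg_mul, Matrix.mul_sub, key]
  abel

theorem transferMatrix_feedback_mul_self {A : Matrix n n 𝕜} {L : Matrix n m 𝕜}
    {K : Matrix m n 𝕜} {z : 𝕜} (hA : z ∉ spectrum 𝕜 A) (hAL : z ∉ spectrum 𝕜 (A - L * K)) :
    transferMatrix (A - L * K) (-L) K 1 z * transferMatrix A L K 1 z = 1 := by
  simpa [transferMatrix] using transferMatrix_feedback_mul (B := L) hA hAL

theorem transferMatrix_transpose_mul_eq_of_dare [Fintype p] {A X : Matrix n n 𝕜}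
    {B : Matrix n m 𝕜} {C : Matrix p n 𝕜} {D : Matrix p m 𝕜} {H : Matrix m m 𝕜}
    {K : Matrix m n 𝕜} {z : 𝕜} (hz : z ≠ 0)
    (hX : Xᵀ = X) (hH : H = Dᵀ * D + Bᵀ * X * B) (hK : H * K = (Aᵀ * X * B + Cᵀ * D)ᵀ)
    (hdare : Cᵀ * C = X - Aᵀ * X * A + (Aᵀ * X * B + Cᵀ * D) * K)
    (h₁ : z ∉ spectrum 𝕜 A) (h₂ : z⁻¹ ∉ spectrum 𝕜 A) :
    (transferMatrix A B C D z⁻¹)ᵀ * transferMatrix A B C D z =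
      (transferMatrix A B K 1 z⁻¹)ᵀ * H * transferMatrix A B K 1 z := by
  have hres {w : 𝕜} (hw : w ∉ spectrum 𝕜 A) :
      A * ((w • 1 - A)⁻¹ * B) = w • ((w • 1 - A)⁻¹ * B) - B := by
    rw [← Matrix.mul_assoc, mul_inv_smul_one_sub hw, Matrix.sub_mul, Matrix.smul_mul,
      Matrix.one_mul]
  simpa only [transferMatrix, Matrix.mul_assoc] using
    transpose_mul_eq_of_dare hX hH hK hdare (mul_inv_cancel₀ hz) (hres h₁) (hres h₂)

theorem transferMatrix_mul_mul_transpose_eq_of_filter_dare {A Y : Matrix n n 𝕜}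
    {K Ky : Matrix m n 𝕜} {W : Matrix m m 𝕜} {z : 𝕜} (hz : z ≠ 0)
    (hWKy : W * Ky = K * Y * Aᵀ) (hKyW : Kyᵀ * W = A * Y * Kᵀ)
    (hdare : Y = A * Y * Aᵀ - A * Y * Kᵀ * Ky)
    (h₁ : z ∉ spectrum 𝕜 A) (h₂ : z⁻¹ ∉ spectrum 𝕜 A) :
    transferMatrix A Kyᵀ K 1 z * W * (transferMatrix A Kyᵀ K 1 z⁻¹)ᵀ = W - K * Y * Kᵀ := by
  have hS : Aᵀ * ((z⁻¹ • 1 - A)⁻¹)ᵀ = z⁻¹ • ((z⁻¹ • 1 - A)⁻¹)ᵀ - 1 := by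
    rw [← transpose_mul, inv_smul_one_sub_mul h₂, transpose_sub, transpose_smul, transpose_one]
  simpa only [transferMatrix, transpose_add, transpose_mul, transpose_one, transpose_transpose,
    Matrix.mul_assoc] using mul_mul_transpose_eq_of_filter_dare hWKy hKyW hdare
      (mul_inv_cancel₀ hz) (inv_smul_one_sub_mul h₁) hS

theorem transferMatrix_spectral_factorization {r : Type*} [Fintype p] [Fintype r]
    {A X Y : Matrix n n 𝕜} {B : Matrix n m 𝕜} {C : Matrix p n 𝕜} {D : Matrix p m 𝕜}
    {H Hi W Wi : Matrix m m 𝕜} {K Ky : Matrix m n 𝕜} {S : Matrix r m 𝕜} {z : 𝕜} (hz : z ≠ 0)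
    (hX : Xᵀ = X) (hH : H = Dᵀ * D + Bᵀ * X * B) (hK : H * K = (Aᵀ * X * B + Cᵀ * D)ᵀ)
    (hdareX : Cᵀ * C = X - Aᵀ * X * A + (Aᵀ * X * B + Cᵀ * D) * K) (hHi : Hi * H = 1)
    (hW : W = Hi + K * Y * Kᵀ) (hWi : Wi * W = 1)
    (hWKy : W * Ky = K * Y * Aᵀ) (hKyW : Kyᵀ * W = A * Y * Kᵀ)
    (hdareY : Y = A * Y * Aᵀ - A * Y * Kᵀ * Ky) (hS : Sᵀ * S = Wi)
    (h₁ : z ∉ spectrum 𝕜 A) (h₂ : z⁻¹ ∉ spectrum 𝕜 A)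
    (h₃ : z ∉ spectrum 𝕜 (A - Kyᵀ * K)) (h₄ : z⁻¹ ∉ spectrum 𝕜 (A - Kyᵀ * K)) :
    (transferMatrix A B C D z⁻¹)ᵀ * transferMatrix A B C D z =
      (transferMatrix (A - Kyᵀ * K) (B - Kyᵀ) (S * K) S z⁻¹)ᵀ *
        transferMatrix (A - Kyᵀ * K) (B - Kyᵀ) (S * K) S z := by
  have hUWU := (transferMatrix_mul_mul_transpose_eq_of_filter_dare hz hWKy hKyW hdareY h₁ h₂).trans
    (by rw [hW, add_sub_cancel_right])
  have hVU := transferMatrix_feedback_mul_self h₁ h₃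
  have hUV := mul_eq_one_comm.mp (transferMatrix_feedback_mul_self h₂ h₄)
  have hVM := transferMatrix_feedback_mul (B := B) h₁ h₃
  have hVM' := transferMatrix_feedback_mul (B := B) h₂ h₄
  set M := transferMatrix A B K 1 z
  set M' := transferMatrix A B K 1 z⁻¹
  set U := transferMatrix A Kyᵀ K 1 z
  set U' := transferMatrix A Kyᵀ K 1 z⁻¹
  set V := transferMatrix (A - Kyᵀ * K) (-Kyᵀ) K 1 z
  set V' := transferMatrix (A - Kyᵀ * K) (-Kyᵀ) K 1 z⁻¹
  -- `V` inverts `U`, so `U W U'ᵀ = Hi` turns into `V'ᵀ Wi V = H`.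
  have hH' : V'ᵀ * Wi * V = H := by
    calc V'ᵀ * Wi * V = V'ᵀ * Wi * V * (U * W * U'ᵀ * H) := by rw [hUWU, hHi, Matrix.mul_one]
      _ = (U' * V')ᵀ * H := by
          simp only [Matrix.mul_assoc]
          rw [← Matrix.mul_assoc V U, hVU, Matrix.one_mul, ← Matrix.mul_assoc Wi W, hWi,
            Matrix.one_mul, ← Matrix.mul_assoc, ← transpose_mul]
      _ = H := by rw [hUV, transpose_one, Matrix.one_mul]
  calc (transferMatrix A B C D z⁻¹)ᵀ * transferMatrix A B C D z = M'ᵀ * H * M :=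
        transferMatrix_transpose_mul_eq_of_dare hz hX hH hK hdareX h₁ h₂
    _ = (V' * M')ᵀ * Wi * (V * M) := by rw [← hH']; simp only [transpose_mul, Matrix.mul_assoc]
    _ = (S * transferMatrix (A - Kyᵀ * K) (B - Kyᵀ) K 1 z⁻¹)ᵀ *
          (S * transferMatrix (A - Kyᵀ * K) (B - Kyᵀ) K 1 z) := by
        rw [hVM, hVM', ← hS]; simp only [transpose_mul, Matrix.mul_assoc]
    _ = _ := by rw [mul_transferMatrix, mul_transferMatrix, Matrix.mul_one]

theorem transferMatrix_spectral_factorization_map {𝕂 : Type*} [Field 𝕂] (f : 𝕜 →+* 𝕂)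
    {r : Type*} [Fintype p] [Fintype r]
    {A X Y : Matrix n n 𝕜} {B : Matrix n m 𝕜} {C : Matrix p n 𝕜} {D : Matrix p m 𝕜}
    {H Hi W Wi : Matrix m m 𝕜} {K Ky : Matrix m n 𝕜} {S : Matrix r m 𝕜} {z : 𝕂} (hz : z ≠ 0)
    (hX : Xᵀ = X) (hH : H = Dᵀ * D + Bᵀ * X * B) (hK : H * K = (Aᵀ * X * B + Cᵀ * D)ᵀ)
    (hdareX : Cᵀ * C = X - Aᵀ * X * A + (Aᵀ * X * B + Cᵀ * D) * K) (hHi : Hi * H = 1)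
    (hW : W = Hi + K * Y * Kᵀ) (hWi : Wi * W = 1)
    (hWKy : W * Ky = K * Y * Aᵀ) (hKyW : Kyᵀ * W = A * Y * Kᵀ)
    (hdareY : Y = A * Y * Aᵀ - A * Y * Kᵀ * Ky) (hS : Sᵀ * S = Wi)
    (h₁ : z ∉ spectrum 𝕂 (A.map f)) (h₂ : z⁻¹ ∉ spectrum 𝕂 (A.map f))
    (h₃ : z ∉ spectrum 𝕂 ((A - Kyᵀ * K).map f)) (h₄ : z⁻¹ ∉ spectrum 𝕂 ((A - Kyᵀ * K).map f)) :
    (transferMatrix (A.map f) (B.map f) (C.map f) (D.map f) z⁻¹)ᵀ *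
        transferMatrix (A.map f) (B.map f) (C.map f) (D.map f) z =
      (transferMatrix ((A - Kyᵀ * K).map f) ((B - Kyᵀ).map f) ((S * K).map f) (S.map f) z⁻¹)ᵀ *
        transferMatrix ((A - Kyᵀ * K).map f) ((B - Kyᵀ).map f) ((S * K).map f) (S.map f) z := by
  have hX' := congrArg (Matrix.map · f) hX
  have hH' := congrArg (Matrix.map · f) hH
  have hK' := congrArg (Matrix.map · f) hK
  have hdareX' := congrArg (Matrix.map · f) hdareX
  have hHi' := congrArg (Matrix.map · f) hHi
  have hW' := congrArg (Matrix.map · f) hW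
  have hWi' := congrArg (Matrix.map · f) hWi
  have hWKy' := congrArg (Matrix.map · f) hWKy
  have hKyW' := congrArg (Matrix.map · f) hKyW
  have hdareY' := congrArg (Matrix.map · f) hdareY
  have hS' := congrArg (Matrix.map · f) hS
  simp only [Matrix.map_mul, Matrix.map_add, Matrix.map_sub, map_add, map_sub,
      Matrix.transpose_map, Matrix.map_one, map_zero, map_one, implies_true]
    at hX' hH' hK' hdareX' hHi' hW' hWi' hWKy' hKyW' hdareY' hS' h₃ h₄ ⊢
  exact transferMatrix_spectral_factorization hz hX' hH' hK' hdareX' hHi' hW' hWi' hWKy' hKyW'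
    hdareY' hS' h₁ h₂ h₃ h₄

end Transfer

section SpectralSqrt

variable {n : Type*} [Fintype n] [DecidableEq n]

theorem IsHermitian.conj_diagonal_eq_cfc {A : Matrix n n ℝ} (hA : A.IsHermitian)
    (f : ℝ → ℝ) :
    (hA.eigenvectorUnitary : Matrix n n ℝ) * diagonal (f ∘ hA.eigenvalues) *
      (star hA.eigenvectorUnitary : Matrix n n ℝ) = cfc f A := by
  rw [hA.cfc_eq, IsHermitian.cfc, Unitary.conjStarAlgAut_apply]
  rfl

open scoped ComplexOrder MatrixOrder in
theorem PosSemidef.cfc_sqrt_mul_self {𝕜 : Type*} [RCLike 𝕜] {A : Matrix n n 𝕜}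
    (hA : A.PosSemidef) : cfc Real.sqrt A * cfc Real.sqrt A = A := by
  rw [← cfc_mul ..]
  conv_rhs => rw [← cfc_id' ℝ A]
  exact cfc_congr fun x hx => Real.mul_self_sqrt (spectrum_nonneg_of_nonneg hA.nonneg hx)

theorem PosDef.isUnit_det_cfc_sqrt {W : Matrix n n ℝ} (hW : W.PosDef) :
    IsUnit (cfc Real.sqrt W).det := by
  have h : IsUnit ((cfc Real.sqrt W).det * (cfc Real.sqrt W).det) := by
    rw [← det_mul, hW.posSemidef.cfc_sqrt_mul_self]
    exact (isUnit_iff_isUnit_det W).mp hW.isUnit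
  exact isUnit_of_mul_isUnit_left h

theorem PosSemidef.transpose_inv_mul_inv_cfc_sqrt {W : Matrix n n ℝ} (hW : W.PosSemidef) :
    ((cfc Real.sqrt W)⁻¹)ᵀ * (cfc Real.sqrt W)⁻¹ = W⁻¹ := by
  have hsymm : (cfc Real.sqrt W)ᵀ = cfc Real.sqrt W := by
    rw [← conjTranspose_eq_transpose_of_trivial]
    exact (cfc_predicate Real.sqrt W).star_eq
  rw [transpose_nonsing_inv, hsymm, ← Matrix.mul_inv_rev, hW.cfc_sqrt_mul_self]

end SpectralSqrt

end Matrix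

theorem spectral_factorization_transfer_general
    (n q p : ℕ)
    (Ah : Matrix (Fin n) (Fin n) ℝ)
    (Bh : Matrix (Fin n) (Fin q) ℝ)
    (Ch : Matrix (Fin p) (Fin n) ℝ) (Dh : Matrix (Fin p) (Fin q) ℝ)
    (Qh : Matrix (Fin n) (Fin n) ℝ) (Sh : Matrix (Fin n) (Fin q) ℝ)
    (Rh : Matrix (Fin q) (Fin q) ℝ)
    (hQ : Qh = Chᵀ * Ch) (hS : Sh = Chᵀ * Dh) (hR : Rh = Dhᵀ * Dh)
    (Xh : Matrix (Fin n) (Fin n) ℝ) (hXsymm : Xh.IsSymm)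
    (Hh : Matrix (Fin q) (Fin q) ℝ) (hHdef : Hh = Rh + Bhᵀ * Xh * Bh)
    (hHpd : Hh.PosDef)
    (hDAREX : 0 = Xh - Ahᵀ * Xh * Ah - Qh +
      (Ahᵀ * Xh * Bh + Sh) * Hh⁻¹ * (Ahᵀ * Xh * Bh + Sh)ᵀ)
    (Kx : Matrix (Fin q) (Fin n) ℝ) (hKx : Kx = Hh⁻¹ * (Ahᵀ * Xh * Bh + Sh)ᵀ)
    (Yh : Matrix (Fin n) (Fin n) ℝ) (hYsymm : Yh.IsSymm)
    (Wh : Matrix (Fin q) (Fin q) ℝ) (hWdef : Wh = Hh⁻¹ + Kx * Yh * Kxᵀ)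
    (hWpd : Wh.PosDef)
    (hDAREY : Yh = Ah * Yh * Ahᵀ - (Ah * Yh * Kxᵀ) * Wh⁻¹ * (Ah * Yh * Kxᵀ)ᵀ)
    (Ky : Matrix (Fin q) (Fin n) ℝ) (hKy : Ky = Wh⁻¹ * (Ah * Yh * Kxᵀ)ᵀ)
    (Whalf : Matrix (Fin q) (Fin q) ℝ) (hWhalf : Whalf =
      (hWpd.posSemidef.1.eigenvectorUnitary : Matrix (Fin q) (Fin q) ℝ) *
        diagonal (Real.sqrt ∘ hWpd.posSemidef.1.eigenvalues) *
        (star hWpd.posSemidef.1.eigenvectorUnitary : Matrix (Fin q) (Fin q) ℝ))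
    (AF : Matrix (Fin n) (Fin n) ℝ) (hAF : AF = Ah - Kyᵀ * Kx)
    (BF : Matrix (Fin n) (Fin q) ℝ) (hBF : BF = Bh - Kyᵀ)
    (CF : Matrix (Fin q) (Fin n) ℝ) (hCF : CF = Whalf⁻¹ * Kx)
    (DF : Matrix (Fin q) (Fin q) ℝ) (hDF : DF = Whalf⁻¹) :
    (AF - BF * DF⁻¹ * CF = Ah - Bh * Kx) ∧
    (∀ z : ℂ, z ≠ 0 →
      z ∉ spectrum ℂ (Ah.map (algebraMap ℝ ℂ)) →
      z⁻¹ ∉ spectrum ℂ (Ah.map (algebraMap ℝ ℂ)) →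
      z ∉ spectrum ℂ (AF.map (algebraMap ℝ ℂ)) →
      z⁻¹ ∉ spectrum ℂ (AF.map (algebraMap ℝ ℂ)) →
      (Ch.map (algebraMap ℝ ℂ) *
          (z⁻¹ • (1 : Matrix (Fin n) (Fin n) ℂ) - Ah.map (algebraMap ℝ ℂ))⁻¹ *
          Bh.map (algebraMap ℝ ℂ) + Dh.map (algebraMap ℝ ℂ))ᵀ *
        (Ch.map (algebraMap ℝ ℂ) *
          (z • (1 : Matrix (Fin n) (Fin n) ℂ) - Ah.map (algebraMap ℝ ℂ))⁻¹ *
          Bh.map (algebraMap ℝ ℂ) + Dh.map (algebraMap ℝ ℂ)) =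
      (CF.map (algebraMap ℝ ℂ) *
          (z⁻¹ • (1 : Matrix (Fin n) (Fin n) ℂ) - AF.map (algebraMap ℝ ℂ))⁻¹ *
          BF.map (algebraMap ℝ ℂ) + DF.map (algebraMap ℝ ℂ))ᵀ *
        (CF.map (algebraMap ℝ ℂ) *
          (z • (1 : Matrix (Fin n) (Fin n) ℂ) - AF.map (algebraMap ℝ ℂ))⁻¹ *
          BF.map (algebraMap ℝ ℂ) + DF.map (algebraMap ℝ ℂ))) := by
  have hHdet : IsUnit Hh.det := (isUnit_iff_isUnit_det Hh).mp hHpd.isUnit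
  have hWdet : IsUnit Wh.det := (isUnit_iff_isUnit_det Wh).mp hWpd.isUnit
  rw [hWpd.posSemidef.1.conj_diagonal_eq_cfc] at hWhalf
  subst hWhalf hAF hBF hCF hDF hQ hS hR
  refine ⟨?_, fun z hz h₁ h₂ h₃ h₄ => ?_⟩
  · rw [nonsing_inv_nonsing_inv _ hWpd.isUnit_det_cfc_sqrt, Matrix.mul_assoc,
      mul_nonsing_inv_cancel_left _ _ hWpd.isUnit_det_cfc_sqrt, Matrix.sub_mul]
    abel
  refine transferMatrix_spectral_factorization_map (algebraMap ℝ ℂ) hz hXsymm.eq hHdef ?hK ?hdareX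
    (nonsing_inv_mul _ hHdet) hWdef (nonsing_inv_mul _ hWdet) ?hWKy ?hKyW ?hdareY
    hWpd.posSemidef.transpose_inv_mul_inv_cfc_sqrt h₁ h₂ h₃ h₄
  case hK => rw [hKx, mul_nonsing_inv_cancel_left _ _ hHdet]
  case hdareX =>
    calc Chᵀ * Ch = Chᵀ * Ch + 0 := (add_zero _).symm
      _ = _ := by rw [hDAREX, hKx, ← Matrix.mul_assoc]; abel
  case hWKy =>
    rw [hKy, mul_nonsing_inv_cancel_left _ _ hWdet]
    simp only [transpose_mul, transpose_transpose, hYsymm.eq, Matrix.mul_assoc]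
  case hKyW =>
    have hWt : Whᵀ = Wh := by
      rw [← conjTranspose_eq_transpose_of_trivial]; exact hWpd.isHermitian.eq
    rw [hKy, transpose_mul, transpose_transpose, transpose_nonsing_inv, hWt, Matrix.mul_assoc,
      nonsing_inv_mul _ hWdet, Matrix.mul_one]
  case hdareY => rw [hKy, ← Matrix.mul_assoc]; exact hDAREY

/-- Discrete-time spectral factorization in transfer-function form
(Lemma A.2 of the paper): `P̂∼(z)P̂(z) = F∼(z)F(z)` and
`A_F − B_F D_F⁻¹ C_F = Â − B̂K̂ₓ`. -/
theorem spectral_factorization_transfer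
    (n q p : ℕ)
    (Ah : Matrix (Fin n) (Fin n) ℝ) (hAinv : IsUnit Ah)
    (Bh : Matrix (Fin n) (Fin q) ℝ)
    (Ch : Matrix (Fin p) (Fin n) ℝ) (Dh : Matrix (Fin p) (Fin q) ℝ)
    (Qh : Matrix (Fin n) (Fin n) ℝ) (Sh : Matrix (Fin n) (Fin q) ℝ)
    (Rh : Matrix (Fin q) (Fin q) ℝ)
    (hQ : Qh = Chᵀ * Ch) (hS : Sh = Chᵀ * Dh) (hR : Rh = Dhᵀ * Dh)
    (Xh : Matrix (Fin n) (Fin n) ℝ) (hXsymm : Xh.IsSymm)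
    (Hh : Matrix (Fin q) (Fin q) ℝ) (hHdef : Hh = Rh + Bhᵀ * Xh * Bh)
    (hHpd : Hh.PosDef)
    (hDAREX : 0 = Xh - Ahᵀ * Xh * Ah - Qh +
      (Ahᵀ * Xh * Bh + Sh) * Hh⁻¹ * (Ahᵀ * Xh * Bh + Sh)ᵀ)
    (Kx : Matrix (Fin q) (Fin n) ℝ) (hKx : Kx = Hh⁻¹ * (Ahᵀ * Xh * Bh + Sh)ᵀ)
    (Yh : Matrix (Fin n) (Fin n) ℝ) (hYsymm : Yh.IsSymm)
    (Wh : Matrix (Fin q) (Fin q) ℝ) (hWdef : Wh = Hh⁻¹ + Kx * Yh * Kxᵀ)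
    (hWpd : Wh.PosDef)
    (hDAREY : Yh = Ah * Yh * Ahᵀ - (Ah * Yh * Kxᵀ) * Wh⁻¹ * (Ah * Yh * Kxᵀ)ᵀ)
    (Ky : Matrix (Fin q) (Fin n) ℝ) (hKy : Ky = Wh⁻¹ * (Ah * Yh * Kxᵀ)ᵀ)
    (Whalf : Matrix (Fin q) (Fin q) ℝ) (hWhalf : Whalf =
      (hWpd.posSemidef.1.eigenvectorUnitary : Matrix (Fin q) (Fin q) ℝ) *
        diagonal (Real.sqrt ∘ hWpd.posSemidef.1.eigenvalues) *
        (star hWpd.posSemidef.1.eigenvectorUnitary : Matrix (Fin q) (Fin q) ℝ))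
    (AF : Matrix (Fin n) (Fin n) ℝ) (hAF : AF = Ah - Kyᵀ * Kx)
    (BF : Matrix (Fin n) (Fin q) ℝ) (hBF : BF = Bh - Kyᵀ)
    (CF : Matrix (Fin q) (Fin n) ℝ) (hCF : CF = Whalf⁻¹ * Kx)
    (DF : Matrix (Fin q) (Fin q) ℝ) (hDF : DF = Whalf⁻¹) :
    (AF - BF * DF⁻¹ * CF = Ah - Bh * Kx) ∧
    (∀ z : ℂ, z ≠ 0 →
      z ∉ spectrum ℂ (Ah.map (algebraMap ℝ ℂ)) →
      z⁻¹ ∉ spectrum ℂ (Ah.map (algebraMap ℝ ℂ)) →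
      z ∉ spectrum ℂ (AF.map (algebraMap ℝ ℂ)) →
      z⁻¹ ∉ spectrum ℂ (AF.map (algebraMap ℝ ℂ)) →
      (Ch.map (algebraMap ℝ ℂ) *
          (z⁻¹ • (1 : Matrix (Fin n) (Fin n) ℂ) - Ah.map (algebraMap ℝ ℂ))⁻¹ *
          Bh.map (algebraMap ℝ ℂ) + Dh.map (algebraMap ℝ ℂ))ᵀ *
        (Ch.map (algebraMap ℝ ℂ) *
          (z • (1 : Matrix (Fin n) (Fin n) ℂ) - Ah.map (algebraMap ℝ ℂ))⁻¹ *
          Bh.map (algebraMap ℝ ℂ) + Dh.map (algebraMap ℝ ℂ)) =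
      (CF.map (algebraMap ℝ ℂ) *
          (z⁻¹ • (1 : Matrix (Fin n) (Fin n) ℂ) - AF.map (algebraMap ℝ ℂ))⁻¹ *
          BF.map (algebraMap ℝ ℂ) + DF.map (algebraMap ℝ ℂ))ᵀ *
        (CF.map (algebraMap ℝ ℂ) *
          (z • (1 : Matrix (Fin n) (Fin n) ℂ) - AF.map (algebraMap ℝ ℂ))⁻¹ *
          BF.map (algebraMap ℝ ℂ) + DF.map (algebraMap ℝ ℂ))) :=
  spectral_factorization_transfer_general n q p Ah Bh Ch Dh Qh Sh Rh hQ hS hR Xh hXsymm Hh hHdef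
    hHpd hDAREX Kx hKx Yh hYsymm Wh hWdef hWpd hDAREY Ky hKy Whalf hWhalf AF hAF BF hBF CF hCF DF
    hDF
end
end

section
/- Let A ∈ ℝ^{n×n}, B_u ∈ ℝ^{n×m}, B_d ∈ ℝ^{n×q}, Q ∈ ℝ^{n×n} symmetric, S ∈ ℝ^{n×m}, and R ∈ ℝ^{m×m} symmetric positive definite with [[Q,S],[Sᵀ,R]] positive semidefinite. Let X be a symmetric positive semidefinite matrix with H := R + B_uᵀXB_u invertible satisfying the DARE 0 = X − AᵀXA − Q + (AᵀXB_u + S)H⁻¹(AᵀXB_u + S)ᵀ, and suppose A − B_uK_x is Schur stable and nonsingular, where K_x := H⁻¹(AᵀXB_u + S)ᵀ. If the pair ((A − B_uK_x)^{−⊤}, XB_d) is stabilizable (for every λ ∈ ℂ with |λ| ≥ 1 and every nonzero v ∈ ℂⁿ, it is not the case that v*((A − B_uK_x)^{−⊤} − λI) = 0 and v*XB_d = 0), then X is positive definite. -/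
/-!
With `A_cl = A - B_u K_x`, the DARE turns into the closed-loop Lyapunov identity
`X = A_clᵀ X A_cl + [I; -K_x]ᵀ [[Q, S], [Sᵀ, R]] [I; -K_x]`, whose last term is positive
semidefinite. Hence `ker X` is `A_cl`-invariant, so if it were nontrivial it would contain a
complex eigenvector `w` of `A_cl`, for an eigenvalue `μ` with `0 < |μ| < 1`. Then `w` is a
left eigenvector of `A_cl^{-⊤}` for `μ⁻¹`, where `|μ⁻¹| ≥ 1`, and it annihilates `X B_d`:
this violates the PBH test.
-/

open Matrix

noncomputable section

/-- A real square matrix is Schur stable if every complex eigenvalue has modulus `< 1`. -/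
def SchurStable {k : Type*} [Fintype k] [DecidableEq k] (A : Matrix k k ℝ) : Prop :=
  ∀ μ ∈ spectrum ℂ (A.map (algebraMap ℝ ℂ)), ‖μ‖ < 1

open scoped MatrixOrder ComplexOrder

section Riccati

variable {n m α : Type*} [Fintype n] [Fintype m] [DecidableEq n] [CommRing α]

/-- The stage cost `[x; u]ᵀ [[Q, S], [Sᵀ, R]] [x; u]` under the feedback `u = -K x`. -/
def closedLoopCost (Q : Matrix n n α) (S : Matrix n m α) (R : Matrix m m α) (K : Matrix m n α) :
    Matrix n n α :=
  (fromRows (1 : Matrix n n α) (-K))ᵀ * fromBlocks Q S Sᵀ R * fromRows (1 : Matrix n n α) (-K)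

theorem closedLoop_lyapunov_of_riccati {A X Q : Matrix n n α} {B S : Matrix n m α}
    {R H : Matrix m m α} {K : Matrix m n α} (hXs : Xᵀ = X) (hH : H = R + Bᵀ * X * B)
    (hHK : H * K = (Aᵀ * X * B + S)ᵀ) (hric : X = Aᵀ * X * A + Q - (Aᵀ * X * B + S) * K) :
    X = (A - B * K)ᵀ * X * (A - B * K) + closedLoopCost Q S R K := by
  have hHK' : R * K + Bᵀ * X * B * K = Bᵀ * X * A + Sᵀ := by
    rw [← Matrix.add_mul, ← hH, hHK]
    simp [transpose_mul, hXs, Matrix.mul_assoc]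
  -- `Kᵀ (H K - Lᵀ) = 0` is what cancels the cross terms `L K` and `Kᵀ Lᵀ`.
  have hcross := congrArg (Kᵀ * ·) hHK'
  rw [closedLoopCost, Matrix.mul_assoc _ (fromBlocks _ _ _ _), fromBlocks_mul_fromRows,
    transpose_fromRows, fromCols_mul_fromRows]
  conv_lhs => rw [hric]
  simp only [transpose_sub, transpose_mul, transpose_one, transpose_neg, Matrix.mul_one,
    Matrix.one_mul, Matrix.mul_neg, Matrix.neg_mul, Matrix.sub_mul, Matrix.mul_sub,
    Matrix.add_mul, Matrix.mul_add, Matrix.mul_assoc] at hcross ⊢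
  rw [eq_sub_of_add_eq hcross]
  abel

theorem dare_closedLoop_lyapunov [DecidableEq m] {A X Q : Matrix n n α} {B S : Matrix n m α}
    {R H : Matrix m m α} {K : Matrix m n α} (hXs : Xᵀ = X) (hH : H = R + Bᵀ * X * B)
    (hHinv : IsUnit H)
    (hDARE : 0 = X - Aᵀ * X * A - Q + (Aᵀ * X * B + S) * H⁻¹ * (Aᵀ * X * B + S)ᵀ)
    (hK : K = H⁻¹ * (Aᵀ * X * B + S)ᵀ) :
    X = (A - B * K)ᵀ * X * (A - B * K) + closedLoopCost Q S R K := by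
  refine closedLoop_lyapunov_of_riccati hXs hH ?_ ?_
  · rw [hK, mul_nonsing_inv_cancel_left _ _ ((isUnit_iff_isUnit_det H).mp hHinv)]
  · rw [hK, ← Matrix.mul_assoc, ← sub_eq_zero]
    convert hDARE.symm using 1
    abel

end Riccati

section Complexification

variable {n : Type*} [Fintype n] {𝕜 : Type*} [RCLike 𝕜]

theorem Matrix.PosSemidef.map_ofReal {X : Matrix n n ℝ} (hX : X.PosSemidef) :
    (X.map (algebraMap ℝ 𝕜)).PosSemidef := by
  classical
  obtain ⟨B, rfl⟩ := CStarAlgebra.nonneg_iff_eq_star_mul_self.mp hX.nonneg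
  rw [Matrix.map_mul, star_eq_conjTranspose, conjTranspose_map _ fun _ => by simp]
  exact posSemidef_conjTranspose_mul_self _

theorem Matrix.PosSemidef.mulVec_mulVec_eq_zero_of_eq_conjTranspose_mul_mul_add
    {X A M : Matrix n n 𝕜} (hX : X.PosSemidef) (hM : M.PosSemidef)
    (h : X = Aᴴ * X * A + M) {v : n → 𝕜} (hv : X *ᵥ v = 0) : X *ᵥ (A *ᵥ v) = 0 := by
  have hquad : star v ⬝ᵥ (Aᴴ * X * A) *ᵥ v = star (A *ᵥ v) ⬝ᵥ X *ᵥ (A *ᵥ v) := by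
    rw [Matrix.mul_assoc, ← mulVec_mulVec, dotProduct_mulVec, ← star_mulVec, ← mulVec_mulVec]
  have hsum : star (A *ᵥ v) ⬝ᵥ X *ᵥ (A *ᵥ v) + star v ⬝ᵥ M *ᵥ v = 0 := by
    rw [← hquad, ← dotProduct_add, ← add_mulVec, ← h, hv, dotProduct_zero]
  rw [← hX.dotProduct_mulVec_zero_iff]
  exact ((add_eq_zero_iff_of_nonneg (hX.dotProduct_mulVec_nonneg _)
    (hM.dotProduct_mulVec_nonneg _)).mp hsum).1

theorem Matrix.PosSemidef.map_mulVec_mulVec_eq_zero_of_eq_transpose_mul_mul_add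
    {X A M : Matrix n n ℝ} (hX : X.PosSemidef) (hM : M.PosSemidef) (h : X = Aᵀ * X * A + M)
    {v : n → 𝕜} (hv : X.map (algebraMap ℝ 𝕜) *ᵥ v = 0) :
    X.map (algebraMap ℝ 𝕜) *ᵥ (A.map (algebraMap ℝ 𝕜) *ᵥ v) = 0 := by
  have hconj : (A.map (algebraMap ℝ 𝕜))ᴴ = Aᵀ.map (algebraMap ℝ 𝕜) := by
    ext i j
    exact RCLike.conj_ofReal _
  refine hX.map_ofReal.mulVec_mulVec_eq_zero_of_eq_conjTranspose_mul_mul_add hM.map_ofReal ?_ hv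
  rw [hconj, ← Matrix.map_mul, ← Matrix.map_mul, ← Matrix.map_add _ (map_add _), ← h]

end Complexification

section Eigenvectors

variable {n : Type*} [Fintype n] [DecidableEq n] {K : Type*} [Field K]

theorem Module.End.exists_hasEigenvector_mem_of_invariant [IsAlgClosed K] {V : Type*}
    [AddCommGroup V] [Module K V] [FiniteDimensional K V] (f : Module.End K V)
    {p : Submodule K V} (hp : ∀ x ∈ p, f x ∈ p) (hne : p ≠ ⊥) :
    ∃ μ, ∃ x ∈ p, f.HasEigenvector μ x := by
  have : Nontrivial p := Submodule.nontrivial_iff_ne_bot.mpr hne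
  obtain ⟨μ, hμ⟩ := Module.End.exists_eigenvalue (f.restrict hp)
  obtain ⟨x, hx⟩ := hμ.exists_hasEigenvector
  refine ⟨μ, x, x.2, ?_, by simpa using hx.2⟩
  exact mem_eigenspace_iff.mpr (congrArg Subtype.val hx.apply_eq_smul)

theorem Matrix.exists_eigenvector_mem_ker_of_ker_invariant [IsAlgClosed K]
    {A X : Matrix n n K} (hinv : ∀ v, X *ᵥ v = 0 → X *ᵥ (A *ᵥ v) = 0) {v : n → K}
    (hv : v ≠ 0) (hXv : X *ᵥ v = 0) :
    ∃ μ ∈ spectrum K A, ∃ w, w ≠ 0 ∧ X *ᵥ w = 0 ∧ A *ᵥ w = μ • w := by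
  have hne : LinearMap.ker X.toLin' ≠ ⊥ :=
    fun h => hv (LinearMap.ker_eq_bot'.mp h v (by simpa using hXv))
  obtain ⟨μ, w, hwX, hw⟩ := Module.End.exists_hasEigenvector_mem_of_invariant A.toLin'
    (fun x hx => by simpa using hinv x (by simpa using hx)) hne
  refine ⟨μ, ?_, w, hw.2, by simpa using hwX, by simpa using hw.apply_eq_smul⟩
  rw [← spectrum_toLin']
  exact (Module.End.hasEigenvalue_of_hasEigenvector hw).mem_spectrum

theorem Matrix.mulVec_eq_inv_smul_of_mul_eq_one {A B : Matrix n n K} (hBA : B * A = 1) {μ : K}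
    (hμ : μ ≠ 0) {w : n → K} (hw : A *ᵥ w = μ • w) : B *ᵥ w = μ⁻¹ • w := by
  have h := congrArg (B *ᵥ ·) hw
  simp only [mulVec_mulVec, hBA, one_mulVec, mulVec_smul] at h
  exact (eq_inv_smul_iff₀ hμ).mpr h.symm

theorem Matrix.vecMul_transpose_map_inv_sub_smul_one_eq_zero {L : Type*} [Field L] (f : K →+* L)
    {A : Matrix n n K} (hA : IsUnit A) {μ : L} (hμ : μ ≠ 0) {w : n → L}
    (hw : A.map f *ᵥ w = μ • w) : w ᵥ* ((A⁻¹)ᵀ.map f - μ⁻¹ • 1) = 0 := by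
  have hinv : (A⁻¹).map f * A.map f = 1 := by
    rw [← Matrix.map_mul, nonsing_inv_mul _ ((isUnit_iff_isUnit_det _).mp hA)]
    exact Matrix.map_one _ (map_zero f) (map_one f)
  rw [transpose_map, vecMul_sub, vecMul_transpose, mulVec_eq_inv_smul_of_mul_eq_one hinv hμ hw,
    vecMul_smul, vecMul_one, sub_self]

end Eigenvectors

theorem dare_solution_posdef_of_pbh_general
    (n m q : ℕ)
    (A : Matrix (Fin n) (Fin n) ℝ) (Bu : Matrix (Fin n) (Fin m) ℝ)
    (Bd : Matrix (Fin n) (Fin q) ℝ)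
    (Q : Matrix (Fin n) (Fin n) ℝ)
    (S : Matrix (Fin n) (Fin m) ℝ)
    (R : Matrix (Fin m) (Fin m) ℝ)
    (hblk : (Matrix.fromBlocks Q S Sᵀ R).PosSemidef)
    (X : Matrix (Fin n) (Fin n) ℝ) (hX : X.PosSemidef)
    (H : Matrix (Fin m) (Fin m) ℝ) (hH : H = R + Buᵀ * X * Bu) (hHinv : IsUnit H)
    (hDARE : 0 = X - Aᵀ * X * A - Q +
      (Aᵀ * X * Bu + S) * H⁻¹ * (Aᵀ * X * Bu + S)ᵀ)
    (Kx : Matrix (Fin m) (Fin n) ℝ) (hKx : Kx = H⁻¹ * (Aᵀ * X * Bu + S)ᵀ)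
    (hschur : SchurStable (A - Bu * Kx))
    (hclinv : IsUnit (A - Bu * Kx))
    -- PBH stabilizability of ((A − BuKx)^{−⊤}, XB_d)
    (hPBH : ∀ lam : ℂ, 1 ≤ ‖lam‖ → ∀ v : Fin n → ℂ, v ≠ 0 →
      ¬ (Matrix.vecMul (star v)
            ((((A - Bu * Kx)⁻¹)ᵀ).map (algebraMap ℝ ℂ) -
              lam • (1 : Matrix (Fin n) (Fin n) ℂ)) = 0 ∧
         Matrix.vecMul (star v) ((X * Bd).map (algebraMap ℝ ℂ)) = 0)) :
    X.PosDef := by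
  set Acl := A - Bu * Kx
  set f := algebraMap ℝ ℂ
  have hXs : Xᵀ = X := hX.isHermitian
  have hcost : (closedLoopCost Q S R Kx).PosSemidef := hblk.conjTranspose_mul_mul_same _
  have hker : ∀ w, X.map f *ᵥ w = 0 → X.map f *ᵥ (Acl.map f *ᵥ w) = 0 := fun w hw =>
    hX.map_mulVec_mulVec_eq_zero_of_eq_transpose_mul_mul_add hcost
      (dare_closedLoop_lyapunov hXs hH hHinv hDARE hKx) hw
  refine hX.posDef_iff_isUnit.mpr <| (isUnit_iff_isUnit_det X).mpr <|
    isUnit_iff_ne_zero.mpr fun hdet => ?_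
  obtain ⟨v, hv, hXv⟩ := exists_mulVec_eq_zero_iff.mpr
    (show (f.mapMatrix X).det = 0 by rw [← RingHom.map_det, hdet, map_zero])
  obtain ⟨μ, hμ, w, hw, hXw, hAw⟩ := exists_eigenvector_mem_ker_of_ker_invariant hker hv hXv
  have hμ0 : μ ≠ 0 := by
    rintro rfl
    exact spectrum.zero_notMem ℂ (hclinv.map f.mapMatrix) hμ
  refine hPBH μ⁻¹ ?_ (star w) (star_ne_zero.mpr hw) ⟨?_, ?_⟩
  · rw [norm_inv, one_le_inv_iff₀]
    exact ⟨norm_pos_iff.mpr hμ0, (hschur μ hμ).le⟩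
  · rw [star_star]
    exact vecMul_transpose_map_inv_sub_smul_one_eq_zero f hclinv hμ0 hAw
  · rw [star_star, Matrix.map_mul, ← vecMul_vecMul, ← transpose_transpose (X.map f),
      vecMul_transpose, ← transpose_map, hXs, hXw, zero_vecMul]

/-- If the pair `((A − BuKx)^{−⊤}, XB_d)` is stabilizable (PBH test), then
the stabilizing DARE solution `X` is positive definite. -/
theorem dare_solution_posdef_of_pbh
    (n m q : ℕ)
    (A : Matrix (Fin n) (Fin n) ℝ) (Bu : Matrix (Fin n) (Fin m) ℝ)
    (Bd : Matrix (Fin n) (Fin q) ℝ)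
    (Q : Matrix (Fin n) (Fin n) ℝ) (hQ : Q.IsSymm)
    (S : Matrix (Fin n) (Fin m) ℝ)
    (R : Matrix (Fin m) (Fin m) ℝ) (hRsymm : R.IsSymm) (hRpd : R.PosDef)
    (hblk : (Matrix.fromBlocks Q S Sᵀ R).PosSemidef)
    (X : Matrix (Fin n) (Fin n) ℝ) (hX : X.PosSemidef)
    (H : Matrix (Fin m) (Fin m) ℝ) (hH : H = R + Buᵀ * X * Bu) (hHinv : IsUnit H)
    (hDARE : 0 = X - Aᵀ * X * A - Q +
      (Aᵀ * X * Bu + S) * H⁻¹ * (Aᵀ * X * Bu + S)ᵀ)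
    (Kx : Matrix (Fin m) (Fin n) ℝ) (hKx : Kx = H⁻¹ * (Aᵀ * X * Bu + S)ᵀ)
    (hschur : SchurStable (A - Bu * Kx))
    (hclinv : IsUnit (A - Bu * Kx))
    -- PBH stabilizability of ((A − BuKx)^{−⊤}, XB_d)
    (hPBH : ∀ lam : ℂ, 1 ≤ ‖lam‖ → ∀ v : Fin n → ℂ, v ≠ 0 →
      ¬ (Matrix.vecMul (star v)
            ((((A - Bu * Kx)⁻¹)ᵀ).map (algebraMap ℝ ℂ) -
              lam • (1 : Matrix (Fin n) (Fin n) ℂ)) = 0 ∧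
         Matrix.vecMul (star v) ((X * Bd).map (algebraMap ℝ ℂ)) = 0)) :
    X.PosDef :=
  dare_solution_posdef_of_pbh_general n m q A Bu Bd Q S R hblk X hX H hH hHinv hDARE Kx hKx hschur
    hclinv hPBH
end
end

section
/- Let X ∈ ℝ^{n×n} be symmetric positive definite, and let Â₁₁ ∈ ℝ^{n×n} be nonsingular, B_u ∈ ℝ^{n×m}, B_d ∈ ℝ^{n×q}, C_e ∈ ℝ^{p×n}, D_eu ∈ ℝ^{p×m}, K_x ∈ ℝ^{m×n}, H ∈ ℝ^{m×m} symmetric invertible, K_v := H⁻¹B_uᵀ, and γ_d > 0, γ_J ∈ ℝ. Define the block matrices Â := [[Â₁₁, −B_uK_vÂ₁₁^{−⊤}],[0, Â₁₁^{−⊤}]] ∈ ℝ^{2n×2n}, B̂ := [B_d; −XB_d] ∈ ℝ^{2n×q}, Ĉ := γ_J[[C_e − D_euK_x, −D_euK_vÂ₁₁^{−⊤}],[0,0]], Q̂ := ĈᵀĈ, and Q̃ := γ_J²Â₁₁⁻¹(X⁻¹ − Â₁₁X⁻¹Â₁₁ᵀ − B_uH⁻¹B_uᵀ)Â₁₁^{−⊤}.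 Suppose V ∈ ℝ^{n×n} is symmetric positive semidefinite and satisfies the DARE 0 = V − Â₁₁⁻¹VÂ₁₁^{−⊤} − Q̃ + (Â₁₁⁻¹VXB_d)(γ_d²I + B_dᵀXVXB_d)⁻¹(Â₁₁⁻¹VXB_d)ᵀ. Then the matrix X̂ := γ_J²[[X, I],[I, X⁻¹]] + [[0,0],[0,V]] is symmetric positive semidefinite and satisfies the DARE 0 = X̂ − ÂᵀX̂Â − Q̂ + ÂᵀX̂B̂(γ_d²I + B̂ᵀX̂B̂)⁻¹B̂ᵀX̂Â, provided additionally Â₁₁ = A − B_uK_x, H = D_euᵀD_eu + B_uᵀXB_u, K_x = H⁻¹(AᵀXB_u + C_eᵀD_eu)ᵀ, and X satisfies the DARE 0 = X − AᵀXA − C_eᵀC_e + (AᵀXB_u + C_eᵀD_eu)H⁻¹(AᵀXB_u + C_eᵀD_eu)ᵀ for some A ∈ ℝ^{n×n}. -/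
/-!
`B̂ = [B_d; -X B_d]` lies in the kernel of `P = [[X, I], [I, X⁻¹]]`, and `Â` is block upper
triangular with lower-right block `Â₁₁⁻ᵀ`. So in `X̂ = γ_J² P + diag(0, V)` only `diag(0, V)`
meets `B̂`, and with `Ĉ = γ_J Ĉ₀` the DARE residual of `X̂` is `γ_J²` times the Stein residual
`P - ÂᵀPÂ - Ĉ₀ᵀĈ₀` plus `diag(0, ·)` of the DARE residual of `V` for the pair
`(Â₁₁⁻ᵀ, -X B_d)` without its constant term.

Writing `P = Lᵀ X L` with `L = [I, X⁻¹]` turns the Stein residual into a Gram computation for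
`L Â = [Â₁₁, (X⁻¹ - B_u K_v) Â₁₁⁻ᵀ]`. The optimal gain of the original DARE gives the
closed-loop identities `Â₁₁ᵀ X Â₁₁ + C_clᵀ C_cl = X` and `Â₁₁ᵀ X B_u + C_clᵀ D_eu = 0`
(`C_cl = C_e - D_eu K_x`), and with them the Stein residual is `-diag(0, Q̃₀)` where
`Q̃ = γ_J² Q̃₀`, which supplies exactly the missing `-Q̃`. Finally `P ⪰ 0` because its Schur
complement `X⁻¹ - I X⁻¹ I` vanishes.
-/

open Matrix

noncomputable section

namespace Matrix

variable {R : Type*} {m n p q : Type*}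

section CommRing

variable [CommRing R]

def dareResidual [Fintype n] [Fintype q] [DecidableEq q] (A : Matrix n n R) (B : Matrix n q R)
    (Q X : Matrix n n R) (γ : R) : Matrix n n R :=
  X - Aᵀ * X * A - Q + Aᵀ * X * B * (γ ^ 2 • (1 : Matrix q q R) + Bᵀ * X * B)⁻¹ * Bᵀ * X * A

section Residual

variable [Fintype n] [Fintype q] [DecidableEq q]

theorem dareResidual_eq_sub (A : Matrix n n R) (B : Matrix n q R) (Q X : Matrix n n R) (γ : R) :
    dareResidual A B Q X γ = dareResidual A B 0 X γ - Q := by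
  simp only [dareResidual, sub_zero]
  abel

theorem dareResidual_add_of_mul_eq_zero {A P : Matrix n n R} {B : Matrix n q R}
    (Q X : Matrix n n R) (γ : R) (hP : Pᵀ = P) (hPB : P * B = 0) :
    dareResidual A B Q (P + X) γ = P - Aᵀ * P * A + dareResidual A B Q X γ := by
  have hXB : (P + X) * B = X * B := by rw [Matrix.add_mul, hPB, zero_add]
  have hBX : Bᵀ * (P + X) = Bᵀ * X := by
    rw [Matrix.mul_add, ← hP, ← transpose_mul, hPB, transpose_zero, zero_add]
  have hgain : ∀ (Y : Matrix n n R) (M : Matrix q q R),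
      Aᵀ * Y * B * M * Bᵀ * Y * A = Aᵀ * (Y * B) * M * (Bᵀ * Y * A) := by
    intro Y M; simp only [Matrix.mul_assoc]
  rw [dareResidual, dareResidual, hgain, hgain, hXB, hBX, Matrix.mul_add, Matrix.add_mul]
  abel

theorem dareResidual_fromBlocks_zero_zero_zero [Fintype m] (T₁ : Matrix m m R)
    (T₂ : Matrix m n R) (T₄ : Matrix n n R) (S₁ : Matrix m q R) (S₂ : Matrix n q R)
    (Q V : Matrix n n R) (γ : R) :
    dareResidual (fromBlocks T₁ T₂ 0 T₄) (fromRows S₁ S₂) (fromBlocks 0 0 0 Q)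
        (fromBlocks 0 0 0 V) γ =
      fromBlocks 0 0 0 (dareResidual T₄ S₂ Q V γ) := by
  simp [dareResidual, fromBlocks_transpose, fromBlocks_multiply, fromBlocks_mul_fromRows,
    transpose_fromRows, fromCols_mul_fromBlocks, fromRows_mul, fromCols_mul_fromRows,
    sub_eq_add_neg, fromBlocks_neg, fromBlocks_add]

theorem dareResidual_smul_add_fromBlocks_zero [Fintype m] {T₁ : Matrix m m R}
    {T₂ : Matrix m n R} {T₄ : Matrix n n R} {S₁ : Matrix m q R} {S₂ : Matrix n q R}
    {P Q : Matrix (m ⊕ n) (m ⊕ n) R} {Q₂ : Matrix n n R} (V : Matrix n n R) (c γ : R)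
    (hP : Pᵀ = P) (hPS : P * fromRows S₁ S₂ = 0)
    (hstein : P - (fromBlocks T₁ T₂ 0 T₄)ᵀ * P * fromBlocks T₁ T₂ 0 T₄ - Q =
      -fromBlocks 0 0 0 Q₂) :
    dareResidual (fromBlocks T₁ T₂ 0 T₄) (fromRows S₁ S₂) (c • Q)
        (c • P + fromBlocks 0 0 0 V) γ =
      fromBlocks 0 0 0 (dareResidual T₄ S₂ (c • Q₂) V γ) := by
  have hsmul : fromBlocks 0 0 0 (c • Q₂) =
      c • (fromBlocks 0 0 0 Q₂ : Matrix (m ⊕ n) (m ⊕ n) R) := by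
    simp [fromBlocks_smul]
  have hcP : (c • P)ᵀ = c • P := by rw [transpose_smul, hP]
  have hcPS : c • P * fromRows S₁ S₂ = 0 := by rw [Matrix.smul_mul, hPS, smul_zero]
  rw [dareResidual_add_of_mul_eq_zero (c • Q) (fromBlocks 0 0 0 V) γ hcP hcPS,
    ← dareResidual_fromBlocks_zero_zero_zero T₁ T₂ T₄ S₁ S₂, dareResidual_eq_sub _ _ (c • Q),
    dareResidual_eq_sub _ _ (fromBlocks 0 0 0 _), hsmul, Matrix.mul_smul, Matrix.smul_mul]
  linear_combination (norm := module) c • hstein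

end Residual

section ClosedLoop

variable [Fintype m] [Fintype n] [Fintype p]

theorem dare_closedLoop_orthogonal {A X : Matrix n n R} {Bu : Matrix n m R} {Ce : Matrix p n R}
    {Deu : Matrix p m R} {K : Matrix m n R} (hX : Xᵀ = X)
    (hK : (Deuᵀ * Deu + Buᵀ * X * Bu) * K = (Aᵀ * X * Bu + Ceᵀ * Deu)ᵀ) :
    (A - Bu * K)ᵀ * X * Bu + (Ce - Deu * K)ᵀ * Deu = 0 := by
  calc (A - Bu * K)ᵀ * X * Bu + (Ce - Deu * K)ᵀ * Deu
      = Aᵀ * X * Bu + Ceᵀ * Deu - ((Deuᵀ * Deu + Buᵀ * X * Bu) * K)ᵀ := by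
        simp only [transpose_sub, transpose_add, transpose_mul, transpose_transpose, hX,
          Matrix.sub_mul, Matrix.mul_add, Matrix.mul_assoc]
        abel
    _ = 0 := by rw [hK, transpose_transpose, sub_self]

theorem dare_closedLoop_lyapunov {A X : Matrix n n R} {Bu : Matrix n m R} {Ce : Matrix p n R}
    {Deu : Matrix p m R} {K : Matrix m n R} (hX : Xᵀ = X)
    (hK : (Deuᵀ * Deu + Buᵀ * X * Bu) * K = (Aᵀ * X * Bu + Ceᵀ * Deu)ᵀ)
    (hdare : 0 = X - Aᵀ * X * A - Ceᵀ * Ce + (Aᵀ * X * Bu + Ceᵀ * Deu) * K) :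
    (A - Bu * K)ᵀ * X * (A - Bu * K) + (Ce - Deu * K)ᵀ * (Ce - Deu * K) = X := by
  calc (A - Bu * K)ᵀ * X * (A - Bu * K) + (Ce - Deu * K)ᵀ * (Ce - Deu * K)
      = Aᵀ * X * A + Ceᵀ * Ce - (Aᵀ * X * Bu + Ceᵀ * Deu) * K
          - Kᵀ * ((Aᵀ * X * Bu + Ceᵀ * Deu)ᵀ - (Deuᵀ * Deu + Buᵀ * X * Bu) * K) := by
        simp only [transpose_sub, transpose_add, transpose_mul, transpose_transpose, hX,
          Matrix.sub_mul, Matrix.mul_sub, Matrix.add_mul, Matrix.mul_add, Matrix.mul_assoc]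
        abel
    _ = X := by
        rw [hK, sub_self, Matrix.mul_zero, sub_zero]
        linear_combination (norm := module) hdare

variable [DecidableEq n]

theorem gram_inv_sub_mul_mul {k : Type*} {X : Matrix n n R} {Bu : Matrix n m R}
    {Deu : Matrix p m R} {Kv : Matrix m n R} (hX : Xᵀ = X) (hXdet : IsUnit X.det)
    (hKv : (Deuᵀ * Deu + Buᵀ * X * Bu) * Kv = Buᵀ) (F : Matrix n k R) :
    ((X⁻¹ - Bu * Kv) * F)ᵀ * X * ((X⁻¹ - Bu * Kv) * F) + (Deu * Kv * F)ᵀ * (Deu * Kv * F) =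
      Fᵀ * (X⁻¹ - Bu * Kv) * F := by
  have hgram : (X⁻¹ - Bu * Kv)ᵀ * X * (X⁻¹ - Bu * Kv) + (Deu * Kv)ᵀ * (Deu * Kv) =
      X⁻¹ - Bu * Kv := by
    calc (X⁻¹ - Bu * Kv)ᵀ * X * (X⁻¹ - Bu * Kv) + (Deu * Kv)ᵀ * (Deu * Kv)
        = X⁻¹ * X * X⁻¹ - X⁻¹ * X * (Bu * Kv) - Kvᵀ * Buᵀ * (X * X⁻¹)
            + Kvᵀ * ((Deuᵀ * Deu + Buᵀ * X * Bu) * Kv) := by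
          simp only [transpose_sub, transpose_mul, transpose_nonsing_inv, hX, Matrix.mul_sub,
            Matrix.sub_mul, Matrix.add_mul, Matrix.mul_add, Matrix.mul_assoc]
          abel
      _ = X⁻¹ - Bu * Kv := by
          rw [hKv, nonsing_inv_mul _ hXdet, mul_nonsing_inv _ hXdet, Matrix.one_mul,
            Matrix.one_mul, Matrix.mul_one, sub_add_cancel]
  calc ((X⁻¹ - Bu * Kv) * F)ᵀ * X * ((X⁻¹ - Bu * Kv) * F) + (Deu * Kv * F)ᵀ * (Deu * Kv * F)
      = Fᵀ * ((X⁻¹ - Bu * Kv)ᵀ * X * (X⁻¹ - Bu * Kv) + (Deu * Kv)ᵀ * (Deu * Kv)) * F := by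
        simp only [transpose_mul, Matrix.mul_add, Matrix.add_mul, Matrix.mul_assoc]
    _ = Fᵀ * (X⁻¹ - Bu * Kv) * F := by rw [hgram]

theorem closedLoop_cross_eq_one {A X : Matrix n n R} {Bu : Matrix n m R} {Cl : Matrix p n R}
    {Deu : Matrix p m R} {Kv : Matrix m n R} (hXdet : IsUnit X.det) (hAdet : IsUnit A.det)
    (horth : Aᵀ * X * Bu + Clᵀ * Deu = 0) :
    Aᵀ * X * ((X⁻¹ - Bu * Kv) * (A⁻¹)ᵀ) + Clᵀ * -(Deu * Kv * (A⁻¹)ᵀ) = 1 := by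
  calc Aᵀ * X * ((X⁻¹ - Bu * Kv) * (A⁻¹)ᵀ) + Clᵀ * -(Deu * Kv * (A⁻¹)ᵀ)
      = Aᵀ * (X * X⁻¹) * (A⁻¹)ᵀ - (Aᵀ * X * Bu + Clᵀ * Deu) * Kv * (A⁻¹)ᵀ := by
        simp only [Matrix.mul_sub, Matrix.sub_mul, Matrix.add_mul, Matrix.mul_neg,
          Matrix.mul_assoc]
        abel
    _ = 1 := by
        rw [horth, mul_nonsing_inv _ hXdet, Matrix.mul_one, ← transpose_mul,
          nonsing_inv_mul _ hAdet, transpose_one, Matrix.zero_mul, Matrix.zero_mul, sub_zero]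

end ClosedLoop

theorem transpose_fromCols_mul_mul_fromCols [Fintype p] (M : Matrix p p R) (a : Matrix p m R)
    (b : Matrix p n R) :
    (fromCols a b)ᵀ * M * fromCols a b =
      fromBlocks (aᵀ * M * a) (aᵀ * M * b) (bᵀ * M * a) (bᵀ * M * b) := by
  rw [transpose_fromCols, fromRows_mul, fromRows_mul_fromCols]

section Augmented

variable [Fintype n] [DecidableEq n]

theorem fromBlocks_self_one_one_inv_eq {X : Matrix n n R} (hX : Xᵀ = X) (hXdet : IsUnit X.det) :
    fromBlocks X 1 1 X⁻¹ = (fromCols 1 X⁻¹)ᵀ * X * fromCols 1 X⁻¹ := by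
  rw [transpose_fromCols_mul_mul_fromCols, transpose_nonsing_inv, hX]
  simp [mul_nonsing_inv _ hXdet, nonsing_inv_mul _ hXdet]

theorem isSymm_fromBlocks_self_one_one_inv {X : Matrix n n R} (hX : Xᵀ = X) :
    (fromBlocks X 1 1 X⁻¹).IsSymm := by
  rw [IsSymm, fromBlocks_transpose, transpose_one, transpose_nonsing_inv, hX]

theorem fromBlocks_self_one_one_inv_mul_fromRows [Fintype q] {X : Matrix n n R}
    (hXdet : IsUnit X.det) (B : Matrix n q R) :
    fromBlocks X 1 1 X⁻¹ * fromRows B (-(X * B)) = 0 := by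
  simp [fromBlocks_mul_fromRows, nonsing_inv_mul_cancel_left _ _ hXdet]

theorem stein_fromBlocks_self_one_one_inv [Fintype m] [Fintype p] [Fintype q]
    {A X : Matrix n n R} {Bu : Matrix n m R} {Cl : Matrix p n R} {Deu : Matrix p m R}
    {Kv : Matrix m n R} (hX : Xᵀ = X) (hXdet : IsUnit X.det) (hAdet : IsUnit A.det)
    (horth : Aᵀ * X * Bu + Clᵀ * Deu = 0) (hlyap : Aᵀ * X * A + Clᵀ * Cl = X)
    (hKv : (Deuᵀ * Deu + Buᵀ * X * Bu) * Kv = Buᵀ) :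
    fromBlocks X 1 1 X⁻¹
        - (fromBlocks A (-(Bu * Kv * (A⁻¹)ᵀ)) 0 (A⁻¹)ᵀ)ᵀ * fromBlocks X 1 1 X⁻¹ *
          fromBlocks A (-(Bu * Kv * (A⁻¹)ᵀ)) 0 (A⁻¹)ᵀ
        - (fromBlocks Cl (-(Deu * Kv * (A⁻¹)ᵀ)) (0 : Matrix q n R) 0)ᵀ *
          fromBlocks Cl (-(Deu * Kv * (A⁻¹)ᵀ)) (0 : Matrix q n R) 0 =
      -fromBlocks 0 0 0 (A⁻¹ * (X⁻¹ - A * X⁻¹ * Aᵀ - Bu * Kv) * (A⁻¹)ᵀ) := by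
  set T := fromBlocks A (-(Bu * Kv * (A⁻¹)ᵀ)) 0 (A⁻¹)ᵀ
  set b := (X⁻¹ - Bu * Kv) * (A⁻¹)ᵀ with hb
  set d := -(Deu * Kv * (A⁻¹)ᵀ) with hd
  have hAT : Aᵀ * (A⁻¹)ᵀ = 1 := by rw [← transpose_mul, nonsing_inv_mul _ hAdet, transpose_one]
  have hLT : fromCols (1 : Matrix n n R) X⁻¹ * T = fromCols A b := by
    rw [fromCols_mul_fromBlocks, hb]
    simp only [Matrix.one_mul, Matrix.mul_zero, add_zero, Matrix.sub_mul, Matrix.mul_assoc]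
    rw [neg_add_eq_sub]
  have hcross : Aᵀ * X * b + Clᵀ * d = 1 := closedLoop_cross_eq_one hXdet hAdet horth
  have hcross' : bᵀ * X * A + dᵀ * Cl = 1 := by
    rw [← transpose_one, ← hcross]
    simp only [transpose_add, transpose_mul, transpose_transpose, hX, Matrix.mul_assoc]
  have hdiag : bᵀ * X * b + dᵀ * d = X⁻¹ + A⁻¹ * (X⁻¹ - A * X⁻¹ * Aᵀ - Bu * Kv) * (A⁻¹)ᵀ := by
    have hconj : A⁻¹ * (A * X⁻¹ * Aᵀ) * (A⁻¹)ᵀ = X⁻¹ := by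
      rw [← Matrix.mul_assoc, ← Matrix.mul_assoc, nonsing_inv_mul _ hAdet, Matrix.one_mul,
        Matrix.mul_assoc, hAT, Matrix.mul_one]
    rw [hd, transpose_neg, Matrix.neg_mul, Matrix.mul_neg, neg_neg,
      gram_inv_sub_mul_mul hX hXdet hKv, transpose_transpose]
    nth_rewrite 2 [← hconj]
    simp only [Matrix.mul_sub, Matrix.sub_mul]
    abel
  have hsum : Tᵀ * fromBlocks X 1 1 X⁻¹ * T
        + (fromBlocks Cl d (0 : Matrix q n R) 0)ᵀ * fromBlocks Cl d (0 : Matrix q n R) 0 =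
      fromBlocks X 1 1 X⁻¹ + fromBlocks 0 0 0 (A⁻¹ * (X⁻¹ - A * X⁻¹ * Aᵀ - Bu * Kv) * (A⁻¹)ᵀ) := by
    rw [fromBlocks_self_one_one_inv_eq hX hXdet, ← Matrix.mul_assoc, ← Matrix.mul_assoc,
      ← transpose_mul, Matrix.mul_assoc, hLT, transpose_fromCols_mul_mul_fromCols,
      ← fromBlocks_self_one_one_inv_eq hX hXdet, fromBlocks_transpose, fromBlocks_multiply]
    simp only [transpose_zero, Matrix.mul_zero, add_zero, fromBlocks_add, hlyap,
      hcross, hcross', hdiag]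
  rw [sub_sub, hsum, sub_add_cancel_left]

end Augmented

end CommRing

section Positivity

variable [Fintype n] [DecidableEq n]

theorem PosSemidef.fromBlocks_zero_zero_zero [Ring R] [PartialOrder R] [StarRing R]
    [StarOrderedRing R] [Fintype m] {V : Matrix n n R} (hV : V.PosSemidef) :
    (fromBlocks 0 0 0 V : Matrix (m ⊕ n) (m ⊕ n) R).PosSemidef := by
  rw [← fromCols_fromRows_eq_fromBlocks, fromRows_zero]
  simpa [conjTranspose_fromCols_eq_fromRows_conjTranspose, fromRows_mul, fromRows_mul_fromCols]
    using hV.conjTranspose_mul_mul_same (fromCols (0 : Matrix n m R) (1 : Matrix n n R))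

theorem posSemidef_fromBlocks_self_one_one_inv [Field R] [PartialOrder R] [StarRing R]
    [StarOrderedRing R] {X : Matrix n n R} (hX : X.PosDef) :
    (fromBlocks X 1 1 X⁻¹).PosSemidef := by
  have := hX.isUnit.invertible
  simpa using (PosDef.fromBlocks₁₁ (1 : Matrix n n R) X⁻¹ hX).2 (by simpa using PosSemidef.zero)

end Positivity

end Matrix

theorem augmented_dare_structured_solution_general
    (n m q p : ℕ)
    (X : Matrix (Fin n) (Fin n) ℝ) (hXpd : X.PosDef)
    (A11 : Matrix (Fin n) (Fin n) ℝ) (hA11inv : IsUnit A11)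
    (Bu : Matrix (Fin n) (Fin m) ℝ) (Bd : Matrix (Fin n) (Fin q) ℝ)
    (Ce : Matrix (Fin p) (Fin n) ℝ) (Deu : Matrix (Fin p) (Fin m) ℝ)
    (Kx : Matrix (Fin m) (Fin n) ℝ)
    (H : Matrix (Fin m) (Fin m) ℝ) (hHinv : IsUnit H)
    (Kv : Matrix (Fin m) (Fin n) ℝ) (hKv : Kv = H⁻¹ * Buᵀ)
    (γd γJ : ℝ)
    (Ah : Matrix ((Fin n) ⊕ (Fin n)) ((Fin n) ⊕ (Fin n)) ℝ)
    (hAh : Ah = Matrix.fromBlocks A11 (-(Bu * Kv * (A11⁻¹)ᵀ)) 0 ((A11⁻¹)ᵀ))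
    (Bh : Matrix ((Fin n) ⊕ (Fin n)) (Fin q) ℝ)
    (hBh : Bh = Matrix.fromRows Bd (-(X * Bd)))
    (Chm : Matrix ((Fin p) ⊕ (Fin q)) ((Fin n) ⊕ (Fin n)) ℝ)
    (hCh : Chm = γJ • Matrix.fromBlocks (Ce - Deu * Kx) (-(Deu * Kv * (A11⁻¹)ᵀ)) 0 0)
    (Qh : Matrix ((Fin n) ⊕ (Fin n)) ((Fin n) ⊕ (Fin n)) ℝ) (hQh : Qh = Chmᵀ * Chm)
    (Qt : Matrix (Fin n) (Fin n) ℝ)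
    (hQt : Qt = γJ ^ 2 •
      (A11⁻¹ * (X⁻¹ - A11 * X⁻¹ * A11ᵀ - Bu * H⁻¹ * Buᵀ) * (A11⁻¹)ᵀ))
    (V : Matrix (Fin n) (Fin n) ℝ) (hV : V.PosSemidef)
    (hVdare : 0 = V - A11⁻¹ * V * (A11⁻¹)ᵀ - Qt +
      (A11⁻¹ * V * X * Bd) *
        (γd ^ 2 • (1 : Matrix (Fin q) (Fin q) ℝ) + Bdᵀ * X * V * X * Bd)⁻¹ *
        (A11⁻¹ * V * X * Bd)ᵀ)
    -- relations to the original DARE data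
    (A : Matrix (Fin n) (Fin n) ℝ)
    (hA11def : A11 = A - Bu * Kx)
    (hHdef : H = Deuᵀ * Deu + Buᵀ * X * Bu)
    (hKxdef : Kx = H⁻¹ * (Aᵀ * X * Bu + Ceᵀ * Deu)ᵀ)
    (hXdare : 0 = X - Aᵀ * X * A - Ceᵀ * Ce +
      (Aᵀ * X * Bu + Ceᵀ * Deu) * H⁻¹ * (Aᵀ * X * Bu + Ceᵀ * Deu)ᵀ)
    (Xh : Matrix ((Fin n) ⊕ (Fin n)) ((Fin n) ⊕ (Fin n)) ℝ)
    (hXh : Xh = γJ ^ 2 • Matrix.fromBlocks X 1 1 X⁻¹ + Matrix.fromBlocks 0 0 0 V) :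
    Xh.PosSemidef ∧
    0 = Xh - Ahᵀ * Xh * Ah - Qh +
      Ahᵀ * Xh * Bh *
        (γd ^ 2 • (1 : Matrix (Fin q) (Fin q) ℝ) + Bhᵀ * Xh * Bh)⁻¹ *
        Bhᵀ * Xh * Ah := by
  have hXs : Xᵀ = X := by simpa using hXpd.isHermitian.eq
  have hVs : Vᵀ = V := by simpa using hV.isHermitian.eq
  have hXdet : IsUnit X.det := (isUnit_iff_isUnit_det X).mp hXpd.isUnit
  have hHdet : IsUnit H.det := (isUnit_iff_isUnit_det H).mp hHinv
  have hHKx : (Deuᵀ * Deu + Buᵀ * X * Bu) * Kx = (Aᵀ * X * Bu + Ceᵀ * Deu)ᵀ := by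
    rw [← hHdef, hKxdef, mul_nonsing_inv_cancel_left _ _ hHdet]
  have hHKv : (Deuᵀ * Deu + Buᵀ * X * Bu) * Kv = Buᵀ := by
    rw [← hHdef, hKv, mul_nonsing_inv_cancel_left _ _ hHdet]
  have hdare : 0 = X - Aᵀ * X * A - Ceᵀ * Ce + (Aᵀ * X * Bu + Ceᵀ * Deu) * Kx := by
    rwa [hKxdef, ← Matrix.mul_assoc]
  have horth := dare_closedLoop_orthogonal hXs hHKx
  have hlyap := dare_closedLoop_lyapunov hXs hHKx hdare
  rw [← hA11def] at horth hlyap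
  refine ⟨hXh ▸ ((posSemidef_fromBlocks_self_one_one_inv hXpd).smul (sq_nonneg γJ)).add
    hV.fromBlocks_zero_zero_zero, ?_⟩
  have hVres : dareResidual (A11⁻¹)ᵀ (-(X * Bd)) Qt V γd = 0 := by
    simp only [dareResidual, transpose_transpose, transpose_neg, transpose_mul, hXs, hVs,
      Matrix.mul_neg, Matrix.neg_mul, neg_neg, Matrix.mul_assoc] at hVdare ⊢
    exact hVdare.symm
  have hQt' : Qt = γJ ^ 2 • (A11⁻¹ * (X⁻¹ - A11 * X⁻¹ * A11ᵀ - Bu * Kv) * (A11⁻¹)ᵀ) := by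
    rw [hQt, hKv, Matrix.mul_assoc Bu]
  have hres := dareResidual_smul_add_fromBlocks_zero V (γJ ^ 2) γd
    (isSymm_fromBlocks_self_one_one_inv hXs).eq
    (fromBlocks_self_one_one_inv_mul_fromRows hXdet Bd)
    (stein_fromBlocks_self_one_one_inv (q := Fin q) hXs hXdet
      ((isUnit_iff_isUnit_det A11).mp hA11inv) horth hlyap hHKv)
  rw [← hQt', hVres, fromBlocks_zero] at hres
  rw [hAh, hBh, hXh, hQh, hCh, transpose_smul, Matrix.smul_mul, Matrix.mul_smul, smul_smul, ← sq]
  exact hres.symm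

/-- The structured solution `X̂` of the augmented DARE (used to show that the
spectral factor has a minimal realization of state dimension `n`). -/
theorem augmented_dare_structured_solution
    (n m q p : ℕ)
    (X : Matrix (Fin n) (Fin n) ℝ) (hXpd : X.PosDef)
    (A11 : Matrix (Fin n) (Fin n) ℝ) (hA11inv : IsUnit A11)
    (Bu : Matrix (Fin n) (Fin m) ℝ) (Bd : Matrix (Fin n) (Fin q) ℝ)
    (Ce : Matrix (Fin p) (Fin n) ℝ) (Deu : Matrix (Fin p) (Fin m) ℝ)
    (Kx : Matrix (Fin m) (Fin n) ℝ)
    (H : Matrix (Fin m) (Fin m) ℝ) (hHsymm : H.IsSymm) (hHinv : IsUnit H)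
    (Kv : Matrix (Fin m) (Fin n) ℝ) (hKv : Kv = H⁻¹ * Buᵀ)
    (γd γJ : ℝ) (hγd : 0 < γd)
    (Ah : Matrix ((Fin n) ⊕ (Fin n)) ((Fin n) ⊕ (Fin n)) ℝ)
    (hAh : Ah = Matrix.fromBlocks A11 (-(Bu * Kv * (A11⁻¹)ᵀ)) 0 ((A11⁻¹)ᵀ))
    (Bh : Matrix ((Fin n) ⊕ (Fin n)) (Fin q) ℝ)
    (hBh : Bh = Matrix.fromRows Bd (-(X * Bd)))
    (Chm : Matrix ((Fin p) ⊕ (Fin q)) ((Fin n) ⊕ (Fin n)) ℝ)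
    (hCh : Chm = γJ • Matrix.fromBlocks (Ce - Deu * Kx) (-(Deu * Kv * (A11⁻¹)ᵀ)) 0 0)
    (Qh : Matrix ((Fin n) ⊕ (Fin n)) ((Fin n) ⊕ (Fin n)) ℝ) (hQh : Qh = Chmᵀ * Chm)
    (Qt : Matrix (Fin n) (Fin n) ℝ)
    (hQt : Qt = γJ ^ 2 •
      (A11⁻¹ * (X⁻¹ - A11 * X⁻¹ * A11ᵀ - Bu * H⁻¹ * Buᵀ) * (A11⁻¹)ᵀ))
    (V : Matrix (Fin n) (Fin n) ℝ) (hV : V.PosSemidef)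
    (hVdare : 0 = V - A11⁻¹ * V * (A11⁻¹)ᵀ - Qt +
      (A11⁻¹ * V * X * Bd) *
        (γd ^ 2 • (1 : Matrix (Fin q) (Fin q) ℝ) + Bdᵀ * X * V * X * Bd)⁻¹ *
        (A11⁻¹ * V * X * Bd)ᵀ)
    -- relations to the original DARE data
    (A : Matrix (Fin n) (Fin n) ℝ)
    (hA11def : A11 = A - Bu * Kx)
    (hHdef : H = Deuᵀ * Deu + Buᵀ * X * Bu)
    (hKxdef : Kx = H⁻¹ * (Aᵀ * X * Bu + Ceᵀ * Deu)ᵀ)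
    (hXdare : 0 = X - Aᵀ * X * A - Ceᵀ * Ce +
      (Aᵀ * X * Bu + Ceᵀ * Deu) * H⁻¹ * (Aᵀ * X * Bu + Ceᵀ * Deu)ᵀ)
    (Xh : Matrix ((Fin n) ⊕ (Fin n)) ((Fin n) ⊕ (Fin n)) ℝ)
    (hXh : Xh = γJ ^ 2 • Matrix.fromBlocks X 1 1 X⁻¹ + Matrix.fromBlocks 0 0 0 V) :
    Xh.PosSemidef ∧
    0 = Xh - Ahᵀ * Xh * Ah - Qh +
      Ahᵀ * Xh * Bh *
        (γd ^ 2 • (1 : Matrix (Fin q) (Fin q) ℝ) + Bhᵀ * Xh * Bh)⁻¹ *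
        Bhᵀ * Xh * Ah :=
  augmented_dare_structured_solution_general n m q p X hXpd A11 hA11inv Bu Bd Ce Deu Kx H hHinv Kv
    hKv γd γJ Ah hAh Bh hBh Chm hCh Qh hQh Qt hQt V hV hVdare A hA11def hHdef hKxdef hXdare Xh hXh
end
end

section
/- Let Â ∈ ℝ^{n×n} be invertible, let Ĥ ∈ ℝ^{q×q} be symmetric positive definite, let K̂_x ∈ ℝ^{q×n}, and let Ŷ ∈ ℝ^{n×n} be symmetric with Ŵ := Ĥ⁻¹ + K̂_xŶK̂_xᵀ invertible, satisfying the DARE Ŷ = ÂŶÂᵀ − (ÂŶK̂_xᵀ)Ŵ⁻¹(ÂŶK̂_xᵀ)ᵀ. Define K̂_y := Ŵ⁻¹K̂_xŶÂᵀ. Then ŶÂ^{−⊤}K̂_xᵀĤ = K̂_yᵀ. -/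
/-!
Since `Ŷ` and `Ŵ` are symmetric, the DARE factors as `Ŷ = Â P Âᵀ` with
`P = Ŷ - Ŷ K̂ₓᵀ Ŵ⁻¹ K̂ₓ Ŷ`, so `Ŷ Â^{−⊤} = Â P`. Writing `K̂ₓ Ŷ K̂ₓᵀ = Ŵ - Ĥ⁻¹` gives
`P K̂ₓᵀ Ĥ = Ŷ K̂ₓᵀ (1 - Ŵ⁻¹ (Ŵ - Ĥ⁻¹)) Ĥ = Ŷ K̂ₓᵀ Ŵ⁻¹`, and `Â Ŷ K̂ₓᵀ Ŵ⁻¹` is `K̂_yᵀ`.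
-/

open Matrix

namespace Matrix

variable {m n p R : Type*} [Fintype n] [CommRing R]

theorem isSymm_mul_mul_transpose {A : Matrix n n R} (B : Matrix m n R) (hA : A.IsSymm) :
    (B * A * Bᵀ).IsSymm := by
  simp only [IsSymm, transpose_mul, transpose_transpose, hA.eq, Matrix.mul_assoc]

theorem IsSymm.mul_mul_transpose_sub_mul_mul_transpose [Fintype m] {Y : Matrix n n R}
    (hY : Y.IsSymm) (A : Matrix p n R) (K : Matrix m n R) (V : Matrix m m R) :
    A * Y * Aᵀ - (A * Y * Kᵀ) * V * (A * Y * Kᵀ)ᵀ = A * (Y - Y * Kᵀ * V * (K * Y)) * Aᵀ := by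
  simp only [transpose_mul, transpose_transpose, hY.eq, Matrix.mul_sub, Matrix.sub_mul,
    Matrix.mul_assoc]

theorem one_sub_inv_mul_eq_inv_mul_of_eq_add [DecidableEq n] {W P Q : Matrix n n R}
    (hW : IsUnit W) (h : W = P + Q) : 1 - W⁻¹ * Q = W⁻¹ * P := by
  rw [eq_sub_of_add_eq h.symm, Matrix.mul_sub,
    nonsing_inv_mul W ((isUnit_iff_isUnit_det W).mp hW)]

/-- The Kalman-filter identity `P⁺ Kᵀ R⁻¹ = Y Kᵀ (R + K Y Kᵀ)⁻¹` for the updated covariance `P⁺`,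
with `R = H⁻¹`. -/
theorem sub_mul_transpose_inv_mul_mul_mul_transpose_mul [Fintype m] [DecidableEq m]
    {Y : Matrix n n R} {K : Matrix m n R} {H W : Matrix m m R} (hH : IsUnit H) (hW : IsUnit W)
    (hWdef : W = H⁻¹ + K * Y * Kᵀ) :
    (Y - Y * Kᵀ * W⁻¹ * (K * Y)) * Kᵀ * H = Y * Kᵀ * W⁻¹ :=
  calc (Y - Y * Kᵀ * W⁻¹ * (K * Y)) * Kᵀ * H = Y * Kᵀ * ((1 - W⁻¹ * (K * Y * Kᵀ)) * H) := by
        simp only [Matrix.sub_mul, Matrix.mul_sub, Matrix.one_mul, Matrix.mul_assoc]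
    _ = Y * Kᵀ * (W⁻¹ * (H⁻¹ * H)) := by
        rw [one_sub_inv_mul_eq_inv_mul_of_eq_add hW hWdef, Matrix.mul_assoc W⁻¹]
    _ = Y * Kᵀ * W⁻¹ := by
        rw [nonsing_inv_mul H ((isUnit_iff_isUnit_det H).mp hH), Matrix.mul_one]

end Matrix

/-- The key algebraic identity relating the two Riccati solutions in the
construction of the discrete-time spectral factor:
`Ŷ Â^{−⊤} K̂ₓᵀ Ĥ = K̂_yᵀ`. -/
theorem riccati_gain_identity
    (n q : ℕ)
    (Ah : Matrix (Fin n) (Fin n) ℝ) (hAinv : IsUnit Ah)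
    (Hh : Matrix (Fin q) (Fin q) ℝ) (hHpd : Hh.PosDef)
    (Kx : Matrix (Fin q) (Fin n) ℝ)
    (Yh : Matrix (Fin n) (Fin n) ℝ) (hYsymm : Yh.IsSymm)
    (Wh : Matrix (Fin q) (Fin q) ℝ) (hWdef : Wh = Hh⁻¹ + Kx * Yh * Kxᵀ)
    (hWinv : IsUnit Wh)
    (hDAREY : Yh = Ah * Yh * Ahᵀ - (Ah * Yh * Kxᵀ) * Wh⁻¹ * (Ah * Yh * Kxᵀ)ᵀ)
    (Ky : Matrix (Fin q) (Fin n) ℝ) (hKy : Ky = Wh⁻¹ * Kx * Yh * Ahᵀ) :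
    Yh * (Ah⁻¹)ᵀ * Kxᵀ * Hh = Kyᵀ := by
  have hHsymm : Hh.IsSymm := isHermitian_iff_isSymm.mp hHpd.isHermitian
  have hWsymm : Wh.IsSymm := hWdef ▸ hHsymm.inv.add (isSymm_mul_mul_transpose Kx hYsymm)
  have hAtdet : IsUnit Ahᵀ.det := by rwa [det_transpose, ← isUnit_iff_isUnit_det]
  have hYA : Yh * (Ahᵀ)⁻¹ = Ah * (Yh - Yh * Kxᵀ * Wh⁻¹ * (Kx * Yh)) := by
    rw [← mul_nonsing_inv_cancel_right _ (Ah * _) hAtdet,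
      ← hYsymm.mul_mul_transpose_sub_mul_mul_transpose, ← hDAREY]
  calc Yh * (Ah⁻¹)ᵀ * Kxᵀ * Hh
      = Ah * ((Yh - Yh * Kxᵀ * Wh⁻¹ * (Kx * Yh)) * Kxᵀ * Hh) := by
        rw [transpose_nonsing_inv, hYA]; simp only [Matrix.mul_assoc]
    _ = Ah * (Yh * Kxᵀ * Wh⁻¹) := by
        rw [sub_mul_transpose_inv_mul_mul_mul_transpose_mul hHpd.isUnit hWinv hWdef]
    _ = Kyᵀ := by
        rw [hKy]
        simp only [transpose_mul, transpose_nonsing_inv, hWsymm.eq, hYsymm.eq,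
          transpose_transpose, Matrix.mul_assoc]
end

section
/- Let M ∈ ℂ^{p×q} be nonzero. Then there exists a rank-one matrix Δ ∈ ℂ^{q×p} with σ̄(Δ) = σ̄(M)⁻¹ such that I_p − MΔ is singular. Explicitly, if u ∈ ℂ^p and v ∈ ℂ^q are unit singular vectors with Mv = σ̄(M)u, then Δ := σ̄(M)⁻¹ v u* satisfies (I − MΔ)u = 0 and σ̄(Δ) = σ̄(M)⁻¹. In particular, if σ̄(M) ≥ 1 then there exists Δ with σ̄(Δ) ≤ 1 and det(I − MΔ) = 0. -/
/-!
The operator norm of a matrix is attained on the compact unit sphere, which yields unit singular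
vectors `u`, `v` with `M v = σ̄(M) u`. The perturbation `Δ = σ̄(M)⁻¹ v u*` maps `u` to `σ̄(M)⁻¹ v`,
so `M Δ u = u`; as an operator it is `x ↦ σ̄(M)⁻¹ ⟪u, x⟫ v`, whose norm is `σ̄(M)⁻¹ ‖u‖ ‖v‖`.
-/

open Matrix

noncomputable section

/-- Largest singular value (operator 2-norm) of a complex matrix. -/
def sigmaMax {k l : Type*} [Fintype k] [Fintype l] [DecidableEq k] [DecidableEq l]
    (M : Matrix k l ℂ) : ℝ :=
  ‖LinearMap.toContinuousLinearMap (Matrix.toEuclideanLin M)‖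

theorem ContinuousLinearMap.exists_norm_eq_one_and_norm_apply_eq_opNorm
    {𝕜 E F : Type*} [RCLike 𝕜] [NormedAddCommGroup E] [NormedSpace 𝕜 E] [FiniteDimensional 𝕜 E]
    [Nontrivial E] [SeminormedAddCommGroup F] [NormedSpace 𝕜 F] (f : E →L[𝕜] F) :
    ∃ x, ‖x‖ = 1 ∧ ‖f x‖ = ‖f‖ := by
  have : ProperSpace E := FiniteDimensional.proper_rclike 𝕜 E
  have : NormedSpace ℝ E := NormedSpace.restrictScalars ℝ 𝕜 E
  obtain ⟨x, hx, hfx⟩ := (isCompact_sphere (0 : E) 1).exists_sSup_image_eq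
    (NormedSpace.sphere_nonempty.2 zero_le_one) f.continuous.norm.continuousOn
  exact ⟨x, mem_sphere_zero_iff_norm.1 hx, hfx ▸ f.sSup_sphere_eq_norm⟩

theorem Matrix.star_dotProduct_self_eq_norm_sq {𝕜 ι : Type*} [RCLike 𝕜] [Fintype ι] (u : ι → 𝕜) :
    star u ⬝ᵥ u = (‖WithLp.toLp 2 u‖ : 𝕜) ^ 2 := by
  rw [← inner_self_eq_norm_sq_to_K, EuclideanSpace.inner_toLp_toLp, dotProduct_comm]

theorem Matrix.star_dotProduct_self_eq_one_iff {𝕜 ι : Type*} [RCLike 𝕜] [Fintype ι] (u : ι → 𝕜) :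
    star u ⬝ᵥ u = 1 ↔ ‖WithLp.toLp 2 u‖ = 1 := by
  rw [star_dotProduct_self_eq_norm_sq]
  norm_cast
  exact pow_eq_one_iff_of_nonneg (norm_nonneg _) two_ne_zero

theorem Matrix.rank_eq_zero_iff {K m n : Type*} [Field K] [Fintype n] {A : Matrix m n K} :
    A.rank = 0 ↔ A = 0 := by
  classical
  rw [rank, Submodule.finrank_eq_zero, LinearMap.range_eq_bot, ← toLin'_apply',
    LinearEquiv.map_eq_zero_iff]

theorem Matrix.rank_vecMulVec_eq_one {K m n : Type*} [Field K] [Fintype n] {w : m → K} {v : n → K}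
    (hw : w ≠ 0) (hv : v ≠ 0) : (vecMulVec w v).rank = 1 :=
  le_antisymm (rank_vecMulVec_le w v) <| Nat.one_le_iff_ne_zero.2 <|
    rank_eq_zero_iff.not.2 fun h => by
      obtain ⟨i, hi⟩ := Function.ne_iff.1 hw
      obtain ⟨j, hj⟩ := Function.ne_iff.1 hv
      exact mul_ne_zero hi hj (congrFun₂ h i j)

theorem Matrix.one_sub_mul_smul_vecMulVec_mulVec {K m n : Type*} [Field K] [Fintype m]
    [DecidableEq m] [Fintype n] {M : Matrix m n K} {u w : m → K} {v : n → K} {σ : K}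
    (hσ : σ ≠ 0) (hwu : w ⬝ᵥ u = 1) (hMv : M *ᵥ v = σ • u) :
    (1 - M * (σ⁻¹ • vecMulVec v w)) *ᵥ u = 0 := by
  rw [sub_mulVec, one_mulVec, ← mulVec_mulVec, smul_mulVec, vecMulVec_mulVec, hwu,
    MulOpposite.op_one, one_smul, mulVec_smul, hMv, smul_smul, inv_mul_cancel₀ hσ, one_smul,
    sub_self]

section sigmaMax

variable {k l : Type*} [Fintype k] [Fintype l] [DecidableEq k] [DecidableEq l]

theorem sigmaMax_pos {M : Matrix k l ℂ} (hM : M ≠ 0) : 0 < sigmaMax M := by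
  rw [sigmaMax, norm_pos_iff]
  exact fun h => hM (by simpa using h)

theorem sigmaMax_smul (c : ℂ) (M : Matrix k l ℂ) : sigmaMax (c • M) = ‖c‖ * sigmaMax M := by
  rw [sigmaMax, sigmaMax, map_smul, map_smul, norm_smul]

theorem sigmaMax_vecMulVec_star (v : k → ℂ) (u : l → ℂ) :
    sigmaMax (vecMulVec v (star u)) = ‖WithLp.toLp 2 u‖ * ‖WithLp.toLp 2 v‖ := by
  have : LinearMap.toContinuousLinearMap (toEuclideanLin (vecMulVec v (star u))) =
      (innerSL ℂ (WithLp.toLp 2 u)).smulRight (WithLp.toLp 2 v) := by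
    ext x i
    simp [vecMulVec_mulVec, EuclideanSpace.inner_eq_star_dotProduct, dotProduct_comm, mul_comm]
  rw [sigmaMax, this, ContinuousLinearMap.norm_smulRight_apply, innerSL_apply_norm]

theorem sigmaMax_smul_vecMulVec_star_of_unit (c : ℂ) {v : k → ℂ} {u : l → ℂ}
    (hv : star v ⬝ᵥ v = 1) (hu : star u ⬝ᵥ u = 1) : sigmaMax (c • vecMulVec v (star u)) = ‖c‖ := by
  rw [sigmaMax_smul, sigmaMax_vecMulVec_star, (star_dotProduct_self_eq_one_iff u).1 hu,
    (star_dotProduct_self_eq_one_iff v).1 hv, mul_one, mul_one]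

theorem exists_unit_singular_vectors {M : Matrix k l ℂ} (hM : M ≠ 0) :
    ∃ (u : k → ℂ) (v : l → ℂ), star u ⬝ᵥ u = 1 ∧ star v ⬝ᵥ v = 1 ∧
      M *ᵥ v = (sigmaMax M : ℂ) • u := by
  obtain ⟨j, -⟩ : ∃ j : l, ∃ i : k, M i j ≠ 0 := by
    by_contra! h
    exact hM (Matrix.ext fun i j => h j i)
  have : Nonempty l := ⟨j⟩
  have hσ := sigmaMax_pos hM
  set f := LinearMap.toContinuousLinearMap (toEuclideanLin M)
  obtain ⟨x, hx, hfx⟩ := f.exists_norm_eq_one_and_norm_apply_eq_opNorm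
  refine ⟨(sigmaMax M : ℂ)⁻¹ • M *ᵥ x.ofLp, x.ofLp, ?_, (star_dotProduct_self_eq_one_iff _).2 hx, ?_⟩
  · rw [star_dotProduct_self_eq_one_iff, WithLp.toLp_smul, norm_smul]
    change _ * ‖f x‖ = 1
    rw [hfx, ← sigmaMax, norm_inv, Complex.norm_real, Real.norm_of_nonneg hσ.le,
      inv_mul_cancel₀ hσ.ne']
  · rw [smul_smul, mul_inv_cancel₀ (by exact_mod_cast hσ.ne'), one_smul]

end sigmaMax

/-- Rank-one destabilizing perturbation: for any nonzero `M` there is a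
rank-one `Δ` with `σ̄(Δ) = σ̄(M)⁻¹` making `I − MΔ` singular; explicitly
`Δ = σ̄(M)⁻¹ v u*` for unit singular vectors `u, v` with `Mv = σ̄(M)u`.
In particular, if `σ̄(M) ≥ 1` there is `Δ` with `σ̄(Δ) ≤ 1` and
`det(I − MΔ) = 0`. -/
theorem rank_one_destabilizing
    (p q : ℕ) (M : Matrix (Fin p) (Fin q) ℂ) (hM : M ≠ 0) :
    (∃ Δ : Matrix (Fin q) (Fin p) ℂ,
        Δ.rank = 1 ∧ sigmaMax Δ = (sigmaMax M)⁻¹ ∧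
        ((1 : Matrix (Fin p) (Fin p) ℂ) - M * Δ).det = 0) ∧
    (∀ (u : Fin p → ℂ) (v : Fin q → ℂ),
        star u ⬝ᵥ u = 1 → star v ⬝ᵥ v = 1 →
        M.mulVec v = ((sigmaMax M : ℝ) : ℂ) • u →
        (((1 : Matrix (Fin p) (Fin p) ℂ) -
            M * ((((sigmaMax M : ℝ) : ℂ))⁻¹ • Matrix.vecMulVec v (star u))).mulVec u = 0 ∧
          sigmaMax ((((sigmaMax M : ℝ) : ℂ))⁻¹ • Matrix.vecMulVec v (star u)) =
            (sigmaMax M)⁻¹)) ∧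
    (1 ≤ sigmaMax M →
      ∃ Δ : Matrix (Fin q) (Fin p) ℂ,
        sigmaMax Δ ≤ 1 ∧ ((1 : Matrix (Fin p) (Fin p) ℂ) - M * Δ).det = 0) := by
  have hσ := sigmaMax_pos hM
  have hσC : ((sigmaMax M : ℝ) : ℂ) ≠ 0 := Complex.ofReal_ne_zero.2 hσ.ne'
  have destabilize : ∀ (u : Fin p → ℂ) (v : Fin q → ℂ), star u ⬝ᵥ u = 1 → star v ⬝ᵥ v = 1 →
      M *ᵥ v = ((sigmaMax M : ℝ) : ℂ) • u →
      (1 - M * (((sigmaMax M : ℝ) : ℂ)⁻¹ • vecMulVec v (star u))) *ᵥ u = 0 ∧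
        sigmaMax (((sigmaMax M : ℝ) : ℂ)⁻¹ • vecMulVec v (star u)) = (sigmaMax M)⁻¹ :=
    fun u v hu hv hMv => ⟨one_sub_mul_smul_vecMulVec_mulVec hσC hu hMv,
      by rw [sigmaMax_smul_vecMulVec_star_of_unit _ hv hu, norm_inv, Complex.norm_real,
        Real.norm_of_nonneg hσ.le]⟩
  obtain ⟨u, v, hu, hv, hMv⟩ := exists_unit_singular_vectors hM
  obtain ⟨hker, hnorm⟩ := destabilize u v hu hv hMv
  have hu0 : u ≠ 0 := by rintro rfl; simp at hu
  have hv0 : v ≠ 0 := by rintro rfl; simp at hv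
  have hdet := exists_mulVec_eq_zero_iff.1 ⟨u, hu0, hker⟩
  refine ⟨⟨_, ?_, hnorm, hdet⟩, destabilize, fun h => ⟨_, hnorm ▸ inv_le_one_of_one_le₀ h, hdet⟩⟩
  rw [rank_smul_of_mem_nonZeroDivisors _ (mem_nonZeroDivisors_of_ne_zero (inv_ne_zero hσC))]
  exact rank_vecMulVec_eq_one hv0 (star_ne_zero.2 hu0)
end
end

section
/- (Determinant identity for the interconnected state matrix.) Let A ∈ ℝ^{n×n}, B_w ∈ ℝ^{n×n_w}, C_v ∈ ℝ^{n_v×n}, D_vw ∈ ℝ^{n_v×n_w} be a realization of M₁₁, and let A_Δ ∈ ℝ^{m×m}, B_Δ ∈ ℝ^{m×n_v}, C_Δ ∈ ℝ^{n_w×m}, D_Δ ∈ ℝ^{n_w×n_v} be a realization of Δ. Assume I_{n_v} − D_vwD_Δ is invertible (well-posedness), and define Ã := [[A,0],[0,A_Δ]] + [[0,B_w],[B_Δ,0]] · [[I_{n_v}, −D_vw],[−D_Δ, I_{n_w}]]⁻¹ · [[C_v, 0],[0, C_Δ]]. Then for every z ∈ ℂ that is not an eigenvalue of A and not an eigenvalue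 of A_Δ, with M₁₁(z) := C_v(zI − A)⁻¹B_w + D_vw and Δ(z) := C_Δ(zI − A_Δ)⁻¹B_Δ + D_Δ, one has det(zI − A) · det(zI − A_Δ) · det(I_{n_v} − M₁₁(z)Δ(z)) = det(I_{n_v} − D_vwD_Δ) · det(zI − Ã). In particular, for such z, det(I_{n_v} − M₁₁(z)Δ(z)) = 0 if and only if z is an eigenvalue of Ã. -/
/-!
With `P̂ = diag(zI - A, zI - A_Δ)`, `B̂ = [[0, B_w], [B_Δ, 0]]`, `Ĉ = diag(C_v, C_Δ)` and
`E = [[I, -D_vw], [-D_Δ, I]]`, both sides are Schur-complement expansions of the determinant of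
`[[P̂, B̂], [Ĉ, E]]`. Eliminating `P̂` leaves `E - Ĉ P̂⁻¹ B̂ = [[I, -M₁₁(z)], [-Δ(z), I]]`, whose
determinant is `det(I - M₁₁(z) Δ(z))`; eliminating `E` leaves `P̂ - B̂ E⁻¹ Ĉ = zI - Ã`.
The eigenvalue criterion follows because the other three determinants are nonzero.
-/

open Matrix

noncomputable section

/-- Transfer function of a real state-space realization, evaluated at `z ∈ ℂ`. -/
def transferFn {n k l : ℕ} (A : Matrix (Fin n) (Fin n) ℝ) (B : Matrix (Fin n) (Fin l) ℝ)
    (C : Matrix (Fin k) (Fin n) ℝ) (D : Matrix (Fin k) (Fin l) ℝ) (z : ℂ) :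
    Matrix (Fin k) (Fin l) ℂ :=
  C.map (algebraMap ℝ ℂ) *
    (z • (1 : Matrix (Fin n) (Fin n) ℂ) - A.map (algebraMap ℝ ℂ))⁻¹ *
    B.map (algebraMap ℝ ℂ) + D.map (algebraMap ℝ ℂ)

/-- State matrix of the feedback interconnection of `M₁₁ = (A,B_w,C_v,D_vw)`
with the uncertainty `Δ = (A_Δ,B_Δ,C_Δ,D_Δ)`. -/
def interconnectA {n m nv nw : ℕ}
    (A : Matrix (Fin n) (Fin n) ℝ) (Bw : Matrix (Fin n) (Fin nw) ℝ)
    (Cv : Matrix (Fin nv) (Fin n) ℝ) (Dvw : Matrix (Fin nv) (Fin nw) ℝ)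
    (AΔ : Matrix (Fin m) (Fin m) ℝ) (BΔ : Matrix (Fin m) (Fin nv) ℝ)
    (CΔ : Matrix (Fin nw) (Fin m) ℝ) (DΔ : Matrix (Fin nw) (Fin nv) ℝ) :
    Matrix ((Fin n) ⊕ (Fin m)) ((Fin n) ⊕ (Fin m)) ℝ :=
  Matrix.fromBlocks A 0 0 AΔ +
    Matrix.fromBlocks 0 Bw BΔ 0 *
      (Matrix.fromBlocks (1 : Matrix (Fin nv) (Fin nv) ℝ) (-Dvw) (-DΔ)
        (1 : Matrix (Fin nw) (Fin nw) ℝ))⁻¹ *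
      Matrix.fromBlocks Cv 0 0 CΔ

namespace Matrix

variable {ι κ μ ν R : Type*} [DecidableEq ι] [DecidableEq κ]

theorem smul_one_sub_fromBlocks_add [CommRing R] (z : R) (A : Matrix ι ι R) (D : Matrix κ κ R)
    (X : Matrix (ι ⊕ κ) (ι ⊕ κ) R) :
    z • 1 - (fromBlocks A 0 0 D + X) = fromBlocks (z • 1 - A) 0 0 (z • 1 - D) - X := by
  rw [sub_add_eq_sub_sub, ← fromBlocks_one, fromBlocks_smul]
  simp [sub_eq_add_neg, fromBlocks_neg, fromBlocks_add]

variable [Fintype ι] [Fintype κ] [Fintype μ] [Fintype ν] [DecidableEq μ] [DecidableEq ν]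

section CommRing

variable [CommRing R]

theorem det_mul_det_sub_mul_inv_mul_comm {P : Matrix ι ι R} {E : Matrix κ κ R}
    (hP : IsUnit P.det) (hE : IsUnit E.det) (B : Matrix ι κ R) (C : Matrix κ ι R) :
    P.det * (E - C * P⁻¹ * B).det = E.det * (P - B * E⁻¹ * C).det := by
  have := P.invertibleOfIsUnitDet hP
  have := E.invertibleOfIsUnitDet hE
  rw [← invOf_eq_nonsing_inv, ← invOf_eq_nonsing_inv, ← det_fromBlocks₁₁, det_fromBlocks₂₂]

theorem det_fromBlocks_one_neg_neg_one (X : Matrix ι κ R) (Y : Matrix κ ι R) :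
    (fromBlocks 1 (-X) (-Y) 1).det = (1 - X * Y).det := by
  rw [det_fromBlocks_one₁₁, Matrix.neg_mul, Matrix.mul_neg, neg_neg, det_one_sub_mul_comm]

theorem inv_fromBlocks_diag {P : Matrix ι ι R} {Q : Matrix κ κ R}
    (hP : IsUnit P.det) (hQ : IsUnit Q.det) :
    (fromBlocks P 0 0 Q)⁻¹ = fromBlocks P⁻¹ 0 0 Q⁻¹ := by
  rw [inv_fromBlocks_zero₁₂_of_isUnit_iff, Matrix.mul_zero, Matrix.zero_mul, neg_zero]
  simp only [isUnit_iff_isUnit_det, hP, hQ]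

-- `P` and `Q` stand for `zI - A` and `zI - A_Δ`.
theorem det_mul_det_mul_det_one_sub_feedback {P : Matrix ι ι R} {Q : Matrix κ κ R}
    (hP : IsUnit P.det) (hQ : IsUnit Q.det)
    (B₁ : Matrix ι ν R) (C₁ : Matrix μ ι R) (D₁ : Matrix μ ν R)
    (B₂ : Matrix κ μ R) (C₂ : Matrix ν κ R) (D₂ : Matrix ν μ R) (hD : IsUnit (1 - D₁ * D₂).det) :
    P.det * Q.det * (1 - (C₁ * P⁻¹ * B₁ + D₁) * (C₂ * Q⁻¹ * B₂ + D₂)).det =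
      (1 - D₁ * D₂).det * (fromBlocks P 0 0 Q - fromBlocks 0 B₁ B₂ 0 *
        (fromBlocks 1 (-D₁) (-D₂) 1)⁻¹ * fromBlocks C₁ 0 0 C₂).det := by
  have hPQ : IsUnit (fromBlocks P 0 0 Q).det := by
    rw [det_fromBlocks_zero₂₁]; exact hP.mul hQ
  rw [← det_fromBlocks_one_neg_neg_one] at hD
  have schur := det_mul_det_sub_mul_inv_mul_comm hPQ hD (fromBlocks 0 B₁ B₂ 0)
    (fromBlocks C₁ 0 0 C₂)
  rw [det_fromBlocks_zero₂₁, inv_fromBlocks_diag hP hQ, det_fromBlocks_one_neg_neg_one] at schur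
  rw [← schur, ← det_fromBlocks_one_neg_neg_one]
  congr 2
  simp [fromBlocks_multiply, sub_eq_add_neg, fromBlocks_neg, fromBlocks_add, add_comm]

end CommRing

theorem map_nonsing_inv {K L : Type*} [Field K] [Field L] (f : K →+* L) (M : Matrix ι ι K) :
    M⁻¹.map f = (M.map f)⁻¹ := by
  have hadj : M.adjugate.map f = (M.map f).adjugate := f.map_adjugate M
  have hdet : f M.det = (M.map f).det := f.map_det M
  rw [inv_def, inv_def, Ring.inverse_eq_inv', Ring.inverse_eq_inv', ← hadj, ← hdet]
  ext i j
  simp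

theorem mem_spectrum_iff_det_smul_one_sub_eq_zero {K : Type*} [Field K] (M : Matrix ι ι K)
    (z : K) : z ∈ spectrum K M ↔ (z • 1 - M).det = 0 := by
  rw [spectrum.mem_iff, Algebra.algebraMap_eq_smul_one, isUnit_iff_isUnit_det, isUnit_iff_ne_zero,
    not_not]

end Matrix

theorem interconnectA_map {L : Type*} [Field L] (f : ℝ →+* L) {n m nv nw : ℕ}
    (A : Matrix (Fin n) (Fin n) ℝ) (Bw : Matrix (Fin n) (Fin nw) ℝ)
    (Cv : Matrix (Fin nv) (Fin n) ℝ) (Dvw : Matrix (Fin nv) (Fin nw) ℝ)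
    (AΔ : Matrix (Fin m) (Fin m) ℝ) (BΔ : Matrix (Fin m) (Fin nv) ℝ)
    (CΔ : Matrix (Fin nw) (Fin m) ℝ) (DΔ : Matrix (Fin nw) (Fin nv) ℝ) :
    (interconnectA A Bw Cv Dvw AΔ BΔ CΔ DΔ).map f =
      fromBlocks (A.map f) 0 0 (AΔ.map f) + fromBlocks 0 (Bw.map f) (BΔ.map f) 0 *
        (fromBlocks 1 (-Dvw.map f) (-DΔ.map f) 1)⁻¹ * fromBlocks (Cv.map f) 0 0 (CΔ.map f) := by
  simp [interconnectA, Matrix.map_add, Matrix.map_mul, Matrix.map_neg, Matrix.map_nonsing_inv,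
    fromBlocks_map]

/-- Determinant identity for the interconnected state matrix
(Equation (43) of the paper). -/
theorem interconnection_det_identity
    (n m nv nw : ℕ)
    (A : Matrix (Fin n) (Fin n) ℝ) (Bw : Matrix (Fin n) (Fin nw) ℝ)
    (Cv : Matrix (Fin nv) (Fin n) ℝ) (Dvw : Matrix (Fin nv) (Fin nw) ℝ)
    (AΔ : Matrix (Fin m) (Fin m) ℝ) (BΔ : Matrix (Fin m) (Fin nv) ℝ)
    (CΔ : Matrix (Fin nw) (Fin m) ℝ) (DΔ : Matrix (Fin nw) (Fin nv) ℝ)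
    (hwp : IsUnit ((1 : Matrix (Fin nv) (Fin nv) ℝ) - Dvw * DΔ))
    (Atil : Matrix ((Fin n) ⊕ (Fin m)) ((Fin n) ⊕ (Fin m)) ℝ)
    (hAtil : Atil = interconnectA A Bw Cv Dvw AΔ BΔ CΔ DΔ) :
    ∀ z : ℂ,
      z ∉ spectrum ℂ (A.map (algebraMap ℝ ℂ)) →
      z ∉ spectrum ℂ (AΔ.map (algebraMap ℝ ℂ)) →
      ((z • (1 : Matrix (Fin n) (Fin n) ℂ) - A.map (algebraMap ℝ ℂ)).det *
        (z • (1 : Matrix (Fin m) (Fin m) ℂ) - AΔ.map (algebraMap ℝ ℂ)).det *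
        ((1 : Matrix (Fin nv) (Fin nv) ℂ) -
          transferFn A Bw Cv Dvw z * transferFn AΔ BΔ CΔ DΔ z).det =
        ((((1 : Matrix (Fin nv) (Fin nv) ℝ) - Dvw * DΔ).det : ℂ)) *
          (z • (1 : Matrix ((Fin n) ⊕ (Fin m)) ((Fin n) ⊕ (Fin m)) ℂ) -
            Atil.map (algebraMap ℝ ℂ)).det) ∧
      (((1 : Matrix (Fin nv) (Fin nv) ℂ) -
          transferFn A Bw Cv Dvw z * transferFn AΔ BΔ CΔ DΔ z).det = 0 ↔
        z ∈ spectrum ℂ (Atil.map (algebraMap ℝ ℂ))) := by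
  intro z hzA hzAΔ
  unfold transferFn
  set f := algebraMap ℝ ℂ
  have hP : IsUnit (z • 1 - A.map f).det :=
    isUnit_iff_ne_zero.mpr ((mem_spectrum_iff_det_smul_one_sub_eq_zero _ _).not.mp hzA)
  have hQ : IsUnit (z • 1 - AΔ.map f).det :=
    isUnit_iff_ne_zero.mpr ((mem_spectrum_iff_det_smul_one_sub_eq_zero _ _).not.mp hzAΔ)
  have hDmap : (((1 : Matrix (Fin nv) (Fin nv) ℝ) - Dvw * DΔ).det : ℂ) =
      (1 - Dvw.map f * DΔ.map f).det := by
    have hmap : f.mapMatrix (1 - Dvw * DΔ) = 1 - Dvw.map f * DΔ.map f := by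
      rw [map_sub, map_one, RingHom.mapMatrix_apply, Matrix.map_mul]
    rw [← hmap, ← f.map_det]
    rfl
  have hD : IsUnit (((1 : Matrix (Fin nv) (Fin nv) ℝ) - Dvw * DΔ).det : ℂ) :=
    ((isUnit_iff_isUnit_det _).mp hwp).map f
  have key := det_mul_det_mul_det_one_sub_feedback hP hQ (Bw.map f) (Cv.map f) (Dvw.map f)
    (BΔ.map f) (CΔ.map f) (DΔ.map f) (hDmap ▸ hD)
  rw [← hDmap, ← smul_one_sub_fromBlocks_add, ← interconnectA_map, ← hAtil] at key
  refine ⟨key, ?_⟩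
  rw [mem_spectrum_iff_det_smul_one_sub_eq_zero,
    ← mul_eq_zero_iff_left (mul_ne_zero hP.ne_zero hQ.ne_zero), key,
    mul_eq_zero_iff_left hD.ne_zero]
end
end
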